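/- arXiv:math/0606351 — 6 statements merged into one kernel-verified Lean document; each statement's English description precedes it below -/
import Mathlib

section
/- Let f : I → I be continuous on a compact interval, and let k ≥ 1. If f has a periodic point of least period 2^k·m with m ≥ 3 odd, then f has a periodic point of least period 2^{k+n} for every integer n with 2^n > m. -/
open Set Function

private lemma contOn_iterate {s : Set ℝ} {g : ℝ → ℝ} (hg : ContinuousOn g s)
    (hmaps : Set.MapsTo g s s) : ∀ n, ContinuousOn (g^[n]) s := by
  intro n
  induction n with
  | zero => simpa using continuousOn_id
  | succ n ih =>
      rw [Function.iterate_succ]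
      exact ih.comp hg hmaps

private lemma mapsTo_iterate {s : Set ℝ} {g : ℝ → ℝ} (hmaps : Set.MapsTo g s s) :
    ∀ n, Set.MapsTo (g^[n]) s s := by
  intro n
  induction n with
  | zero => simpa using Set.mapsTo_id s
  | succ n ih =>
      rw [Function.iterate_succ]
      exact ih.comp hmaps

/-- If `g` is continuous on `[u,v]` and attains values `r ≤ s` on it, then some
closed subinterval maps **onto** `[r,s]`. -/
private lemma exists_sub_onto {g : ℝ → ℝ} {u v r s : ℝ}
    (hg : ContinuousOn g (Icc u v)) (hrs : r ≤ s)
    {c d : ℝ} (hc : c ∈ Icc u v) (hd : d ∈ Icc u v)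
    (hgc : g c = r) (hgd : g d = s) :
    ∃ p q, p ≤ q ∧ Icc p q ⊆ Icc u v ∧ g '' Icc p q = Icc r s := by
  rcases le_total c d with hcd | hcd
  · -- c ≤ d
    have hsubcd : Icc c d ⊆ Icc u v := Icc_subset_Icc hc.1 hd.2
    set D : Set ℝ := Icc c d ∩ g ⁻¹' {s} with hD
    have hDne : D.Nonempty := ⟨d, ⟨hcd, le_rfl⟩, hgd⟩
    have hDclosed : IsClosed D :=
      (hg.mono hsubcd).preimage_isClosed_of_isClosed isClosed_Icc isClosed_singleton
    have hDbdd : BddBelow D := ⟨c, fun t ht => ht.1.1⟩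
    set d' := sInf D with hd'
    have hd'D : d' ∈ D := hDclosed.csInf_mem hDne hDbdd
    have hgd' : g d' = s := hd'D.2
    have hcd' : c ≤ d' := hd'D.1.1
    have hd'd : d' ≤ d := hd'D.1.2
    set C : Set ℝ := Icc c d' ∩ g ⁻¹' {r} with hC
    have hCne : C.Nonempty := ⟨c, ⟨le_rfl, hcd'⟩, hgc⟩
    have hsubc : Icc c d' ⊆ Icc u v := Icc_subset_Icc hc.1 (le_trans hd'd hd.2)
    have hCclosed : IsClosed C :=
      (hg.mono hsubc).preimage_isClosed_of_isClosed isClosed_Icc isClosed_singleton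
    have hCbdd : BddAbove C := ⟨d', fun t ht => ht.1.2⟩
    set c' := sSup C with hc'
    have hc'C : c' ∈ C := hCclosed.csSup_mem hCne hCbdd
    have hgc' : g c' = r := hc'C.2
    have hcc' : c ≤ c' := hc'C.1.1
    have hc'd' : c' ≤ d' := hc'C.1.2
    have hsub : Icc c' d' ⊆ Icc u v := Icc_subset_Icc (le_trans hc.1 hcc') (le_trans hd'd hd.2)
    refine ⟨c', d', hc'd', hsub, le_antisymm ?_ ?_⟩
    · rintro w ⟨t, ht, rfl⟩
      have htuv : Icc t d' ⊆ Icc u v := Icc_subset_Icc (hsub ht).1 (le_trans hd'd hd.2)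
      have hc'tuv : Icc c' t ⊆ Icc u v := Icc_subset_Icc (hsub ⟨le_rfl, hc'd'⟩).1 (hsub ht).2
      constructor
      · by_contra hlt
        push_neg at hlt
        have hivt : Icc (g t) (g d') ⊆ g '' Icc t d' :=
          intermediate_value_Icc ht.2 (hg.mono htuv)
        have hrmem : r ∈ Icc (g t) (g d') := ⟨hlt.le, by rw [hgd']; exact hrs⟩
        obtain ⟨w', hw', hgw'⟩ := hivt hrmem
        have hw'C : w' ∈ C :=
          ⟨⟨le_trans hcc' (le_trans ht.1 hw'.1), hw'.2⟩, hgw'⟩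
        have h1 : w' ≤ c' := le_csSup hCbdd hw'C
        have h2 : t = c' := le_antisymm (le_trans hw'.1 h1) ht.1
        rw [h2, hgc'] at hlt
        exact lt_irrefl r hlt
      · by_contra hlt
        push_neg at hlt
        have hivt : Icc (g c') (g t) ⊆ g '' Icc c' t :=
          intermediate_value_Icc ht.1 (hg.mono hc'tuv)
        have hsmem : s ∈ Icc (g c') (g t) := ⟨by rw [hgc']; exact hrs, hlt.le⟩
        obtain ⟨w', hw', hgw'⟩ := hivt hsmem
        have hw'D : w' ∈ D :=
          ⟨⟨le_trans hcc' hw'.1, le_trans (le_trans hw'.2 ht.2) hd'd⟩, hgw'⟩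
        have h1 : d' ≤ w' := csInf_le hDbdd hw'D
        have h2 : t = d' := le_antisymm ht.2 (le_trans h1 hw'.2)
        rw [h2, hgd'] at hlt
        exact lt_irrefl s hlt
    · have := intermediate_value_Icc hc'd' (hg.mono hsub)
      rw [hgc', hgd'] at this
      exact this
  · -- d ≤ c
    have hsubdc : Icc d c ⊆ Icc u v := Icc_subset_Icc hd.1 hc.2
    set D : Set ℝ := Icc d c ∩ g ⁻¹' {s} with hD
    have hDne : D.Nonempty := ⟨d, ⟨le_rfl, hcd⟩, hgd⟩
    have hDclosed : IsClosed D :=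
      (hg.mono hsubdc).preimage_isClosed_of_isClosed isClosed_Icc isClosed_singleton
    have hDbdd : BddAbove D := ⟨c, fun t ht => ht.1.2⟩
    set d' := sSup D with hd'
    have hd'D : d' ∈ D := hDclosed.csSup_mem hDne hDbdd
    have hgd' : g d' = s := hd'D.2
    have hdd' : d ≤ d' := hd'D.1.1
    have hd'c : d' ≤ c := hd'D.1.2
    set C : Set ℝ := Icc d' c ∩ g ⁻¹' {r} with hC
    have hCne : C.Nonempty := ⟨c, ⟨hd'c, le_rfl⟩, hgc⟩
    have hsubc : Icc d' c ⊆ Icc u v := Icc_subset_Icc (le_trans hd.1 hdd') hc.2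
    have hCclosed : IsClosed C :=
      (hg.mono hsubc).preimage_isClosed_of_isClosed isClosed_Icc isClosed_singleton
    have hCbdd : BddBelow C := ⟨d', fun t ht => ht.1.1⟩
    set c' := sInf C with hc'
    have hc'C : c' ∈ C := hCclosed.csInf_mem hCne hCbdd
    have hgc' : g c' = r := hc'C.2
    have hd'c' : d' ≤ c' := hc'C.1.1
    have hc'c : c' ≤ c := hc'C.1.2
    have hsub : Icc d' c' ⊆ Icc u v :=
      Icc_subset_Icc (le_trans hd.1 hdd') (le_trans hc'c hc.2)
    refine ⟨d', c', hd'c', hsub, le_antisymm ?_ ?_⟩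
    · rintro w ⟨t, ht, rfl⟩
      have htuv : Icc t c' ⊆ Icc u v := Icc_subset_Icc (hsub ht).1 (hsub ⟨hd'c', le_rfl⟩).2
      have hd'tuv : Icc d' t ⊆ Icc u v := Icc_subset_Icc (hsub ⟨le_rfl, hd'c'⟩).1 (hsub ht).2
      constructor
      · by_contra hlt
        push_neg at hlt
        have hivt : Icc (g t) (g d') ⊆ g '' Icc d' t :=
          intermediate_value_Icc' ht.1 (hg.mono hd'tuv)
        have hrmem : r ∈ Icc (g t) (g d') := ⟨hlt.le, by rw [hgd']; exact hrs⟩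
        obtain ⟨w', hw', hgw'⟩ := hivt hrmem
        have hw'C : w' ∈ C := ⟨⟨hw'.1, le_trans (le_trans hw'.2 ht.2) hc'c⟩, hgw'⟩
        have h1 : c' ≤ w' := csInf_le hCbdd hw'C
        have h2 : t = c' := le_antisymm ht.2 (le_trans h1 hw'.2)
        rw [h2, hgc'] at hlt
        exact lt_irrefl r hlt
      · by_contra hlt
        push_neg at hlt
        have hivt : Icc (g c') (g t) ⊆ g '' Icc t c' :=
          intermediate_value_Icc' ht.2 (hg.mono htuv)
        have hsmem : s ∈ Icc (g c') (g t) := ⟨by rw [hgc']; exact hrs, hlt.le⟩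
        obtain ⟨w', hw', hgw'⟩ := hivt hsmem
        have hw'D : w' ∈ D :=
          ⟨⟨le_trans hdd' (le_trans ht.1 hw'.1), le_trans hw'.2 hc'c⟩, hgw'⟩
        have h1 : w' ≤ d' := le_csSup hDbdd hw'D
        have h2 : t = d' := le_antisymm (le_trans hw'.1 h1) ht.1
        rw [h2, hgd'] at hlt
        exact lt_irrefl s hlt
    · have := intermediate_value_Icc' hd'c' (hg.mono hsub)
      rw [hgc', hgd'] at this
      exact this

private lemma loop_fixed_point {a b : ℝ} {g : ℝ → ℝ}
    (hg : ContinuousOn g (Icc a b)) (hmaps : MapsTo g (Icc a b) (Icc a b))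
    {l : ℕ} (hl : 0 < l) (W : ℕ → ℝ × ℝ)
    (hle : ∀ i, (W i).1 ≤ (W i).2)
    (hsub : ∀ i, Icc (W i).1 (W i).2 ⊆ Icc a b)
    (hWl : W l = W 0)
    (hcov : ∀ i < l, Icc (W (i+1)).1 (W (i+1)).2 ⊆ g '' Icc (W i).1 (W i).2) :
    ∃ x ∈ Icc (W 0).1 (W 0).2, g^[l] x = x ∧ ∀ i ≤ l, g^[i] x ∈ Icc (W i).1 (W i).2 := by
  have key : ∀ n, n ≤ l → ∃ p q, p ≤ q ∧ Icc p q ⊆ Icc (W 0).1 (W 0).2 ∧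
      (∀ i ≤ n, g^[i] '' Icc p q ⊆ Icc (W i).1 (W i).2) ∧
      g^[n] '' Icc p q = Icc (W n).1 (W n).2 := by
    intro n
    induction n with
    | zero =>
        intro _
        refine ⟨(W 0).1, (W 0).2, hle 0, subset_rfl, ?_, by simp⟩
        intro i hi
        have : i = 0 := Nat.le_zero.mp hi
        subst this
        simp
    | succ n ih =>
        intro hsl
        obtain ⟨p, q, hpq, hp0, hiter, heq⟩ := ih (by omega)
        have hpqab : Icc p q ⊆ Icc a b := hp0.trans (hsub 0)
        have him : Icc (W (n+1)).1 (W (n+1)).2 ⊆ g^[n+1] '' Icc p q := by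
          rw [Function.iterate_succ', Set.image_comp, heq]
          exact hcov n (by omega)
        obtain ⟨cr, hcr, hgcr⟩ := him ⟨le_rfl, hle (n+1)⟩
        obtain ⟨cs, hcs, hgcs⟩ := him ⟨hle (n+1), le_rfl⟩
        obtain ⟨p', q', h1, h2, h3⟩ :=
          exists_sub_onto ((contOn_iterate hg hmaps (n+1)).mono hpqab)
            (hle (n+1)) hcr hcs hgcr hgcs
        refine ⟨p', q', h1, h2.trans hp0, ?_, h3⟩
        intro i hi
        rcases Nat.lt_or_ge i (n+1) with h | h
        · exact (Set.image_mono h2).trans (hiter i (by omega))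
        · have : i = n + 1 := by omega
          subst this
          exact h3.le
  obtain ⟨p, q, hpq, hp0, hiter, heq⟩ := key l le_rfl
  rw [hWl] at heq
  have hpqab : Icc p q ⊆ Icc a b := hp0.trans (hsub 0)
  obtain ⟨cp, hcp, hgcp⟩ : ∃ cp ∈ Icc p q, g^[l] cp = p := by
    have : p ∈ Icc (W 0).1 (W 0).2 := hp0 ⟨le_rfl, hpq⟩
    rw [← heq] at this; exact this
  obtain ⟨cq, hcq, hgcq⟩ : ∃ cq ∈ Icc p q, g^[l] cq = q := by
    have : q ∈ Icc (W 0).1 (W 0).2 := hp0 ⟨hpq, le_rfl⟩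
    rw [← heq] at this; exact this
  have hφ : ContinuousOn (fun t => g^[l] t - t) (Icc p q) :=
    ((contOn_iterate hg hmaps l).mono hpqab).sub continuousOn_id
  have hzero : ∃ x ∈ Icc p q, g^[l] x - x = 0 := by
    rcases le_total cp cq with h | h
    · have hsub2 : Icc cp cq ⊆ Icc p q := Icc_subset_Icc hcp.1 hcq.2
      have := intermediate_value_Icc h (hφ.mono hsub2)
      have h0 : (0:ℝ) ∈ Icc (g^[l] cp - cp) (g^[l] cq - cq) := by
        rw [hgcp, hgcq]
        constructor
        · linarith [hcp.1]
        · linarith [hcq.2]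
      obtain ⟨x, hx, hx0⟩ := this h0
      exact ⟨x, hsub2 hx, hx0⟩
    · have hsub2 : Icc cq cp ⊆ Icc p q := Icc_subset_Icc hcq.1 hcp.2
      have := intermediate_value_Icc' h (hφ.mono hsub2)
      have h0 : (0:ℝ) ∈ Icc (g^[l] cp - cp) (g^[l] cq - cq) := by
        rw [hgcp, hgcq]
        constructor
        · linarith [hcp.1]
        · linarith [hcq.2]
      obtain ⟨x, hx, hx0⟩ := this h0
      exact ⟨x, hsub2 hx, hx0⟩
  obtain ⟨x, hx, hx0⟩ := hzero
  have hfix : g^[l] x = x := by linarith [sub_eq_zero.mp hx0]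
  exact ⟨x, hp0 hx, hfix, fun i hi => hiter i hi ⟨x, hx, rfl⟩⟩

private def adjP (P : Finset ℝ) (p q : ℝ) : Prop :=
  p ∈ P ∧ q ∈ P ∧ p < q ∧ ∀ r ∈ P, ¬(p < r ∧ r < q)

private def covP (g : ℝ → ℝ) (B C : ℝ × ℝ) : Prop :=
  min (g B.1) (g B.2) ≤ C.1 ∧ C.2 ≤ max (g B.1) (g B.2)

open Classical in
private noncomputable def Tseq (g : ℝ → ℝ) (P : Finset ℝ) (z z' : ℝ) : ℕ → Finset ℝ
  | 0 => {z, z'}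
  | n+1 => P.filter (fun p =>
      (∃ u ∈ Tseq g P z z' n, g u ≤ p) ∧ (∃ v ∈ Tseq g P z z' n, p ≤ g v))

private def reachP (g : ℝ → ℝ) (P : Finset ℝ) (z z' : ℝ) (n : ℕ) (B : ℝ × ℝ) : Prop :=
  ∃ C : ℕ → ℝ × ℝ, C 0 = (z, z') ∧ C n = B ∧
    ∀ i < n, adjP P (C i).1 (C i).2 ∧ covP g (C i) (C (i+1))

private lemma main_odd {a b : ℝ} {g : ℝ → ℝ} (hg : ContinuousOn g (Icc a b))
    (hmaps : MapsTo g (Icc a b) (Icc a b)) {m : ℕ} (hm3 : 3 ≤ m) (hodd : Odd m)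
    {x : ℝ} (hx : x ∈ Icc a b) (hper : Function.minimalPeriod g x = m)
    {l : ℕ} (hml : m < l) (hnd : ¬ m ∣ l) :
    ∃ y ∈ Icc a b, g^[l] y = y ∧ ∀ i, 0 < i → i < l → g^[i] y ≠ y := by
  classical
  have hm0 : 0 < m := by omega
  have hl0 : 0 < l := by omega
  have hxper : Function.IsPeriodicPt g m x := by
    rw [← hper]; exact Function.isPeriodicPt_minimalPeriod g x
  have hxmem : x ∈ periodicPts g := ⟨m, hm0, hxper⟩
  set P : Finset ℝ := (Finset.range m).image (fun i => g^[i] x) with hP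
  have hPmem : ∀ p, p ∈ P ↔ ∃ i < m, g^[i] x = p := by
    intro p; simp [hP]
  have hxP : x ∈ P := (hPmem x).mpr ⟨0, hm0, rfl⟩
  have hPicc : ∀ p ∈ P, p ∈ Icc a b := by
    intro p hp
    obtain ⟨i, _, rfl⟩ := (hPmem p).mp hp
    exact mapsTo_iterate hmaps i hx
  have horbit : ∀ p ∈ P, g p ∈ P := by
    intro p hp
    obtain ⟨i, hi, rfl⟩ := (hPmem p).mp hp
    rcases Nat.lt_or_ge (i+1) m with h | h
    · exact (hPmem _).mpr ⟨i+1, h, Function.iterate_succ_apply' g i x⟩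
    · have hieq : i + 1 = m := by omega
      have h2 : g^[i+1] x = x := by rw [hieq]; exact hxper
      rw [Function.iterate_succ_apply'] at h2
      rw [h2]; exact hxP
  have hiterP : ∀ p ∈ P, ∀ j, g^[j] p ∈ P := by
    intro p hp j
    induction j with
    | zero => simpa using hp
    | succ j ih => rw [Function.iterate_succ_apply']; exact horbit _ ih
  have hperP : ∀ p ∈ P, Function.minimalPeriod g p = m := by
    intro p hp
    obtain ⟨i, _, rfl⟩ := (hPmem p).mp hp
    rw [Function.minimalPeriod_apply_iterate hxmem i, hper]
  have hgmP : ∀ p ∈ P, g^[m] p = p := by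
    intro p hp
    have h := Function.isPeriodicPt_minimalPeriod g p
    rw [hperP p hp] at h
    exact h
  have hgne : ∀ p ∈ P, g p ≠ p := by
    intro p hp heq
    have h1 : Function.IsPeriodicPt g 1 p := by
      simpa [Function.IsPeriodicPt, Function.IsFixedPt] using heq
    have h2 := h1.minimalPeriod_dvd
    rw [hperP p hp] at h2
    have := Nat.le_of_dvd one_pos h2
    omega
  have hinj : ∀ p ∈ P, ∀ q ∈ P, g p = g q → p = q := by
    intro p hp q hq hpq
    have hm' : m - 1 + 1 = m := by omega
    have key : ∀ w, w ∈ P → g^[m-1] (g w) = w := by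
      intro w hw
      have h := hgmP w hw
      rwa [← hm', Function.iterate_succ_apply] at h
    calc p = g^[m-1] (g p) := (key p hp).symm
      _ = g^[m-1] (g q) := by rw [hpq]
      _ = q := key q hq
  have hcard : P.card = m := by
    rw [hP, Finset.card_image_of_injOn, Finset.card_range]
    intro i hi j hj hij
    have hi' : i ∈ Set.Iio (Function.minimalPeriod g x) := by
      rw [hper]; exact Finset.mem_range.mp (Finset.mem_coe.mp hi)
    have hj' : j ∈ Set.Iio (Function.minimalPeriod g x) := by
      rw [hper]; exact Finset.mem_range.mp (Finset.mem_coe.mp hj)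
    exact Function.iterate_injOn_Iio_minimalPeriod hi' hj' hij
  -- the point z with g z > z maximal, and its neighbor z'
  have hSne : (P.filter (fun p => p < g p)).Nonempty := by
    have hmin := P.min'_mem ⟨x, hxP⟩
    have h1 : P.min' ⟨x, hxP⟩ ≤ g (P.min' ⟨x, hxP⟩) :=
      P.min'_le _ (horbit _ hmin)
    exact ⟨_, Finset.mem_filter.mpr ⟨hmin, lt_of_le_of_ne h1 (Ne.symm (hgne _ hmin))⟩⟩
  set z := (P.filter (fun p => p < g p)).max' hSne with hzdef
  have hzmem := Finset.mem_filter.mp ((P.filter (fun p => p < g p)).max'_mem hSne)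
  have hzP : z ∈ P := hzmem.1
  have hzlt : z < g z := hzmem.2
  have hgzP : g z ∈ P := horbit z hzP
  have hz'ne : (P.filter (fun p => z < p)).Nonempty :=
    ⟨g z, Finset.mem_filter.mpr ⟨hgzP, hzlt⟩⟩
  set z' := (P.filter (fun p => z < p)).min' hz'ne with hz'def
  have hz'mem := Finset.mem_filter.mp ((P.filter (fun p => z < p)).min'_mem hz'ne)
  have hz'P : z' ∈ P := hz'mem.1
  have hzz' : z < z' := hz'mem.2
  have hmid : ∀ p ∈ P, ¬(z < p ∧ p < z') := by
    rintro p hp ⟨h1, h2⟩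
    have := (P.filter (fun p => z < p)).min'_le p (Finset.mem_filter.mpr ⟨hp, h1⟩)
    rw [← hz'def] at this
    exact absurd this (not_le.mpr h2)
  have hadjzz' : adjP P z z' := ⟨hzP, hz'P, hzz', hmid⟩
  have hgz : z' ≤ g z := by
    have := (P.filter (fun p => z < p)).min'_le (g z) (Finset.mem_filter.mpr ⟨hgzP, hzlt⟩)
    rwa [← hz'def] at this
  have hgz'P : g z' ∈ P := horbit z' hz'P
  have hgz' : g z' ≤ z := by
    have h1 : ¬ (z' < g z') := by
      intro h
      have := (P.filter (fun p => p < g p)).le_max' z' (Finset.mem_filter.mpr ⟨hz'P, h⟩)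
      rw [← hzdef] at this
      exact absurd this (not_le.mpr hzz')
    have h2 : g z' < z' := lt_of_le_of_ne (not_lt.mp h1) (hgne z' hz'P)
    by_contra h3
    exact hmid (g z') hgz'P ⟨not_le.mp h3, h2⟩
  have hcovzz : covP g (z, z') (z, z') :=
    ⟨le_trans (min_le_right _ _) hgz', le_trans hgz (le_max_left _ _)⟩
  -- the growing span sequence
  set T := Tseq g P z z' with hT
  have hTP : ∀ n, T n ⊆ P := by
    intro n
    cases n with
    | zero =>
        intro p hp
        rw [hT] at hp
        simp only [Tseq, Finset.mem_insert, Finset.mem_singleton] at hp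
        rcases hp with rfl | rfl
        · exact hzP
        · exact hz'P
    | succ n =>
        rw [hT]
        simp only [Tseq]
        exact Finset.filter_subset _ _
  have hzT0 : z ∈ T 0 := by rw [hT]; simp [Tseq]
  have hz'T0 : z' ∈ T 0 := by rw [hT]; simp [Tseq]
  have hmemT : ∀ n p, p ∈ T (n+1) ↔
      (p ∈ P ∧ (∃ u ∈ T n, g u ≤ p) ∧ (∃ v ∈ T n, p ≤ g v)) := by
    intro n p
    rw [hT]
    simp only [Tseq, Finset.mem_filter]
  have hTmono : ∀ n, T n ⊆ T (n+1) := by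
    intro n
    induction n with
    | zero =>
        intro p hp
        rw [hT] at hp
        simp only [Tseq, Finset.mem_insert, Finset.mem_singleton] at hp
        rcases hp with rfl | rfl
        · exact (hmemT 0 z).mpr ⟨hzP, ⟨z', hz'T0, hgz'⟩, ⟨z, hzT0, le_of_lt hzlt⟩⟩
        · exact (hmemT 0 z').mpr ⟨hz'P, ⟨z', hz'T0, le_trans hgz' (le_of_lt hzz')⟩,
            ⟨z, hzT0, hgz⟩⟩
    | succ n ih =>
        intro p hp
        obtain ⟨hpP, ⟨u, hu, hup⟩, ⟨v, hv, hpv⟩⟩ := (hmemT n p).mp hp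
        exact (hmemT (n+1) p).mpr ⟨hpP, ⟨u, ih hu, hup⟩, ⟨v, ih hv, hpv⟩⟩
  have hTmono' : ∀ n k, n ≤ k → T n ⊆ T k := by
    intro n k hnk
    induction k with
    | zero =>
        have : n = 0 := by omega
        subst this; exact subset_rfl
    | succ k ih =>
        rcases Nat.lt_or_ge n (k+1) with h | h
        · exact (ih (by omega)).trans (hTmono k)
        · have : n = k + 1 := by omega
          subst this; exact subset_rfl
  have hTconv : ∀ n p, p ∈ P → ∀ r ∈ T n, ∀ r' ∈ T n, r ≤ p → p ≤ r' → p ∈ T n := by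
    intro n p hpP r hr r' hr' hrp hpr'
    cases n with
    | zero =>
        rw [hT] at hr hr' ⊢
        simp only [Tseq, Finset.mem_insert, Finset.mem_singleton] at hr hr' ⊢
        have hzp : z ≤ p := by
          rcases hr with rfl | rfl
          · exact hrp
          · exact le_trans (le_of_lt hzz') hrp
        have hpz' : p ≤ z' := by
          rcases hr' with rfl | rfl
          · exact le_trans hpr' (le_of_lt hzz')
          · exact hpr'
        rcases eq_or_lt_of_le hzp with h1 | h1
        · exact Or.inl h1.symm
        rcases eq_or_lt_of_le hpz' with h2 | h2
        · exact Or.inr h2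
        exact absurd ⟨h1, h2⟩ (hmid p hpP)
    | succ n =>
        obtain ⟨_, ⟨u, hu, hur⟩, _⟩ := (hmemT n r).mp hr
        obtain ⟨_, _, ⟨v, hv, hr'v⟩⟩ := (hmemT n r').mp hr'
        exact (hmemT n p).mpr ⟨hpP, ⟨u, hu, le_trans hur hrp⟩, ⟨v, hv, le_trans hpr' hr'v⟩⟩
  have hstab : ∀ n, T n = T (n+1) → ∀ p ∈ P, p ∈ T n := by
    intro n hstable
    have hginv : ∀ w ∈ T n, g w ∈ T n := by
      intro w hw
      rw [hstable]
      exact (hmemT n (g w)).mpr ⟨horbit w (hTP n hw), ⟨w, hw, le_rfl⟩, ⟨w, hw, le_rfl⟩⟩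
    have hiterz : ∀ j, g^[j] z ∈ T n := by
      intro j
      induction j with
      | zero => simpa using hTmono' 0 n (Nat.zero_le n) hzT0
      | succ j ih => rw [Function.iterate_succ_apply']; exact hginv _ ih
    intro p hp
    obtain ⟨i, _, rfl⟩ := (hPmem p).mp hp
    obtain ⟨i0, hi0, hzi0⟩ := (hPmem z).mp hzP
    have hxz : g^[m - i0] z = x := by
      rw [← hzi0, ← Function.iterate_add_apply]
      have : m - i0 + i0 = m := by omega
      rw [this]
      exact hxper
    have : g^[i] x = g^[i + (m - i0)] z := by
      rw [Function.iterate_add_apply, hxz]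
    rw [this]
    exact hiterz _
  have hcardgrow : ∀ n, (∀ p ∈ P, p ∈ T n) ∨ n + 2 ≤ (T n).card := by
    intro n
    induction n with
    | zero =>
        right
        rw [hT]
        simp only [Tseq]
        rw [Finset.card_insert_of_notMem (by simp [ne_of_lt hzz']), Finset.card_singleton]
    | succ n ih =>
        rcases ih with h | h
        · left; exact fun p hp => hTmono n (h p hp)
        · by_cases hstable : T n = T (n+1)
          · left
            intro p hp
            rw [← hstable]
            exact hstab n hstable p hp
          · right
            have hss : T n ⊂ T (n+1) := Finset.ssubset_iff_subset_ne.mpr ⟨hTmono n, hstable⟩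
            have := Finset.card_lt_card hss
            omega
  have hTfull : ∀ p ∈ P, p ∈ T (m - 2) := by
    rcases hcardgrow (m-2) with h | h
    · exact h
    · have h2 : P.card ≤ (T (m-2)).card := by omega
      have := Finset.eq_of_subset_of_card_le (hTP (m-2)) h2
      rw [this]
      exact fun p hp => hp
  -- every adjacent pair in `T n` is reachable from (z,z') by a covering chain
  have hreach : ∀ n, ∀ p q, adjP P p q → p ∈ T n → q ∈ T n →
      reachP g P z z' n (p, q) := by
    intro n
    induction n with
    | zero =>
        intro p q hadj hpT hqT
        rw [hT] at hpT hqT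
        simp only [Tseq, Finset.mem_insert, Finset.mem_singleton] at hpT hqT
        have hpq : p = z ∧ q = z' := by
          rcases hpT with rfl | rfl <;> rcases hqT with rfl | rfl
          · exact absurd hadj.2.2.1 (lt_irrefl _)
          · exact ⟨rfl, rfl⟩
          · exact absurd (lt_trans hzz' hadj.2.2.1) (lt_irrefl z)
          · exact absurd hadj.2.2.1 (lt_irrefl _)
        refine ⟨fun _ => (z, z'), rfl, by rw [hpq.1, hpq.2], ?_⟩
        intro i hi
        exact absurd hi (Nat.not_lt_zero i)
    | succ n ih =>
        intro p q hadj hpT hqT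
        obtain ⟨hpP, ⟨u, huT, hup⟩, _⟩ := (hmemT n p).mp hpT
        obtain ⟨hqP, _, ⟨v, hvT, hqv⟩⟩ := (hmemT n q).mp hqT
        have hpltq : p < q := hadj.2.2.1
        -- find an adjacent pair in T n covering (p,q)
        have hfind : ∃ w w', adjP P w w' ∧ w ∈ T n ∧ w' ∈ T n ∧
            min (g w) (g w') ≤ p ∧ q ≤ max (g w) (g w') := by
          rcases le_total u v with huv | hvu
          · set A := (T n).filter (fun w => u ≤ w ∧ w ≤ v ∧ g w ≤ p) with hA
            have hAne : A.Nonempty := ⟨u, Finset.mem_filter.mpr ⟨huT, le_rfl, huv, hup⟩⟩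
            set r := A.max' hAne with hr
            have hrA := Finset.mem_filter.mp (A.max'_mem hAne)
            have hrT : r ∈ T n := hrA.1
            have hur : u ≤ r := hrA.2.1
            have hrv : r ≤ v := hrA.2.2.1
            have hgr : g r ≤ p := hrA.2.2.2
            have hrltv : r < v := by
              rcases eq_or_lt_of_le hrv with h | h
              · exfalso
                rw [h] at hgr
                exact absurd (le_trans hqv hgr) (not_le.mpr hpltq)
              · exact h
            set B' := P.filter (fun w => r < w ∧ w ≤ v) with hB'
            have hB'ne : B'.Nonempty :=
              ⟨v, Finset.mem_filter.mpr ⟨hTP n hvT, hrltv, le_rfl⟩⟩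
            set r' := B'.min' hB'ne with hr'
            have hr'B := Finset.mem_filter.mp (B'.min'_mem hB'ne)
            have hr'P : r' ∈ P := hr'B.1
            have hrr' : r < r' := hr'B.2.1
            have hr'v : r' ≤ v := hr'B.2.2
            have hr'T : r' ∈ T n := hTconv n r' hr'P r hrT v hvT (le_of_lt hrr') hr'v
            have hadjr : adjP P r r' := by
              refine ⟨hTP n hrT, hr'P, hrr', ?_⟩
              rintro w hw ⟨h1, h2⟩
              have : r' ≤ w := B'.min'_le w
                (Finset.mem_filter.mpr ⟨hw, h1, le_trans (le_of_lt h2) hr'v⟩)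
              exact absurd this (not_le.mpr h2)
            have hgr' : q ≤ g r' := by
              have hnA : r' ∉ A := by
                intro hmem
                exact absurd (A.le_max' r' hmem) (not_le.mpr hrr')
              have h1 : ¬ (g r' ≤ p) := by
                intro h
                exact hnA (Finset.mem_filter.mpr
                  ⟨hr'T, le_trans hur (le_of_lt hrr'), hr'v, h⟩)
              have h2 : p < g r' := not_le.mp h1
              by_contra h3
              exact hadj.2.2.2 (g r') (horbit r' hr'P) ⟨h2, not_le.mp h3⟩
            exact ⟨r, r', hadjr, hrT, hr'T,
              le_trans (min_le_left _ _) hgr, le_trans hgr' (le_max_right _ _)⟩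
          · set A := (T n).filter (fun w => v ≤ w ∧ w ≤ u ∧ g w ≤ p) with hA
            have hAne : A.Nonempty := ⟨u, Finset.mem_filter.mpr ⟨huT, hvu, le_rfl, hup⟩⟩
            set r := A.min' hAne with hr
            have hrA := Finset.mem_filter.mp (A.min'_mem hAne)
            have hrT : r ∈ T n := hrA.1
            have hvr : v ≤ r := hrA.2.1
            have hru : r ≤ u := hrA.2.2.1
            have hgr : g r ≤ p := hrA.2.2.2
            have hvltr : v < r := by
              rcases eq_or_lt_of_le hvr with h | h
              · exfalso
                rw [← h] at hgr
                exact absurd (le_trans hqv hgr) (not_le.mpr hpltq)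
              · exact h
            set B' := P.filter (fun w => v ≤ w ∧ w < r) with hB'
            have hB'ne : B'.Nonempty :=
              ⟨v, Finset.mem_filter.mpr ⟨hTP n hvT, le_rfl, hvltr⟩⟩
            set r' := B'.max' hB'ne with hr'
            have hr'B := Finset.mem_filter.mp (B'.max'_mem hB'ne)
            have hr'P : r' ∈ P := hr'B.1
            have hvr' : v ≤ r' := hr'B.2.1
            have hr'r : r' < r := hr'B.2.2
            have hr'T : r' ∈ T n := hTconv n r' hr'P v hvT r hrT hvr' (le_of_lt hr'r)
            have hadjr : adjP P r' r := by
              refine ⟨hr'P, hTP n hrT, hr'r, ?_⟩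
              rintro w hw ⟨h1, h2⟩
              have : w ≤ r' := B'.le_max' w
                (Finset.mem_filter.mpr ⟨hw, le_trans hvr' (le_of_lt h1), h2⟩)
              exact absurd this (not_le.mpr h1)
            have hgr' : q ≤ g r' := by
              have hnA : r' ∉ A := by
                intro hmem
                exact absurd (A.min'_le r' hmem) (not_le.mpr hr'r)
              have h1 : ¬ (g r' ≤ p) := by
                intro h
                exact hnA (Finset.mem_filter.mpr
                  ⟨hr'T, hvr', le_trans (le_of_lt hr'r) hru, h⟩)
              have h2 : p < g r' := not_le.mp h1
              by_contra h3
              exact hadj.2.2.2 (g r') (horbit r' hr'P) ⟨h2, not_le.mp h3⟩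
            exact ⟨r', r, hadjr, hr'T, hrT,
              le_trans (min_le_right _ _) hgr, le_trans hgr' (le_max_left _ _)⟩
        obtain ⟨w, w', hadjw, hwT, hw'T, hminw, hmaxw⟩ := hfind
        obtain ⟨C, hC0, hCn, hCchain⟩ := ih w w' hadjw hwT hw'T
        refine ⟨fun i => if i = n + 1 then (p, q) else C i, by simp [hC0], by simp, ?_⟩
        intro i hi
        have hine : i ≠ n + 1 := by omega
        rcases Nat.lt_or_ge i n with h | h
        · have hi1ne : i + 1 ≠ n + 1 := by omega
          simp only [if_neg hine, if_neg hi1ne]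
          exact hCchain i h
        · have hieq : i = n := by omega
          subst hieq
          simp only [if_neg hine, if_pos rfl]
          constructor
          · rw [hCn]; exact hadjw
          · rw [hCn]; exact ⟨hminw, hmaxw⟩
  -- a straddling adjacent pair different from (z,z')
  have hstraddle : ∃ p q, adjP P p q ∧ (p ≠ z ∨ q ≠ z') ∧
      min (g p) (g q) ≤ z ∧ z' ≤ max (g p) (g q) := by
    by_cases hA : (P.filter (fun w => w ≤ z ∧ g w ≤ z)).Nonempty
    · set p := (P.filter (fun w => w ≤ z ∧ g w ≤ z)).max' hA with hp
      have hpmem := Finset.mem_filter.mp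
        ((P.filter (fun w => w ≤ z ∧ g w ≤ z)).max'_mem hA)
      have hpP : p ∈ P := hpmem.1
      have hpz : p ≤ z := hpmem.2.1
      have hgp : g p ≤ z := hpmem.2.2
      have hpltz : p < z := by
        rcases eq_or_lt_of_le hpz with h | h
        · exfalso
          rw [h] at hgp
          exact absurd (le_trans hgz hgp) (not_le.mpr hzz')
        · exact h
      have hqne : (P.filter (fun w => p < w)).Nonempty :=
        ⟨z, Finset.mem_filter.mpr ⟨hzP, hpltz⟩⟩
      set q := (P.filter (fun w => p < w)).min' hqne with hq
      have hqmem := Finset.mem_filter.mp ((P.filter (fun w => p < w)).min'_mem hqne)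
      have hqP : q ∈ P := hqmem.1
      have hpq : p < q := hqmem.2
      have hqz : q ≤ z := (P.filter (fun w => p < w)).min'_le z
        (Finset.mem_filter.mpr ⟨hzP, hpltz⟩)
      have hadjpq : adjP P p q := by
        refine ⟨hpP, hqP, hpq, ?_⟩
        rintro w hw ⟨h1, h2⟩
        have := (P.filter (fun w => p < w)).min'_le w (Finset.mem_filter.mpr ⟨hw, h1⟩)
        rw [← hq] at this
        exact absurd this (not_le.mpr h2)
      have hgq : z' ≤ g q := by
        have hnA : q ∉ P.filter (fun w => w ≤ z ∧ g w ≤ z) := by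
          intro hmem
          have := (P.filter (fun w => w ≤ z ∧ g w ≤ z)).le_max' q hmem
          rw [← hp] at this
          exact absurd this (not_le.mpr hpq)
        have h1 : ¬ (g q ≤ z) := by
          intro h
          exact hnA (Finset.mem_filter.mpr ⟨hqP, hqz, h⟩)
        by_contra h3
        exact hmid (g q) (horbit q hqP) ⟨not_le.mp h1, not_le.mp h3⟩
      exact ⟨p, q, hadjpq, Or.inr (ne_of_lt (lt_of_le_of_lt hqz hzz')),
        le_trans (min_le_left _ _) hgp, le_trans hgq (le_max_right _ _)⟩
    · by_cases hB : (P.filter (fun w => z' ≤ w ∧ z' ≤ g w)).Nonempty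
      · set q := (P.filter (fun w => z' ≤ w ∧ z' ≤ g w)).min' hB with hq
        have hqmem := Finset.mem_filter.mp
          ((P.filter (fun w => z' ≤ w ∧ z' ≤ g w)).min'_mem hB)
        have hqP : q ∈ P := hqmem.1
        have hz'q : z' ≤ q := hqmem.2.1
        have hgq : z' ≤ g q := hqmem.2.2
        have hz'ltq : z' < q := by
          rcases eq_or_lt_of_le hz'q with h | h
          · exfalso
            rw [← h] at hgq
            exact absurd (le_trans hgq hgz') (not_le.mpr hzz')
          · exact h
        have hpne : (P.filter (fun w => w < q)).Nonempty :=
          ⟨z', Finset.mem_filter.mpr ⟨hz'P, hz'ltq⟩⟩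
        set p := (P.filter (fun w => w < q)).max' hpne with hp
        have hpmem := Finset.mem_filter.mp ((P.filter (fun w => w < q)).max'_mem hpne)
        have hpP : p ∈ P := hpmem.1
        have hpq : p < q := hpmem.2
        have hz'p : z' ≤ p := (P.filter (fun w => w < q)).le_max' z'
          (Finset.mem_filter.mpr ⟨hz'P, hz'ltq⟩)
        have hadjpq : adjP P p q := by
          refine ⟨hpP, hqP, hpq, ?_⟩
          rintro w hw ⟨h1, h2⟩
          have := (P.filter (fun w => w < q)).le_max' w (Finset.mem_filter.mpr ⟨hw, h2⟩)
          rw [← hp] at this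
          exact absurd this (not_le.mpr h1)
        have hgp : g p ≤ z := by
          have hnB : p ∉ P.filter (fun w => z' ≤ w ∧ z' ≤ g w) := by
            intro hmem
            have := (P.filter (fun w => z' ≤ w ∧ z' ≤ g w)).min'_le p hmem
            rw [← hq] at this
            exact absurd this (not_le.mpr hpq)
          have h1 : ¬ (z' ≤ g p) := by
            intro h
            exact hnB (Finset.mem_filter.mpr ⟨hpP, hz'p, h⟩)
          by_contra h3
          exact hmid (g p) (horbit p hpP) ⟨not_le.mp h3, not_le.mp h1⟩
        exact ⟨p, q, hadjpq, Or.inl (ne_of_gt (lt_of_lt_of_le hzz' hz'p)),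
          le_trans (min_le_left _ _) hgp, le_trans hgq (le_max_right _ _)⟩
      · exfalso
        -- parity contradiction
        have hsplit : ∀ w ∈ P, w ≤ z ∨ z' ≤ w := by
          intro w hw
          rcases le_or_gt w z with h | h
          · exact Or.inl h
          · right
            by_contra h2
            exact hmid w hw ⟨h, not_le.mp h2⟩
        have hgL : ∀ w ∈ P, w ≤ z → z' ≤ g w := by
          intro w hw hwz
          have h1 : ¬ (g w ≤ z) := by
            intro h
            exact hA ⟨w, Finset.mem_filter.mpr ⟨hw, hwz, h⟩⟩
          rcases hsplit (g w) (horbit w hw) with h | h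
          · exact absurd h h1
          · exact h
        have hgR : ∀ w ∈ P, z' ≤ w → g w ≤ z := by
          intro w hw hwz
          have h1 : ¬ (z' ≤ g w) := by
            intro h
            exact hB ⟨w, Finset.mem_filter.mpr ⟨hw, hwz, h⟩⟩
          rcases hsplit (g w) (horbit w hw) with h | h
          · exact h
          · exact absurd h h1
        set L := P.filter (fun w => w ≤ z) with hL
        set R := P.filter (fun w => ¬ (w ≤ z)) with hR
        have hRz' : ∀ w, w ∈ R ↔ w ∈ P ∧ z' ≤ w := by
          intro w
          rw [hR]
          simp only [Finset.mem_filter]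
          constructor
          · rintro ⟨h1, h2⟩
            rcases hsplit w h1 with h | h
            · exact absurd h h2
            · exact ⟨h1, h⟩
          · rintro ⟨h1, h2⟩
            exact ⟨h1, fun h => absurd (lt_of_lt_of_le hzz' h2) (not_lt.mpr h)⟩
        have hcardLR : L.card + R.card = m := by
          rw [hL, hR, Finset.card_filter_add_card_filter_not, hcard]
        have hLR : L.card ≤ R.card := by
          apply Finset.card_le_card_of_injOn g
          · intro w hw
            have hw' := Finset.mem_filter.mp hw
            exact (hRz' (g w)).mpr ⟨horbit w hw'.1, hgL w hw'.1 hw'.2⟩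
          · intro w1 h1 w2 h2 he
            exact hinj w1 (Finset.mem_filter.mp (Finset.mem_coe.mp h1)).1
              w2 (Finset.mem_filter.mp (Finset.mem_coe.mp h2)).1 he
        have hRL : R.card ≤ L.card := by
          apply Finset.card_le_card_of_injOn g
          · intro w hw
            have hw' := (hRz' w).mp hw
            exact Finset.mem_filter.mpr ⟨horbit w hw'.1, hgR w hw'.1 hw'.2⟩
          · intro w1 h1 w2 h2 he
            exact hinj w1 ((hRz' w1).mp (Finset.mem_coe.mp h1)).1
              w2 ((hRz' w2).mp (Finset.mem_coe.mp h2)).1 he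
        have : m = 2 * L.card := by omega
        rcases hodd with ⟨c, hc⟩
        omega
  obtain ⟨p0, q0, hJadj, hJne, hJmin, hJmax⟩ := hstraddle
  obtain ⟨C, hC0, hCt, hCchain⟩ :=
    hreach (m-2) p0 q0 hJadj (hTfull p0 hJadj.1) (hTfull q0 hJadj.2.1)
  set t := m - 2 with ht
  have hJneI : (p0, q0) ≠ ((z : ℝ), z') := by
    intro h
    rw [Prod.mk.injEq] at h
    rcases hJne with h1 | h1
    · exact h1 h.1
    · exact h1 h.2
  set s := Nat.findGreatest (fun i => C i = ((z : ℝ), z')) t with hs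
  have hCs : C s = ((z : ℝ), z') := by
    rw [hs]
    exact Nat.findGreatest_spec (P := fun i => C i = ((z : ℝ), z')) (Nat.zero_le t) hC0
  have hst : s ≤ t := Nat.findGreatest_le t
  have hsltt : s < t := by
    rcases eq_or_lt_of_le hst with h | h
    · exfalso
      rw [h, hCt] at hCs
      exact hJneI hCs
    · exact h
  have hsmax : ∀ i, s < i → i ≤ t → C i ≠ ((z : ℝ), z') := by
    intro i h1 h2
    exact Nat.findGreatest_is_greatest h1 h2
  set n := t - s + 1 with hn
  have hn2 : 2 ≤ n := by omega
  have hnl : n < l := by omega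
  have hCadj : ∀ j, j ≤ t → adjP P (C j).1 (C j).2 := by
    intro j hj
    rcases eq_or_lt_of_le hj with h | h
    · rw [h, hCt]; exact hJadj
    · exact (hCchain j h).1
  -- the cyclic word of intervals
  set W : ℕ → ℝ × ℝ :=
    fun i => if l - n + 1 ≤ i ∧ i ≤ l - 1 then C (s + (i - (l - n))) else ((z : ℝ), z')
    with hW
  have hWin : ∀ i, l - n + 1 ≤ i → i ≤ l - 1 → W i = C (s + (i - (l - n))) := by
    intro i h1 h2
    rw [hW]
    simp only [if_pos (And.intro h1 h2)]
  have hWout : ∀ i, ¬ (l - n + 1 ≤ i ∧ i ≤ l - 1) → W i = ((z : ℝ), z') := by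
    intro i h
    rw [hW]
    simp only [if_neg h]
  have hWadj : ∀ i, adjP P (W i).1 (W i).2 := by
    intro i
    rw [hW]
    by_cases h : l - n + 1 ≤ i ∧ i ≤ l - 1
    · simp only [if_pos h]
      exact hCadj _ (by omega)
    · simp only [if_neg h]
      exact hadjzz'
  have hWle : ∀ i, (W i).1 ≤ (W i).2 := fun i => le_of_lt (hWadj i).2.2.1
  have hWsub : ∀ i, Icc (W i).1 (W i).2 ⊆ Icc a b := by
    intro i
    exact Icc_subset_Icc (hPicc _ (hWadj i).1).1 (hPicc _ (hWadj i).2.1).2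
  have hWl0 : W l = W 0 := by
    rw [hWout l (by omega), hWout 0 (by omega)]
  have hcovIcc : ∀ B D : ℝ × ℝ, adjP P B.1 B.2 → D.1 ≤ D.2 → covP g B D →
      Icc D.1 D.2 ⊆ g '' Icc B.1 B.2 := by
    intro B D hBadj hD hcov
    have hBab : Icc B.1 B.2 ⊆ Icc a b :=
      Icc_subset_Icc (hPicc _ hBadj.1).1 (hPicc _ hBadj.2.1).2
    have h1 : Icc D.1 D.2 ⊆ Set.uIcc (g B.1) (g B.2) := by
      rw [Set.uIcc]
      intro w hw
      exact ⟨le_trans (by simpa using hcov.1) hw.1, le_trans hw.2 (by simpa using hcov.2)⟩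
    have h2 := intermediate_value_uIcc
      (hg.mono (by rw [Set.uIcc_of_le (le_of_lt hBadj.2.2.1)]; exact hBab))
    rw [Set.uIcc_of_le (le_of_lt hBadj.2.2.1)] at h2
    exact h1.trans h2
  have hcovW : ∀ i, i < l → Icc (W (i+1)).1 (W (i+1)).2 ⊆ g '' Icc (W i).1 (W i).2 := by
    intro i hi
    apply hcovIcc _ _ (hWadj i) (hWle (i+1))
    rcases Nat.lt_or_ge (i+1) (l-n+1) with h1 | h1
    · -- both are (z,z')
      rw [hWout i (by omega), hWout (i+1) (by omega)]
      exact hcovzz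
    · rcases Nat.lt_or_ge i (l-n+1) with h2 | h2
      · -- i = l - n, transition from (z,z') = C s to C (s+1)
        have hieq : i = l - n := by omega
        have hcs := (hCchain s hsltt).2
        rw [hWout i (by omega), hWin (i+1) h1 (by omega)]
        have : i + 1 - (l - n) = 1 := by omega
        rw [this]
        rw [hCs] at hcs
        exact hcs
      · rcases Nat.lt_or_ge i (l-1) with h3 | h3
        · -- inside the chain
          have hj : i + 1 - (l - n) = (i - (l - n)) + 1 := by omega
          rw [hWin i h2 (by omega), hWin (i+1) (by omega) (by omega), hj]
          have harith : s + (i - (l - n) + 1) = (s + (i - (l - n))) + 1 := by omega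
          rw [harith]
          exact (hCchain (s + (i - (l - n))) (by omega)).2
        · -- i = l - 1 : from C t = (p0,q0) back to (z,z')
          have hieq : i = l - 1 := by omega
          have hidx : s + (i - (l - n)) = t := by omega
          rw [hWin i (by omega) (by omega), hidx, hCt, hWout (i+1) (by omega)]
          exact ⟨hJmin, hJmax⟩
  obtain ⟨y, hy0, hyfix, hyit⟩ :=
    loop_fixed_point hg hmaps hl0 W hWle hWsub hWl0 hcovW
  have hyab : y ∈ Icc a b := hWsub 0 hy0
  have hyper : Function.IsPeriodicPt g l y := hyfix
  have hdl : Function.minimalPeriod g y ∣ l := hyper.minimalPeriod_dvd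
  have hd0 : 0 < Function.minimalPeriod g y :=
    Function.minimalPeriod_pos_of_mem_periodicPts ⟨l, hl0, hyper⟩
  set d := Function.minimalPeriod g y with hd
  have hdper : Function.IsPeriodicPt g d y := Function.isPeriodicPt_minimalPeriod g y
  have hdeq : d = l := by
    by_contra hne
    have hdlt : d < l := lt_of_le_of_ne (Nat.le_of_dvd hl0 hdl) hne
    -- y is not on the orbit P
    have hyP : ∀ j, g^[j] y ∉ P := by
      intro j hj
      have hyy : y ∈ P := by
        have h1 : Function.IsPeriodicPt g (l * (j+1)) y := hyper.mul_const (j+1)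
        have hjle : j ≤ l * (j+1) := by
          calc j ≤ 1 * (j+1) := by omega
            _ ≤ l * (j+1) := Nat.mul_le_mul_right _ hl0
        have h2 : l * (j+1) = (l * (j+1) - j) + j := by omega
        have h3 : g^[l * (j+1)] y = y := h1
        rw [h2, Function.iterate_add_apply] at h3
        rw [← h3]
        exact hiterP _ hj _
      have : m ∣ l := by
        rw [← hperP y hyy]
        exact hdl
      exact hnd this
    -- the word is d-periodic
    have hWmod : ∀ i1 i2, i1 < l → i2 < l → i1 % d = i2 % d → W i1 = W i2 := by
      intro i1 i2 h1 h2 hmod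
      have hpt : g^[i1] y = g^[i2] y := by
        calc g^[i1] y = g^[i1 % d] y := (hdper.iterate_mod_apply i1).symm
          _ = g^[i2 % d] y := by rw [hmod]
          _ = g^[i2] y := hdper.iterate_mod_apply i2
      have hm1 : g^[i1] y ∈ Icc (W i1).1 (W i1).2 := hyit i1 (le_of_lt h1)
      have hm2 : g^[i1] y ∈ Icc (W i2).1 (W i2).2 := by
        rw [hpt]; exact hyit i2 (le_of_lt h2)
      have hnotP : g^[i1] y ∉ P := hyP i1
      -- uniqueness of the adjacent pair containing a non-orbit point
      set w := g^[i1] y with hwdef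
      have hw1 : (W i1).1 < w := by
        rcases eq_or_lt_of_le hm1.1 with h | h
        · exact absurd (h ▸ (hWadj i1).1) hnotP
        · exact h
      have hw2 : w < (W i1).2 := by
        rcases eq_or_lt_of_le hm1.2 with h | h
        · exact absurd (h.symm ▸ (hWadj i1).2.1) hnotP
        · exact h
      have hw3 : (W i2).1 < w := by
        rcases eq_or_lt_of_le hm2.1 with h | h
        · exact absurd (h ▸ (hWadj i2).1) hnotP
        · exact h
      have hw4 : w < (W i2).2 := by
        rcases eq_or_lt_of_le hm2.2 with h | h
        · exact absurd (h.symm ▸ (hWadj i2).2.1) hnotP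
        · exact h
      have hfst : (W i1).1 = (W i2).1 := by
        by_contra hne2
        rcases lt_or_gt_of_ne hne2 with h | h
        · exact (hWadj i1).2.2.2 _ (hWadj i2).1 ⟨h, lt_trans hw3 hw2⟩
        · exact (hWadj i2).2.2.2 _ (hWadj i1).1 ⟨h, lt_trans hw1 hw4⟩
      have hsnd : (W i1).2 = (W i2).2 := by
        by_contra hne2
        rcases lt_or_gt_of_ne hne2 with h | h
        · exact (hWadj i2).2.2.2 _ (hWadj i1).2.1 ⟨lt_trans hw3 hw2, h⟩
        · exact (hWadj i1).2.2.2 _ (hWadj i2).2.1 ⟨lt_trans hw1 hw4, h⟩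
      exact Prod.ext hfst hsnd
    -- position l-1 carries (p0,q0)
    have hWl1 : W (l-1) = (p0, q0) := by
      rw [hWin (l-1) (by omega) le_rfl]
      have : s + (l - 1 - (l - n)) = t := by omega
      rw [this, hCt]
    have hdlel : d ≤ l - 1 := by omega
    have hmodeq : (l - 1 - d) % d = (l - 1) % d := by
      conv_rhs => rw [show l - 1 = (l - 1 - d) + d from by omega]
      rw [Nat.add_mod_right]
    have hWl1' : W (l - 1 - d) = (p0, q0) := by
      rw [hWmod (l-1-d) (l-1) (by omega) (by omega) hmodeq]
      exact hWl1
    have hwin2 : l - n + 1 ≤ l - 1 - d := by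
      by_contra hcon
      have := hWout (l-1-d) (fun hc => hcon hc.1)
      rw [this] at hWl1'
      exact hJneI hWl1'.symm
    have hdn : d ≤ n - 2 := by omega
    -- a multiple of d inside the window, contradiction
    have hdiv := Nat.div_add_mod (l - n) d
    have hmodlt := Nat.mod_lt (l - n) hd0
    set K := d * ((l - n) / d + 1) with hK
    have hKval : K = d * ((l - n) / d) + d := by rw [hK, Nat.mul_succ]
    have hK1 : l - n < K := by omega
    have hK2 : K ≤ l - n + d := by omega
    have hKl : K ≤ l - 2 := by omega
    have hKmod : K % d = 0 % d := by
      rw [hK, Nat.mul_mod_right, Nat.zero_mod]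
    have hW0 : W 0 = ((z : ℝ), z') := hWout 0 (by omega)
    have hWK : W K = ((z : ℝ), z') := by
      rw [hWmod K 0 (by omega) (by omega) hKmod]
      exact hW0
    have hWKin : W K = C (s + (K - (l - n))) := hWin K (by omega) (by omega)
    have hKidx : s + (K - (l - n)) ≤ t := by omega
    have := hsmax (s + (K - (l - n))) (by omega) hKidx
    rw [hWKin] at hWK
    exact this hWK
  refine ⟨y, hyab, hyfix, ?_⟩
  intro i hi0 hil hieq
  have h1 : Function.IsPeriodicPt g i y := hieq
  have h2 : d ∣ i := h1.minimalPeriod_dvd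
  rw [hdeq] at h2
  have := Nat.le_of_dvd hi0 h2
  omega

/-- If f has a periodic point of least period 2^k·m with k ≥ 1 and m ≥ 3 odd,
then f has a periodic point of least period 2^(k+n) for every n with 2^n > m. -/
theorem stmt_12 (a b : ℝ) (hab : a ≤ b) (f : ℝ → ℝ)
    (hf : ContinuousOn f (Set.Icc a b))
    (hmaps : Set.MapsTo f (Set.Icc a b) (Set.Icc a b))
    (k m : ℕ) (hk : 1 ≤ k) (hm : 3 ≤ m) (hodd : Odd m)
    (hx : ∃ x ∈ Set.Icc a b, f^[2 ^ k * m] x = x ∧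
      ∀ i, 0 < i → i < 2 ^ k * m → f^[i] x ≠ x) :
    ∀ n : ℕ, m < 2 ^ n →
      ∃ y ∈ Set.Icc a b, f^[2 ^ (k + n)] y = y ∧
        ∀ i, 0 < i → i < 2 ^ (k + n) → f^[i] y ≠ y := by
  obtain ⟨x, hxI, hxp, hxmin⟩ := hx
  intro n hn
  have h2k : 0 < 2 ^ k := Nat.pow_pos (by norm_num : 0 < 2)
  have h2n : 0 < 2 ^ n := Nat.pow_pos (by norm_num : 0 < 2)
  have hkm0 : 0 < 2 ^ k * m := Nat.mul_pos h2k (by omega)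
  set g : ℝ → ℝ := f^[2 ^ k] with hgdef
  have hgc : ContinuousOn g (Set.Icc a b) := contOn_iterate hf hmaps (2 ^ k)
  have hgm : Set.MapsTo g (Set.Icc a b) (Set.Icc a b) := mapsTo_iterate hmaps (2 ^ k)
  have hgiter : ∀ j, g^[j] = f^[2 ^ k * j] := by
    intro j
    rw [hgdef, ← Function.iterate_mul]
  -- minimal period of x under f is 2^k * m
  have hfper : Function.minimalPeriod f x = 2 ^ k * m := by
    have hper1 : Function.IsPeriodicPt f (2 ^ k * m) x := hxp
    have hdvd := hper1.minimalPeriod_dvd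
    have hpos : 0 < Function.minimalPeriod f x :=
      Function.minimalPeriod_pos_of_mem_periodicPts ⟨2 ^ k * m, hkm0, hper1⟩
    rcases eq_or_lt_of_le (Nat.le_of_dvd hkm0 hdvd) with h | h
    · exact h
    · exact absurd (Function.iterate_minimalPeriod (f := f) (x := x))
        (hxmin _ hpos h)
  -- minimal period of x under g is m
  have hgper : Function.minimalPeriod g x = m := by
    have hper1 : Function.IsPeriodicPt g m x := by
      show g^[m] x = x
      rw [hgiter m]
      exact hxp
    have hdvd := hper1.minimalPeriod_dvd
    have hpos : 0 < Function.minimalPeriod g x :=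
      Function.minimalPeriod_pos_of_mem_periodicPts ⟨m, by omega, hper1⟩
    rcases eq_or_lt_of_le (Nat.le_of_dvd (by omega) hdvd) with h | h
    · exact h
    · exfalso
      have h1 : g^[Function.minimalPeriod g x] x = x := Function.iterate_minimalPeriod
      rw [hgiter] at h1
      exact hxmin _ (Nat.mul_pos h2k hpos)
        (by exact Nat.mul_lt_mul_of_le_of_lt (le_refl (2^k)) h h2k) h1
  -- m does not divide 2^n
  have hnd : ¬ m ∣ 2 ^ n := by
    intro hdvd
    have hcop : Nat.Coprime m 2 := hodd.coprime_two_right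
    have hcop2 : Nat.Coprime m (2 ^ n) := hcop.pow_right n
    have : m ∣ Nat.gcd m (2 ^ n) := Nat.dvd_gcd dvd_rfl hdvd
    rw [hcop2] at this
    have := Nat.le_of_dvd one_pos this
    omega
  obtain ⟨y, hyab, hyfix, hymin⟩ :=
    main_odd hgc hgm hm hodd hxI hgper hn hnd
  refine ⟨y, hyab, ?_, ?_⟩
  · rw [pow_add, ← hgiter]
    exact hyfix
  · intro i hi0 hil hieq
    have hyper : Function.IsPeriodicPt f (2 ^ (k + n)) y := by
      show f^[2 ^ (k+n)] y = y
      rw [pow_add, ← hgiter]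
      exact hyfix
    have hT1 : Function.minimalPeriod f y ∣ 2 ^ (k + n) := hyper.minimalPeriod_dvd
    have hT2 : Function.minimalPeriod f y ∣ i :=
      Function.IsPeriodicPt.minimalPeriod_dvd hieq
    have hTpos : 0 < Function.minimalPeriod f y :=
      Function.minimalPeriod_pos_of_mem_periodicPts
        ⟨2 ^ (k + n), Nat.pow_pos (by norm_num : 0 < 2), hyper⟩
    obtain ⟨j, hjle, hjeq⟩ := (Nat.dvd_prime_pow Nat.prime_two).mp hT1
    have hTlei : Function.minimalPeriod f y ≤ i := Nat.le_of_dvd hi0 hT2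
    have hjlt : j < k + n := by
      rcases eq_or_lt_of_le hjle with h | h
      · exfalso
        rw [h] at hjeq
        rw [hjeq] at hTlei
        omega
      · exact h
    set e := max j k with he
    have helt : e < k + n := by
      have hn1 : 1 ≤ n := by
        by_contra hcon
        have : n = 0 := by omega
        rw [this] at hn
        simp at hn
        omega
      rw [he]
      exact max_lt hjlt (by omega)
    have hper2 : Function.IsPeriodicPt f (2 ^ e) y := by
      obtain ⟨c, hc⟩ := pow_dvd_pow 2 (le_max_left j k)
      have := (Function.isPeriodicPt_minimalPeriod f y).mul_const c
      rw [hjeq] at this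
      rw [← hc] at this
      exact this
    have hgfix : g^[2 ^ (e - k)] y = y := by
      rw [hgiter, ← pow_add]
      have : k + (e - k) = e := by
        have : k ≤ e := le_max_right j k
        omega
      rw [this]
      exact hper2
    have h2e : 2 ^ (e - k) < 2 ^ n := by
      apply Nat.pow_lt_pow_right (by norm_num)
      omega
    exact hymin _ (Nat.pow_pos (by norm_num : 0 < 2)) h2e hgfix
end

section
/- Let f : I → I be continuous on a compact interval, and let i ≥ 2. If f has a periodic point of least period 2^i, then f has a periodic point of least period 2^{i-1}. -/
open Set Function

/-- Pull back: if `f u ≤ s` and `t ≤ f v`, there is a subinterval `[c,d] ⊆ [u,v]`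
with `f c = s`, `f d = t` and `f` mapping `[c,d]` into `[s,t]`. -/
lemma pullback0 (f : ℝ → ℝ) (u v s t : ℝ) (huv : u ≤ v) (hst : s ≤ t)
    (hf : ContinuousOn f (Icc u v)) (h1 : f u ≤ s) (h2 : t ≤ f v) :
    ∃ c d, u ≤ c ∧ c ≤ d ∧ d ≤ v ∧ f c = s ∧ f d = t ∧
      ∀ w ∈ Icc c d, f w ∈ Icc s t := by
  set S : Set ℝ := Icc u v ∩ f ⁻¹' {t} with hS
  have hScl : IsClosed S := hf.preimage_isClosed_of_isClosed isClosed_Icc isClosed_singleton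
  have hSne : S.Nonempty := by
    obtain ⟨w, hw, hwt⟩ := intermediate_value_Icc huv hf
      (show t ∈ Icc (f u) (f v) from ⟨le_trans h1 hst, h2⟩)
    exact ⟨w, hw, by simpa using hwt⟩
  have hSbd : BddBelow S := ⟨u, fun w hw => hw.1.1⟩
  set d := sInf S with hd
  have hdS : d ∈ S := hScl.csInf_mem hSne hSbd
  have hdu : u ≤ d := hdS.1.1
  have hdv : d ≤ v := hdS.1.2
  have hfd : f d = t := hdS.2
  have hlt : ∀ w, u ≤ w → w < d → f w < t := by
    intro w hw1 hw2
    have hwv : w ≤ v := le_trans hw2.le hdv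
    rcases lt_trichotomy (f w) t with h | h | h
    · exact h
    · exact absurd (csInf_le hSbd ⟨⟨hw1, hwv⟩, h⟩) (not_le.mpr hw2)
    · exfalso
      obtain ⟨w', hw', hwt'⟩ := intermediate_value_Icc hw1
        (hf.mono (Icc_subset_Icc le_rfl hwv))
        (show t ∈ Icc (f u) (f w) from ⟨le_trans h1 hst, h.le⟩)
      have hle : d ≤ w' := csInf_le hSbd ⟨⟨hw'.1, le_trans hw'.2 hwv⟩, hwt'⟩
      exact absurd (lt_of_le_of_lt (hle.trans hw'.2) hw2) (lt_irrefl _)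
  set T : Set ℝ := Icc u d ∩ f ⁻¹' {s} with hT
  have hfud : ContinuousOn f (Icc u d) := hf.mono (Icc_subset_Icc le_rfl hdv)
  have hTcl : IsClosed T := hfud.preimage_isClosed_of_isClosed isClosed_Icc isClosed_singleton
  have hTne : T.Nonempty := by
    obtain ⟨w, hw, hws⟩ := intermediate_value_Icc hdu hfud
      (show s ∈ Icc (f u) (f d) from ⟨h1, by rw [hfd]; exact hst⟩)
    exact ⟨w, hw, by simpa using hws⟩
  have hTbd : BddAbove T := ⟨d, fun w hw => hw.1.2⟩
  set c := sSup T with hc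
  have hcT : c ∈ T := hTcl.csSup_mem hTne hTbd
  have hcu : u ≤ c := hcT.1.1
  have hcd : c ≤ d := hcT.1.2
  have hfc : f c = s := hcT.2
  have hgt : ∀ w, c < w → w ≤ d → s < f w := by
    intro w hw1 hw2
    have hwu : u ≤ w := le_trans hcu hw1.le
    rcases lt_trichotomy (f w) s with h | h | h
    · exfalso
      obtain ⟨w', hw', hws'⟩ := intermediate_value_Icc hw2
        (hfud.mono (Icc_subset_Icc hwu le_rfl))
        (show s ∈ Icc (f w) (f d) from ⟨h.le, by rw [hfd]; exact hst⟩)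
      have hle : w' ≤ c := le_csSup hTbd ⟨⟨le_trans hwu hw'.1, hw'.2⟩, hws'⟩
      exact absurd (lt_of_lt_of_le hw1 hw'.1) (not_lt.mpr hle)
    · exact absurd (le_csSup hTbd ⟨⟨hwu, hw2⟩, h⟩) (not_le.mpr hw1)
    · exact h
  refine ⟨c, d, hcu, hcd, hdv, hfc, hfd, ?_⟩
  intro w hw
  constructor
  · rcases eq_or_lt_of_le hw.1 with h | h
    · rw [← h, hfc]
    · exact (hgt w h hw.2).le
  · rcases eq_or_lt_of_le hw.2 with h | h
    · rw [h, hfd]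
    · exact (hlt w (hcu.trans hw.1) h).le

/-- Pull back, both orientations. -/
lemma pullback (f : ℝ → ℝ) (u v s t : ℝ) (huv : u ≤ v) (hst : s ≤ t)
    (hf : ContinuousOn f (Icc u v))
    (h : (f u ≤ s ∧ t ≤ f v) ∨ (f v ≤ s ∧ t ≤ f u)) :
    ∃ c d, u ≤ c ∧ c ≤ d ∧ d ≤ v ∧
      ((f c = s ∧ f d = t) ∨ (f c = t ∧ f d = s)) ∧
      ∀ w ∈ Icc c d, f w ∈ Icc s t := by
  rcases h with ⟨h1, h2⟩ | ⟨h1, h2⟩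
  · obtain ⟨c, d, a1, a2, a3, a4, a5, a6⟩ := pullback0 f u v s t huv hst hf h1 h2
    exact ⟨c, d, a1, a2, a3, Or.inl ⟨a4, a5⟩, a6⟩
  · set g : ℝ → ℝ := fun w => f (u + v - w) with hg
    have hmapg : MapsTo (fun w => u + v - w) (Icc u v) (Icc u v) := by
      intro w hw
      simp only [mem_Icc] at hw ⊢
      constructor <;> linarith [hw.1, hw.2]
    have hgc : ContinuousOn g (Icc u v) :=
      hf.comp ((continuous_const.sub continuous_id).continuousOn) hmapg
    have hgu : g u ≤ s := by
      show f (u + v - u) ≤ s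
      rw [show u + v - u = v by ring]
      exact h1
    have hgv : t ≤ g v := by
      show t ≤ f (u + v - v)
      rw [show u + v - v = u by ring]
      exact h2
    obtain ⟨c', d', a1, a2, a3, a4, a5, a6⟩ := pullback0 g u v s t huv hst hgc hgu hgv
    refine ⟨u + v - d', u + v - c', by linarith, by linarith, by linarith,
      Or.inr ⟨?_, ?_⟩, ?_⟩
    · show f (u + v - d') = t
      rw [show u + v - d' = u + v - d' by ring]
      exact a5
    · exact a4
    · intro w hw
      have hww : u + v - w ∈ Icc c' d' := ⟨by linarith [hw.2], by linarith [hw.1]⟩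
      have h := a6 (u + v - w) hww
      simp only [hg] at h
      rwa [show u + v - (u + v - w) = w by ring] at h

/-- Master covering lemma: two almost-disjoint intervals covering each other
produce a point of period two. -/
lemma master (a b : ℝ) (f : ℝ → ℝ) (hf : ContinuousOn f (Set.Icc a b))
    (u v s t : ℝ) (hu : u ∈ Set.Icc a b) (ht : t ∈ Set.Icc a b)
    (huv : u < v) (hvs : v ≤ s) (hst : s < t)
    (hJ0 : (f u ≤ s ∧ t ≤ f v) ∨ (f v ≤ s ∧ t ≤ f u))
    (hJ1 : (f s ≤ u ∧ v ≤ f t) ∨ (f t ≤ u ∧ v ≤ f s))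
    (hfix : v = s → f v ≠ v) :
    ∃ y ∈ Set.Icc a b, f^[2] y = y ∧ f y ≠ y := by
  have hua : a ≤ u := hu.1
  have htb : t ≤ b := ht.2
  have hsub : Icc u v ⊆ Icc a b := Icc_subset_Icc hua (by linarith)
  have hsub' : Icc s t ⊆ Icc a b := Icc_subset_Icc (by linarith) htb
  obtain ⟨c, d, hc1, hcd, hd1, hor, hcov⟩ :=
    pullback f u v s t huv.le hst.le (hf.mono hsub) hJ0
  have hcdsub : Icc c d ⊆ Icc u v := Icc_subset_Icc hc1 hd1
  have hff : ContinuousOn (fun w => f (f w)) (Icc c d) :=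
    (hf.mono hsub').comp ((hf.mono hsub).mono hcdsub) (fun w hw => hcov w hw)
  have key : ∃ z ∈ Icc c d, f (f z) = z := by
    set g : ℝ → ℝ := fun w => f (f w) - w with hgdef
    have hg : ContinuousOn g (Icc c d) := hff.sub continuousOn_id
    have hgc : g c = f (f c) - c := rfl
    have hgd : g d = f (f d) - d := rfl
    rcases hor with ⟨e1, e2⟩ | ⟨e1, e2⟩ <;> rcases hJ1 with ⟨e3, e4⟩ | ⟨e3, e4⟩
    · have h0 : (0:ℝ) ∈ Icc (g c) (g d) :=
        ⟨by rw [hgc, e1]; linarith, by rw [hgd, e2]; linarith⟩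
      obtain ⟨z, hz, hz0⟩ := intermediate_value_Icc hcd hg h0
      exact ⟨z, hz, by have : f (f z) - z = 0 := hz0; linarith⟩
    · have h0 : (0:ℝ) ∈ Icc (g d) (g c) :=
        ⟨by rw [hgd, e2]; linarith, by rw [hgc, e1]; linarith⟩
      obtain ⟨z, hz, hz0⟩ := intermediate_value_Icc' hcd hg h0
      exact ⟨z, hz, by have : f (f z) - z = 0 := hz0; linarith⟩
    · have h0 : (0:ℝ) ∈ Icc (g d) (g c) :=
        ⟨by rw [hgd, e2]; linarith, by rw [hgc, e1]; linarith⟩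
      obtain ⟨z, hz, hz0⟩ := intermediate_value_Icc' hcd hg h0
      exact ⟨z, hz, by have : f (f z) - z = 0 := hz0; linarith⟩
    · have h0 : (0:ℝ) ∈ Icc (g c) (g d) :=
        ⟨by rw [hgc, e1]; linarith, by rw [hgd, e2]; linarith⟩
      obtain ⟨z, hz, hz0⟩ := intermediate_value_Icc hcd hg h0
      exact ⟨z, hz, by have : f (f z) - z = 0 := hz0; linarith⟩
  obtain ⟨z, hz, hzf⟩ := key
  have hz1 : z ∈ Icc u v := hcdsub hz
  have hfz : f z ∈ Icc s t := hcov z hz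
  refine ⟨z, hsub hz1, ?_, ?_⟩
  · show f^[2] z = z
    rw [show (2:ℕ) = 1 + 1 by norm_num, Function.iterate_add_apply,
      Function.iterate_one]
    exact hzf
  · intro hzz
    have h1 : z ≤ v := hz1.2
    have h2 : s ≤ z := by rw [← hzz]; exact hfz.1
    have hvs' : v = s := le_antisymm hvs (by linarith)
    have hzv : z = v := le_antisymm h1 (by linarith)
    exact hfix hvs' (by rw [← hzv] at *; exact hzz)

/-- Iterates of a continuous self-map of an interval are continuous on it. -/
lemma contIter (a b : ℝ) (f : ℝ → ℝ) (hf : ContinuousOn f (Set.Icc a b))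
    (hm : Set.MapsTo f (Set.Icc a b) (Set.Icc a b)) :
    ∀ n, ContinuousOn (f^[n]) (Set.Icc a b) := by
  intro n
  induction n with
  | zero => simpa using continuousOn_id
  | succ n ih =>
    rw [Function.iterate_succ']
    exact hf.comp ih (hm.iterate n)

/-- A point of least period 4 forces a point of period 2. -/
lemma p4to2 (a b : ℝ) (f : ℝ → ℝ) (hf : ContinuousOn f (Set.Icc a b))
    (hm : Set.MapsTo f (Set.Icc a b) (Set.Icc a b))
    (x : ℝ) (hx : x ∈ Set.Icc a b) (h4 : f^[4] x = x)
    (hne : ∀ j, 0 < j → j < 4 → f^[j] x ≠ x) :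
    ∃ y ∈ Set.Icc a b, f^[2] y = y ∧ f y ≠ y := by
  have hper : Function.IsPeriodicPt f 4 x := h4
  obtain ⟨k, hk, hkmin⟩ := Finset.exists_min_image (Finset.range 4) (fun j => f^[j] x)
    ⟨0, by simp⟩
  simp only [Finset.mem_range] at hk
  set p := f^[k] x with hp
  have hp4 : f^[4] p = p := by
    calc f^[4] p = f^[4] (f^[k] x) := rfl
      _ = f^[4 + k] x := (Function.iterate_add_apply f 4 k x).symm
      _ = f^[k + 4] x := by rw [add_comm]
      _ = f^[k] (f^[4] x) := Function.iterate_add_apply f k 4 x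
      _ = p := by rw [h4]
  have hpmem : p ∈ Set.Icc a b := (hm.iterate k) hx
  have hmemj : ∀ j, f^[j] p ∈ Set.Icc a b := fun j => (hm.iterate j) hpmem
  have hpne : ∀ j, 0 < j → j < 4 → f^[j] p ≠ p := by
    intro j hj1 hj2 heq
    apply hne j hj1 hj2
    have h1 : f^[j + k] x = f^[k] x := by
      rw [Function.iterate_add_apply]; exact heq
    calc f^[j] x = f^[j] (f^[4] x) := by rw [h4]
      _ = f^[j + 4] x := (Function.iterate_add_apply f j 4 x).symm
      _ = f^[4 - k + (j + k)] x := by rw [show 4 - k + (j + k) = j + 4 by omega]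
      _ = f^[4 - k] (f^[j + k] x) := Function.iterate_add_apply f (4 - k) (j + k) x
      _ = f^[4 - k] (f^[k] x) := by rw [h1]
      _ = f^[4 - k + k] x := (Function.iterate_add_apply f (4 - k) k x).symm
      _ = f^[4] x := by rw [show 4 - k + k = 4 by omega]
      _ = x := h4
  have hmin : ∀ j, 0 < j → j < 4 → p < f^[j] p := by
    intro j hj1 hj2
    have heq : f^[j] p = f^[(j + k) % 4] x := by
      calc f^[j] p = f^[j] (f^[k] x) := rfl
        _ = f^[j + k] x := (Function.iterate_add_apply f j k x).symm
        _ = f^[(j + k) % 4] x := (hper.iterate_mod_apply (j + k)).symm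
    have hle : p ≤ f^[j] p := by
      rw [heq]
      exact hkmin _ (Finset.mem_range.mpr (Nat.mod_lt _ (by norm_num)))
    exact lt_of_le_of_ne hle (Ne.symm (hpne j hj1 hj2))
  have hdist : ∀ i j, i < j → j < 4 → f^[i] p ≠ f^[j] p := by
    intro i j hij hj4 h
    apply hpne (4 - j + i) (by omega) (by omega)
    calc f^[4 - j + i] p = f^[4 - j] (f^[i] p) := Function.iterate_add_apply f (4 - j) i p
      _ = f^[4 - j] (f^[j] p) := by rw [h]
      _ = f^[4 - j + j] p := (Function.iterate_add_apply f (4 - j) j p).symm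
      _ = f^[4] p := by rw [show 4 - j + j = 4 by omega]
      _ = p := hp4
  have hf0 : f p = f^[1] p := by rw [Function.iterate_one]
  have hf1 : f (f^[1] p) = f^[2] p := by
    rw [show (2:ℕ) = 1 + 1 by norm_num, Function.iterate_add_apply, Function.iterate_one]
  have hf2 : f (f^[2] p) = f^[3] p := by
    rw [show (3:ℕ) = 1 + 2 by norm_num, Function.iterate_add_apply f 1 2, Function.iterate_one]
  have hf3 : f (f^[3] p) = p := by
    calc f (f^[3] p) = f^[1] (f^[3] p) := by rw [Function.iterate_one]
      _ = f^[1 + 3] p := (Function.iterate_add_apply f 1 3 p).symm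
      _ = f^[4] p := by norm_num
      _ = p := hp4
  have h1p : p < f^[1] p := hmin 1 (by norm_num) (by norm_num)
  have h2p : p < f^[2] p := hmin 2 (by norm_num) (by norm_num)
  have h3p : p < f^[3] p := hmin 3 (by norm_num) (by norm_num)
  rcases (hdist 1 2 (by norm_num) (by norm_num)).lt_or_gt with hAB | hBA <;>
    rcases (hdist 2 3 (by norm_num) (by norm_num)).lt_or_gt with hBC | hCB <;>
    rcases (hdist 1 3 (by norm_num) (by norm_num)).lt_or_gt with hAC | hCA
  · -- A < B < C
    exact master a b f hf (f^[1] p) (f^[2] p) (f^[2] p) (f^[3] p)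
      (hmemj 1) (hmemj 3) hAB le_rfl hBC
      (Or.inl ⟨le_of_eq hf1, le_of_eq hf2.symm⟩)
      (Or.inr ⟨by rw [hf3]; exact h1p.le, by rw [hf2]; exact hBC.le⟩)
      (fun _ => by rw [hf2]; exact hBC.ne')
  · -- A < B, B < C, C < A : impossible
    exact absurd hCA (by linarith)
  · -- A < C < B
    exact master a b f hf (f^[1] p) (f^[3] p) (f^[3] p) (f^[2] p)
      (hmemj 1) (hmemj 2) hAC le_rfl hCB
      (Or.inr ⟨by rw [hf3]; exact h3p.le, le_of_eq hf1.symm⟩)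
      (Or.inl ⟨by rw [hf3]; exact h1p.le, le_of_eq hf2.symm⟩)
      (fun _ => by rw [hf3]; exact h3p.ne)
  · -- C < A < B
    exact master a b f hf p (f^[3] p) (f^[3] p) (f^[1] p)
      hpmem (hmemj 1) h3p le_rfl hCA
      (Or.inr ⟨by rw [hf3]; exact h3p.le, le_of_eq hf0.symm⟩)
      (Or.inl ⟨le_of_eq hf3, by rw [hf1]; exact hCB.le⟩)
      (fun _ => by rw [hf3]; exact h3p.ne)
  · -- B < A < C
    exact master a b f hf p (f^[2] p) (f^[1] p) (f^[3] p)
      hpmem (hmemj 3) h2p hBA.le hAC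
      (Or.inl ⟨le_of_eq hf0, le_of_eq hf2.symm⟩)
      (Or.inr ⟨le_of_eq hf3, le_of_eq hf1.symm⟩)
      (fun h => absurd h hBA.ne)
  · -- B < C < A
    exact master a b f hf p (f^[2] p) (f^[3] p) (f^[1] p)
      hpmem (hmemj 1) h2p hBC.le hCA
      (Or.inr ⟨le_of_eq hf2, le_of_eq hf0.symm⟩)
      (Or.inl ⟨le_of_eq hf3, le_of_eq hf1.symm⟩)
      (fun h => absurd h hBC.ne)
  · -- B < A, C < B, A < C : impossible
    exact absurd hAC (by linarith)
  · -- C < B < A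
    exact master a b f hf p (f^[3] p) (f^[3] p) (f^[2] p)
      hpmem (hmemj 2) h3p le_rfl hCB
      (Or.inr ⟨by rw [hf3]; exact h3p.le, by rw [hf0]; exact hBA.le⟩)
      (Or.inl ⟨le_of_eq hf3, le_of_eq hf2.symm⟩)
      (fun _ => by rw [hf3]; exact h3p.ne)

/-- If f has a periodic point of least period 2^i with i ≥ 2, then f has a
periodic point of least period 2^(i-1). -/
theorem stmt_13 (a b : ℝ) (hab : a ≤ b) (f : ℝ → ℝ)
    (hf : ContinuousOn f (Set.Icc a b))
    (hmaps : Set.MapsTo f (Set.Icc a b) (Set.Icc a b))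
    (i : ℕ) (hi : 2 ≤ i)
    (hx : ∃ x ∈ Set.Icc a b, f^[2 ^ i] x = x ∧
      ∀ j, 0 < j → j < 2 ^ i → f^[j] x ≠ x) :
    ∃ y ∈ Set.Icc a b, f^[2 ^ (i - 1)] y = y ∧
      ∀ j, 0 < j → j < 2 ^ (i - 1) → f^[j] y ≠ y := by
  obtain ⟨x, hxmem, hxper, hxleast⟩ := hx
  set g := f^[2 ^ (i - 2)] with hg
  have hgc : ContinuousOn g (Set.Icc a b) := contIter a b f hf hmaps _
  have hgm : Set.MapsTo g (Set.Icc a b) (Set.Icc a b) := hmaps.iterate _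
  have hpos : 0 < 2 ^ (i - 2) := pow_pos (by norm_num) _
  have h2i : 2 ^ (i - 2) * 4 = 2 ^ i := by
    have h4 : 2 ^ (i - 2) * 4 = 2 ^ (i - 2) * 2 ^ 2 := by norm_num
    rw [h4, ← pow_add]
    congr 1
    omega
  have h2i1 : 2 ^ (i - 2) * 2 = 2 ^ (i - 1) := by
    have h2 : 2 ^ (i - 2) * 2 = 2 ^ (i - 2) * 2 ^ 1 := by norm_num
    rw [h2, ← pow_add]
    congr 1
    omega
  have hg4 : g^[4] x = x := by
    rw [hg, ← Function.iterate_mul, h2i]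
    exact hxper
  have hgne : ∀ j, 0 < j → j < 4 → g^[j] x ≠ x := by
    intro j hj1 hj2
    rw [hg, ← Function.iterate_mul]
    refine hxleast _ (Nat.mul_pos hpos hj1) ?_
    calc 2 ^ (i - 2) * j < 2 ^ (i - 2) * 4 := by
          exact mul_lt_mul_of_pos_left hj2 hpos
      _ = 2 ^ i := h2i
  obtain ⟨y, hy, hy2, hy1⟩ := p4to2 a b g hgc hgm x hxmem hg4 hgne
  have hy2' : f^[2 ^ (i - 1)] y = y := by
    rw [← h2i1, Function.iterate_mul]
    exact hy2
  have hy1' : f^[2 ^ (i - 2)] y ≠ y := hy1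
  refine ⟨y, hy, hy2', ?_⟩
  intro j hj1 hj2 hjper
  have hper1 : Function.IsPeriodicPt f (2 ^ (i - 1)) y := hy2'
  have hperj : Function.IsPeriodicPt f j y := hjper
  have hdvd : Function.minimalPeriod f y ∣ 2 ^ (i - 1) := hper1.minimalPeriod_dvd
  obtain ⟨k, hk, hkeq⟩ := (Nat.dvd_prime_pow Nat.prime_two).mp hdvd
  have hkne : k = i - 1 := by
    by_contra hne'
    have hki2 : k ≤ i - 2 := by omega
    have hpp : Function.IsPeriodicPt f (2 ^ (i - 2)) y :=
      Function.isPeriodicPt_iff_minimalPeriod_dvd.mpr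
        (by rw [hkeq]; exact pow_dvd_pow 2 hki2)
    exact hy1' hpp
  have hmle : Function.minimalPeriod f y ≤ j := hperj.minimalPeriod_le hj1
  rw [hkeq, hkne] at hmle
  omega
end

section
/- For every positive integer k there exists a continuous map g : [0,1] → [0,1] that has a periodic point of least period k but has no periodic point of least period j for any j with j ≺ k in Sharkovsky's ordering. -/
open Set Function

/-- The odd part of a natural number. -/
def oddPart (m : ℕ) : ℕ := m / 2 ^ m.factorization 2

/-- Sharkovsky's ordering on positive integers. -/
def SharkLt (m n : ℕ) : Prop :=
  (oddPart m ≠ 1 ∧ oddPart n = 1) ∨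
  (oddPart m ≠ 1 ∧ oddPart n ≠ 1 ∧
    (m.factorization 2 < n.factorization 2 ∨
      (m.factorization 2 = n.factorization 2 ∧ oddPart m < oddPart n))) ∨
  (oddPart m = 1 ∧ oddPart n = 1 ∧ n < m)

noncomputable def Dbl (f : ℝ → ℝ) : ℝ → ℝ := fun x =>
  if x ≤ 1/4 then x + 3/4
  else if x ≤ 3/4 then 1 + (x - 1/4) * (f 0 / 2 - 2)
  else f (4*x - 3) / 4

def IsLP (f : ℝ → ℝ) (m : ℕ) : Prop :=
  ∃ y ∈ Set.Icc (0:ℝ) 1, f^[m] y = y ∧ ∀ i, 0 < i → i < m → f^[i] y ≠ y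

lemma Dbl_cont {f : ℝ → ℝ} (hf : Continuous f) : Continuous (Dbl f) := by
  unfold Dbl
  apply Continuous.if_le
  · continuity
  · apply Continuous.if_le
    · continuity
    · exact (hf.comp (by continuity)).div_const 4
    · exact continuous_id
    · exact continuous_const
    · intro x hx; subst hx; ring_nf
  · exact continuous_id
  · exact continuous_const
  · intro x hx
    rw [hx]
    rw [if_pos (by norm_num : (1:ℝ)/4 ≤ 3/4)]
    ring_nf

lemma DblA {f : ℝ → ℝ} {x : ℝ} (h : x ≤ 1/4) : Dbl f x = x + 3/4 := if_pos h

lemma DblM {f : ℝ → ℝ} {x : ℝ} (h1 : 1/4 < x) (h2 : x ≤ 3/4) :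
    Dbl f x = 1 + (x - 1/4) * (f 0 / 2 - 2) := by
  unfold Dbl; rw [if_neg (by linarith), if_pos h2]

lemma DblB {f : ℝ → ℝ} {x : ℝ} (h : 3/4 ≤ x) : Dbl f x = f (4*x - 3) / 4 := by
  rcases eq_or_lt_of_le h with h' | h'
  · unfold Dbl
    rw [if_neg (by linarith), if_pos (le_of_eq h'.symm), ← h']
    ring_nf
  · unfold Dbl; rw [if_neg (by linarith), if_neg (by linarith)]

lemma DblAB {f : ℝ → ℝ} {x : ℝ} (h : x ∈ Icc (0:ℝ) (1/4)) :
    Dbl f x ∈ Icc (3/4:ℝ) 1 := by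
  rw [DblA h.2]; constructor <;> [linarith [h.1]; linarith [h.2]]

lemma DblBA {f : ℝ → ℝ} (hm : MapsTo f (Icc (0:ℝ) 1) (Icc (0:ℝ) 1)) {x : ℝ}
    (h : x ∈ Icc (3/4:ℝ) 1) : Dbl f x ∈ Icc (0:ℝ) (1/4) := by
  rw [DblB h.1]
  have : 4*x - 3 ∈ Icc (0:ℝ) 1 := ⟨by linarith [h.1], by linarith [h.2]⟩
  have := hm this
  constructor <;> [linarith [this.1]; linarith [this.2]]

lemma Dbl_mapsTo {f : ℝ → ℝ} (hm : MapsTo f (Icc (0:ℝ) 1) (Icc (0:ℝ) 1)) :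
    MapsTo (Dbl f) (Icc (0:ℝ) 1) (Icc (0:ℝ) 1) := by
  intro x hx
  have hf0 : f 0 ∈ Icc (0:ℝ) 1 := hm (by norm_num)
  rcases le_or_gt x (1/4) with h | h
  · have := DblAB (f := f) ⟨hx.1, h⟩
    exact ⟨by linarith [this.1], this.2⟩
  · rcases le_or_gt x (3/4) with h2 | h2
    · rw [DblM h h2]
      constructor
      · nlinarith [hf0.1, hf0.2]
      · nlinarith [hf0.1, hf0.2]
    · have := DblBA hm ⟨le_of_lt h2, hx.2⟩
      exact ⟨this.1, by linarith [this.2]⟩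

lemma Dbl_even_iter {f : ℝ → ℝ} (hm : MapsTo f (Icc (0:ℝ) 1) (Icc (0:ℝ) 1))
    {x : ℝ} (hx : x ∈ Icc (0:ℝ) (1/4)) :
    ∀ t, (Dbl f)^[2*t] x = f^[t] (4*x) / 4 ∧ f^[t] (4*x) ∈ Icc (0:ℝ) 1 := by
  have h4x : 4*x ∈ Icc (0:ℝ) 1 := ⟨by linarith [hx.1], by linarith [hx.2]⟩
  intro t; induction t with
  | zero =>
    refine ⟨?_, by simpa using h4x⟩
    simp only [Nat.mul_zero, Function.iterate_zero, id_eq]; ring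
  | succ t ih =>
    obtain ⟨ih1, ih2⟩ := ih
    have hw : f^[t] (4*x) / 4 ∈ Icc (0:ℝ) (1/4) :=
      ⟨by linarith [ih2.1], by linarith [ih2.2]⟩
    have h1 : Dbl f (f^[t] (4*x) / 4) = f^[t] (4*x) / 4 + 3/4 := DblA hw.2
    have h2 : Dbl f (f^[t] (4*x) / 4 + 3/4) = f (f^[t] (4*x)) / 4 := by
      rw [DblB (by linarith [hw.1])]
      ring_nf
    have hs : 2*(t+1) = 2 + 2*t := by ring
    rw [hs, Function.iterate_add_apply, ih1]
    simp only [Function.iterate_succ_apply', Function.iterate_zero, id_eq]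
    constructor
    · show Dbl f (Dbl f _) = _
      rw [h1, h2]
    · exact hm ih2

lemma Dbl_odd_iter {f : ℝ → ℝ} (hm : MapsTo f (Icc (0:ℝ) 1) (Icc (0:ℝ) 1))
    {x : ℝ} (hx : x ∈ Icc (0:ℝ) (1/4)) (t : ℕ) :
    (Dbl f)^[2*t+1] x ∈ Icc (3/4:ℝ) 1 := by
  obtain ⟨h1, h2⟩ := Dbl_even_iter hm hx t
  have : 2*t+1 = 1 + 2*t := by ring
  rw [this, Function.iterate_add_apply]
  simp only [Function.iterate_one]
  rw [h1]
  exact DblAB ⟨by linarith [h2.1], by linarith [h2.2]⟩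

lemma Dbl_lower {f : ℝ → ℝ} (hm : MapsTo f (Icc (0:ℝ) 1) (Icc (0:ℝ) 1))
    {p : ℕ} (h : IsLP f p) : IsLP (Dbl f) (2*p) := by
  obtain ⟨y, hy, hyp, hyl⟩ := h
  refine ⟨y/4, ⟨by linarith [hy.1], by linarith [hy.2]⟩, ?_, ?_⟩
  · have h4 : 4*(y/4) = y := by ring
    have := (Dbl_even_iter (x := y/4) hm ⟨by linarith [hy.1], by linarith [hy.2]⟩ p).1
    rw [h4, hyp] at this
    rw [this]
  · intro i hi him hcon
    have hy4 : y/4 ∈ Icc (0:ℝ) (1/4) := ⟨by linarith [hy.1], by linarith [hy.2]⟩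
    have h4 : 4*(y/4) = y := by ring
    rcases Nat.even_or_odd i with ⟨j, hj⟩ | ⟨j, hj⟩
    · subst hj
      have := (Dbl_even_iter hm hy4 j).1
      rw [h4] at this
      have hj2 : j + j = 2*j := by ring
      rw [hj2] at hcon
      rw [this] at hcon
      have : f^[j] y = y := by linarith [hcon]
      exact hyl j (by omega) (by omega) this
    · subst hj
      have := Dbl_odd_iter hm hy4 j
      rw [hcon] at this
      have := this.1
      linarith [hy4.2]

lemma pow_ne_one_of_abs {s : ℝ} (hs : 3/2 ≤ |s|) {m : ℕ} (hm : 1 ≤ m) : s^m ≠ 1 := by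
  intro h
  have h1 : |s|^m = 1 := by
    rw [← abs_pow, h, abs_one]
  have h2 : (3/2:ℝ)^m ≤ |s|^m := pow_le_pow_left₀ (by norm_num) hs m
  have h3 : (3/2:ℝ)^1 ≤ (3/2:ℝ)^m := pow_le_pow_right₀ (by norm_num) hm
  rw [h1] at h2
  norm_num at h3
  linarith

lemma affine_iter_diff (c s : ℝ) (u v : ℝ) :
    ∀ t, (fun y => 1 + (y - 1/4) * s)^[t] u - (fun y => 1 + (y - 1/4) * s)^[t] v
      = s^t * (u - v) := by
  intro t; induction t with
  | zero => simp
  | succ t ih =>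
    rw [Function.iterate_succ_apply', Function.iterate_succ_apply']
    show (1 + ((fun y => 1 + (y - 1/4) * s)^[t] u - 1/4) * s)
      - (1 + ((fun y => 1 + (y - 1/4) * s)^[t] v - 1/4) * s) = _
    rw [pow_succ]
    linear_combination s * ih

lemma isLP_zero (f : ℝ → ℝ) : IsLP f 0 := ⟨0, by norm_num, rfl, by omega⟩

lemma iter_period {f : ℝ → ℝ} {x : ℝ} {m : ℕ} (h : f^[m] x = x) :
    ∀ N, f^[m*N] x = x := by
  intro N; induction N with
  | zero => simp
  | succ N ih => rw [Nat.mul_succ, Function.iterate_add_apply, h, ih]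

lemma lp_shift {f : ℝ → ℝ} {x : ℝ} {m : ℕ}
    (hx : f^[m] x = x) (hl : ∀ i, 0 < i → i < m → f^[i] x ≠ x) (r : ℕ) :
    f^[m] (f^[r] x) = f^[r] x ∧ ∀ i, 0 < i → i < m → f^[i] (f^[r] x) ≠ f^[r] x := by
  constructor
  · rw [← Function.iterate_add_apply, Nat.add_comm, Function.iterate_add_apply, hx]
  · intro i hi him hcon
    have hm : 0 < m := hi.trans him
    have hge : r ≤ m * (r+1) := by nlinarith
    set s := m * (r+1) - r with hs
    have hsr : s + r = m * (r+1) := by omega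
    have hzx : f^[s] (f^[r] x) = x := by
      rw [← Function.iterate_add_apply, hsr]; exact iter_period hx (r+1)
    have : f^[i] x = x := by
      rw [← hzx, ← Function.iterate_add_apply, Nat.add_comm, Function.iterate_add_apply, hcon, hzx]
    exact hl i hi him this

lemma Dbl_upper {f : ℝ → ℝ} (hm : MapsTo f (Icc (0:ℝ) 1) (Icc (0:ℝ) 1))
    {m : ℕ} (h : IsLP (Dbl f) m) : m = 1 ∨ ∃ p, IsLP f p ∧ m = 2*p := by
  rcases Nat.eq_zero_or_pos m with rfl | hm1
  · exact .inr ⟨0, isLP_zero f, rfl⟩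
  obtain ⟨x, hx, hxp, hxl⟩ := h
  have hIcc : ∀ t, (Dbl f)^[t] x ∈ Icc (0:ℝ) 1 := fun t => (Dbl_mapsTo hm).iterate t hx
  by_cases hmid : ∀ t, (Dbl f)^[t] x ∈ Ioo (1/4 : ℝ) (3/4)
  · left
    by_contra hne
    have hm2 : 2 ≤ m := by omega
    set s : ℝ := f 0 / 2 - 2 with hs
    have hf0 : f 0 ∈ Icc (0:ℝ) 1 := hm (by norm_num)
    have hsabs : 3/2 ≤ |s| := by
      rw [abs_of_nonpos (by rw [hs]; linarith [hf0.2])]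
      rw [hs]; linarith [hf0.2]
    have key : ∀ z, (∀ t, (Dbl f)^[t] z ∈ Ioo (1/4:ℝ) (3/4)) →
        ∀ t, (Dbl f)^[t] z = (fun y => 1 + (y - 1/4) * s)^[t] z := by
      intro z hz t
      induction t with
      | zero => simp
      | succ t ih =>
        rw [Function.iterate_succ_apply', Function.iterate_succ_apply', ← ih]
        have := hz t
        exact DblM this.1 (le_of_lt this.2)
    have hx1mid : ∀ t, (Dbl f)^[t] (Dbl f x) ∈ Ioo (1/4:ℝ) (3/4) := by
      intro t; rw [← Function.iterate_succ_apply]; exact hmid (t+1)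
    have e1 := key x hmid m
    have e2 := key (Dbl f x) hx1mid m
    have hfix : (Dbl f)^[m] (Dbl f x) = Dbl f x := by
      rw [← Function.iterate_succ_apply, Function.iterate_succ_apply', hxp]
    have hdiff := affine_iter_diff 0 s x (Dbl f x) m
    rw [← e1, ← e2, hxp, hfix] at hdiff
    have hsm : s^m ≠ 1 := pow_ne_one_of_abs hsabs (by omega)
    have h0 : (1 - s^m) * (x - Dbl f x) = 0 := by linear_combination hdiff
    have hxx : Dbl f x = x := by
      rcases mul_eq_zero.1 h0 with h | h
      · exact absurd (by linarith : s^m = 1) hsm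
      · linarith
    have := hxl 1 one_pos (by omega)
    rw [Function.iterate_one] at this
    exact this hxx
  · push_neg at hmid
    obtain ⟨t0, ht0⟩ := hmid
    have hzA : ∃ r, (Dbl f)^[r] x ∈ Icc (0:ℝ) (1/4) := by
      rcases le_or_gt ((Dbl f)^[t0] x) (1/4) with h | h
      · exact ⟨t0, (hIcc t0).1, h⟩
      · have hB : (Dbl f)^[t0] x ∈ Icc (3/4:ℝ) 1 := by
          constructor
          · by_contra hc
            exact ht0 ⟨h, by linarith⟩
          · exact (hIcc t0).2
        refine ⟨t0 + 1, ?_⟩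
        rw [Function.iterate_succ_apply']
        exact DblBA hm hB
    obtain ⟨r, hzA⟩ := hzA
    set z := (Dbl f)^[r] x with hz
    obtain ⟨hzp, hzl⟩ := lp_shift hxp hxl r
    rcases Nat.even_or_odd m with ⟨p, hp⟩ | ⟨p, hp⟩
    · right
      refine ⟨p, ⟨4*z, ⟨by linarith [hzA.1], by linarith [hzA.2]⟩, ?_, ?_⟩, by omega⟩
      · have h2 := (Dbl_even_iter hm hzA p).1
        rw [show 2*p = m by omega] at h2
        rw [h2] at hzp
        linarith [hzp]
      · intro i hi hip hcon
        have h2 := (Dbl_even_iter hm hzA i).1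
        rw [hcon] at h2
        have h3 : (Dbl f)^[2*i] z = z := by rw [h2]; ring
        exact hzl (2*i) (by omega) (by omega) h3
    · exfalso
      have h2 := Dbl_odd_iter hm hzA p
      rw [show 2*p+1 = m by omega, hzp] at h2
      linarith [hzA.2, h2.1]

noncomputable def DIt : ℕ → (ℝ → ℝ) → (ℝ → ℝ)
  | 0, f => f
  | d+1, f => Dbl (DIt d f)

lemma DIt_all (f : ℝ → ℝ) (hc : Continuous f) (hm : MapsTo f (Icc (0:ℝ) 1) (Icc (0:ℝ) 1)) :
    ∀ d, Continuous (DIt d f) ∧ MapsTo (DIt d f) (Icc (0:ℝ) 1) (Icc (0:ℝ) 1) ∧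
      (∀ p, IsLP f p → IsLP (DIt d f) (2^d * p)) ∧
      (∀ j, IsLP (DIt d f) j → (∃ e, e < d ∧ j = 2^e) ∨ ∃ p, IsLP f p ∧ j = 2^d * p) := by
  intro d; induction d with
  | zero => exact ⟨hc, hm, fun p hp => by simpa [DIt] using hp, fun j hj => .inr ⟨j, hj, by simp⟩⟩
  | succ d ih =>
    obtain ⟨ihc, ihm, ihlo, ihup⟩ := ih
    refine ⟨Dbl_cont ihc, Dbl_mapsTo ihm, ?_, ?_⟩
    · intro p hp
      have := Dbl_lower ihm (ihlo p hp)
      rwa [show 2*(2^d*p) = 2^(d+1)*p by ring] at this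
    · intro j hj
      rcases Dbl_upper ihm hj with rfl | ⟨p', hp', rfl⟩
      · exact .inl ⟨0, by omega, rfl⟩
      · rcases ihup p' hp' with ⟨e, he, rfl⟩ | ⟨p, hp, rfl⟩
        · exact .inl ⟨e+1, by omega, by ring⟩
        · exact .inr ⟨p, hp, by ring⟩

noncomputable def stf (n : ℕ) : ℝ → ℝ := fun x =>
  if x ≤ 2 then (n+1) + n * (x - 1)
  else if x ≤ n+1 then (2*n+3) - x
  else if x ≤ n+2 then (3*n+4) - 2*x
  else (2*n+2) - x

def oo (n r : ℕ) : ℕ := if r = 0 then n+1 else if r % 2 = 1 then n+1+(r+1)/2 else n+1-r/2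

def orb (n t : ℕ) : ℕ := oo n (t % (2*n+1))

lemma stf1 {n : ℕ} {x : ℝ} (h : x ≤ 2) : stf n x = (n+1) + n*(x-1) := if_pos h

lemma stf2 {n : ℕ} {x : ℝ} (h1 : 2 < x) (h2 : x ≤ n+1) : stf n x = (2*n+3) - x := by
  unfold stf; rw [if_neg (by linarith), if_pos h2]

lemma stf3 {n : ℕ} {x : ℝ} (h1 : 2 < x) (h2 : (n:ℝ)+1 < x) (h3 : x ≤ n+2) :
    stf n x = (3*n+4) - 2*x := by
  unfold stf; rw [if_neg (by linarith), if_neg (by linarith), if_pos h3]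

lemma stf4 {n : ℕ} {x : ℝ} (hn : 1 ≤ n) (h : (n:ℝ)+2 < x) : stf n x = (2*n+2) - x := by
  have hn' : (1:ℝ) ≤ n := by exact_mod_cast hn
  unfold stf; rw [if_neg (by linarith), if_neg (by linarith), if_neg (by linarith)]

lemma stf_cont {n : ℕ} (hn : 1 ≤ n) : Continuous (stf n) := by
  have hn' : (1:ℝ) ≤ n := by exact_mod_cast hn
  have c3 : Continuous (fun x : ℝ =>
      if x ≤ (n:ℝ)+2 then (3*n+4) - 2*x else (2*n+2) - x) := by
    apply Continuous.if_le (by continuity) (by continuity) continuous_id continuous_const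
    intro x hx; simp only [id_eq] at hx; subst hx; ring
  have c2 : Continuous (fun x : ℝ => if x ≤ (n:ℝ)+1 then (2*n+3) - x
      else if x ≤ (n:ℝ)+2 then (3*n+4) - 2*x else (2*n+2) - x) := by
    apply Continuous.if_le (by continuity) c3 continuous_id continuous_const
    intro x hx; simp only [id_eq] at hx; subst hx
    rw [if_pos (by linarith : (n:ℝ)+1 ≤ (n:ℝ)+2)]; ring
  unfold stf
  apply Continuous.if_le (by continuity) c2 continuous_id continuous_const
  intro x hx; simp only [id_eq] at hx; subst hx
  rw [if_pos (by linarith : (2:ℝ) ≤ (n:ℝ)+1)]; ring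

lemma stf_mapsTo {n : ℕ} (hn : 1 ≤ n) :
    MapsTo (stf n) (Icc (1:ℝ) (2*n+1)) (Icc (1:ℝ) (2*n+1)) := by
  have hn' : (1:ℝ) ≤ n := by exact_mod_cast hn
  intro x hx
  obtain ⟨hx1, hx2⟩ := hx
  rcases le_or_gt x 2 with h | h
  · rw [stf1 h]; constructor <;> nlinarith
  · rcases le_or_gt x ((n:ℝ)+1) with h2 | h2
    · rw [stf2 h h2]; constructor <;> nlinarith
    · rcases le_or_gt x ((n:ℝ)+2) with h3 | h3
      · rw [stf3 h h2 h3]; constructor <;> nlinarith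
      · rw [stf4 hn h3]; constructor <;> nlinarith

lemma oo_zero (n : ℕ) : oo n 0 = n+1 := by simp [oo]

lemma oo_odd (n j : ℕ) : oo n (2*j+1) = n+2+j := by
  unfold oo
  rw [if_neg (by omega : ¬(2*j+1 = 0)), if_pos (by omega : (2*j+1) % 2 = 1)]
  omega

lemma oo_even (n j : ℕ) (h1 : 1 ≤ j) : oo n (2*j) = n+1-j := by
  unfold oo
  rw [if_neg (by omega : ¬(2*j = 0)), if_neg (by omega : ¬((2*j) % 2 = 1))]
  omega

lemma oo_mem (n r : ℕ) (hn : 1 ≤ n) (hr : r < 2*n+1) : 1 ≤ oo n r ∧ oo n r ≤ 2*n+1 := by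
  unfold oo; split_ifs <;> omega

lemma orb_mem (n : ℕ) (hn : 1 ≤ n) (t : ℕ) : 1 ≤ orb n t ∧ orb n t ≤ 2*n+1 :=
  oo_mem n _ hn (Nat.mod_lt _ (by omega))

lemma succ_mod (n t : ℕ) (hn : 1 ≤ n) : (t+1) % (2*n+1) = (t % (2*n+1) + 1) % (2*n+1) := by
  conv_lhs => rw [Nat.add_mod]
  have hlt : (1:ℕ) < 2*n+1 := by omega
  have h1 : 1 % (2*n+1) = 1 := Nat.mod_eq_of_lt hlt
  rw [h1]

lemma stf_step (n : ℕ) (hn : 1 ≤ n) (t : ℕ) :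
    stf n (orb n t : ℕ) = (orb n (t+1) : ℕ) := by
  have hn' : (1:ℝ) ≤ n := by exact_mod_cast hn
  have hq : 0 < 2*n+1 := by omega
  set r := t % (2*n+1) with hr
  have hrlt : r < 2*n+1 := Nat.mod_lt _ hq
  have horb : orb n t = oo n r := rfl
  have horb1 : orb n (t+1) = oo n ((r+1) % (2*n+1)) := by
    unfold orb; rw [succ_mod n t hn, ← hr]
  rw [horb, horb1]
  rcases Nat.eq_zero_or_pos r with hr0 | hr0
  · rw [hr0, oo_zero]
    have h2 : (0+1) % (2*n+1) = 2*0+1 := Nat.mod_eq_of_lt (by omega)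
    rw [h2, oo_odd]
    rcases eq_or_lt_of_le hn with h | h
    · rw [← h]; norm_num [stf]
    · have h2n : (2:ℝ) ≤ n := by exact_mod_cast h
      push_cast
      rw [stf2 (by linarith) (by linarith)]
      ring
  · rcases Nat.even_or_odd r with ⟨j, hj⟩ | ⟨j, hj⟩
    · -- r = 2j, j ≥ 1
      have hj1 : 1 ≤ j := by omega
      have hrj : r = 2*j := by omega
      have hjn : j ≤ n := by omega
      rw [hrj, oo_even n j hj1]
      rcases eq_or_lt_of_le hjn with hje | hjlt
      · -- j = n : value 1, next = n+1
        rw [hje]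
        have hv : n+1-n = 1 := by omega
        rw [hv]
        have : (2*n+1) % (2*n+1) = 0 := Nat.mod_self _
        rw [show 2*n+1 = 2*n+1 from rfl] at this
        have h2 : (2*n+1) % (2*n+1) = 0 := Nat.mod_self _
        rw [show (2*n)+1 = 2*n+1 from rfl, h2, oo_zero]
        push_cast
        rw [stf1 (by linarith)]
        ring
      · -- j < n : value n+1-j ∈ [2,n], next = n+2+j
        obtain ⟨v, hv⟩ : ∃ v, n+1-j = v ∧ v + j = n + 1 := ⟨n+1-j, rfl, by omega⟩
        obtain ⟨hv1, hv2⟩ := hv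
        rw [hv1]
        have h2 : (2*j+1) % (2*n+1) = 2*j+1 := Nat.mod_eq_of_lt (by omega)
        rw [h2, oo_odd]
        have hvn : 2 ≤ v ∧ v ≤ n := by omega
        have hvr : (v:ℝ) + j = n + 1 := by exact_mod_cast hv2
        have hjr : (0:ℝ) ≤ j := by positivity
        rcases eq_or_lt_of_le hvn.1 with hve | hvlt
        · -- v = 2, branch1
          rw [← hve]
          push_cast
          rw [stf1 (by norm_num)]
          have : (j:ℝ) = n - 1 := by
            have h2v : (v:ℝ) = 2 := by exact_mod_cast hve.symm
            linarith
          rw [this]; ring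
        · have hvr2 : (2:ℝ) < v := by exact_mod_cast hvlt
          have hvrn : (v:ℝ) ≤ n := by exact_mod_cast hvn.2
          push_cast
          rw [stf2 hvr2 (by linarith)]
          linarith [hvr]
    · -- r = 2j+1, value n+2+j, next : r+1 = 2(j+1) ≤ 2n
      have hrj : r = 2*j+1 := hj
      have hjn : j + 1 ≤ n := by omega
      rw [hrj, oo_odd]
      have h2 : (2*j+1+1) % (2*n+1) = 2*(j+1) := Nat.mod_eq_of_lt (by omega)
      rw [h2, oo_even n (j+1) (by omega)]
      obtain ⟨v, hv1, hv2⟩ : ∃ v, n+1-(j+1) = v ∧ v + (j+1) = n + 1 := ⟨n+1-(j+1), rfl, by omega⟩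
      rw [hv1]
      have hvr : (v:ℝ) + (j+1) = n + 1 := by exact_mod_cast hv2
      rcases Nat.eq_zero_or_pos j with hj0 | hj0
      · -- j = 0 : value n+2, branch3
        rw [hj0]
        push_cast
        rw [stf3 (by linarith) (by linarith) (by norm_num)]
        have : (v:ℝ) = n := by rw [hj0] at hvr; push_cast at hvr; linarith
        rw [this]; ring
      · -- j ≥ 1 : value n+2+j > n+2, branch4
        have hjr : (1:ℝ) ≤ j := by exact_mod_cast hj0
        push_cast
        rw [stf4 hn (by linarith)]
        linarith [hvr]

lemma oo_inj (n : ℕ) {r s : ℕ} (hr : r < 2*n+1) (hs : s < 2*n+1)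
    (h : oo n r = oo n s) : r = s := by
  unfold oo at h; split_ifs at h <;> omega

lemma stf_iter (n : ℕ) (hn : 1 ≤ n) (s : ℕ) :
    ∀ t, (stf n)^[t] ((orb n s : ℕ) : ℝ) = ((orb n (s+t) : ℕ) : ℝ) := by
  intro t; induction t with
  | zero => simp
  | succ t ih =>
    rw [Function.iterate_succ_apply', ih, stf_step n hn (s+t)]
    norm_num [Nat.add_assoc]

lemma orb_surj (n : ℕ) (hn : 1 ≤ n) {i : ℕ} (h1 : 1 ≤ i) (h2 : i ≤ 2*n+1) :
    ∃ t, t < 2*n+1 ∧ orb n t = i := by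
  rcases Nat.lt_or_ge i (n+1) with h | h
  · refine ⟨2*(n+1-i), by omega, ?_⟩
    unfold orb
    rw [Nat.mod_eq_of_lt (by omega), oo_even n (n+1-i) (by omega)]
    omega
  · rcases Nat.eq_or_lt_of_le h with h' | h'
    · exact ⟨0, by omega, by unfold orb; rw [Nat.mod_eq_of_lt (by omega), oo_zero]; omega⟩
    · refine ⟨2*(i-n-2)+1, by omega, ?_⟩
      unfold orb
      rw [Nat.mod_eq_of_lt (by omega), oo_odd]
      omega

lemma orb_modeq (n : ℕ) (hn : 1 ≤ n) {u m : ℕ} (h : orb n (u+m) = orb n u) :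
    (2*n+1) ∣ m := by
  unfold orb at h
  have h1 : (u + m) % (2*n+1) = u % (2*n+1) :=
    oo_inj n (Nat.mod_lt (u+m) (by omega)) (Nat.mod_lt u (by omega)) h
  have h2 : u + m ≡ u + 0 [MOD 2*n+1] := by rw [Nat.add_zero]; exact h1
  have h3 : m ≡ 0 [MOD 2*n+1] := Nat.ModEq.add_left_cancel' u h2
  exact (Nat.modEq_zero_iff_dvd).1 h3

lemma stf_lp_q (n : ℕ) (hn : 1 ≤ n) :
    (stf n)^[2*n+1] ((n:ℝ)+1) = (n:ℝ)+1 ∧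
    ∀ i, 0 < i → i < 2*n+1 → (stf n)^[i] ((n:ℝ)+1) ≠ (n:ℝ)+1 := by
  have h0 : ((orb n 0 : ℕ) : ℝ) = (n:ℝ)+1 := by
    unfold orb; rw [Nat.zero_mod, oo_zero]; push_cast; ring
  constructor
  · have he : orb n (0+(2*n+1)) = orb n 0 := by
      unfold orb; rw [Nat.zero_add, Nat.mod_self, Nat.zero_mod]
    rw [← h0, stf_iter n hn 0 (2*n+1), he, h0]
  · intro i hi hiq hcon
    rw [← h0, stf_iter n hn 0 i] at hcon
    have : orb n (0+i) = (n+1 : ℕ) := by exact_mod_cast hcon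
    unfold orb at this
    rw [Nat.mod_eq_of_lt (by omega)] at this
    unfold oo at this
    split_ifs at this <;> omega

def Edge (n i j : ℕ) : Prop :=
  (i = 1 ∧ n+1 ≤ j ∧ j ≤ 2*n) ∨
  (2 ≤ i ∧ i ≤ n ∧ j = 2*n+2-i) ∨
  (i = n+1 ∧ (j = n ∨ j = n+1)) ∨
  (n+2 ≤ i ∧ i ≤ 2*n ∧ j = 2*n+1-i)

def lvl (n i : ℕ) : ℕ := if i ≤ n then 2*(n+1-i) - 1 else 2*(i-(n+1))

def zct (n : ℕ) (a : ℕ → ℕ) : ℕ → ℕ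
  | 0 => 0
  | t+1 => zct n a t + (if a t = n+1 ∧ a (t+1) = n+1 then 1 else 0)

lemma lvl_center (n : ℕ) : lvl n (n+1) = 0 := by
  unfold lvl; rw [if_neg (by omega)]; omega

lemma edge_class (n : ℕ) (hn : 1 ≤ n) {i j : ℕ} (h : Edge n i j) :
    (lvl n j = lvl n i + 1) ∨ (i = n+1 ∧ j = n+1) ∨
    (lvl n i = 2*n-1 ∧ lvl n j % 2 = 0) := by
  unfold Edge at h
  unfold lvl
  split_ifs <;> omega

lemma zct_ge_one {n : ℕ} {a : ℕ → ℕ} :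
    ∀ m, 1 ≤ zct n a m → ∃ t, t < m ∧ a t = n+1 ∧ a (t+1) = n+1 := by
  intro m
  induction m with
  | zero => intro h; simp [zct] at h
  | succ m ih =>
    intro h
    by_cases hz : a m = n+1 ∧ a (m+1) = n+1
    · exact ⟨m, by omega, hz⟩
    · rw [zct, if_neg hz] at h
      obtain ⟨t, ht, h2⟩ := ih (by omega)
      exact ⟨t, by omega, h2⟩

lemma graph_lemma (n : ℕ) (hn : 1 ≤ n) (a : ℕ → ℕ)
    (hedge : ∀ t, Edge n (a t) (a (t+1)))
    {m : ℕ} (hper : ∀ t, a (t+m) = a t) (hmo : Odd m) (hm1 : 1 < m)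
    (hmq : m < 2*n+1) : ∀ t, a t = n+1 := by
  set b : ℕ → ℕ := fun t => lvl n (a t) with hb
  -- invariant
  have hinv : ∀ t, (b t + t + zct n a t) % 2 = b 0 % 2 := by
    intro t; induction t with
    | zero => rfl
    | succ t ih =>
      by_cases hz : a t = n+1 ∧ a (t+1) = n+1
      · have hb1 : b t = 0 := by rw [hb]; simp only; rw [hz.1, lvl_center]
        have hb2 : b (t+1) = 0 := by rw [hb]; simp only; rw [hz.2, lvl_center]
        rw [zct, if_pos hz]
        omega
      · rw [zct, if_neg hz]
        rcases edge_class n hn (hedge t) with h | h | h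
        · have : b (t+1) = b t + 1 := h
          omega
        · exact absurd h hz
        · have h1 : b t = 2*n-1 := h.1
          have h2 : b (t+1) % 2 = 0 := h.2
          omega
  -- b is periodic
  have hbper : ∀ t, b (t+m) = b t := fun t => by rw [hb]; simp only [hper t]
  have haper : ∀ k t, a (t + k*m) = a t := by
    intro k; induction k with
    | zero => simp
    | succ k ih =>
      intro t
      have : t + (k+1)*m = (t + k*m) + m := by ring
      rw [this, hper, ih]
  -- zct over one period is odd
  have hz1 : ∃ t0, t0 < m ∧ a t0 = n+1 ∧ a (t0+1) = n+1 := by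
    apply zct_ge_one m
    have h1 := hinv m
    have h2 : b m = b 0 := by have := hper 0; rw [hb]; simp only; rw [Nat.zero_add] at this; rw [this]
    have hmodd : m % 2 = 1 := Nat.odd_iff.1 hmo
    omega
  obtain ⟨t0, ht0m, ht01, ht02⟩ := hz1
  have hba : ∀ u v, a u = a v → b u = b v := by
    intro u v h; rw [hb]; simp only; rw [h]
  by_cases hJ : ∃ s, b s = 2*n-1
  · exfalso
    obtain ⟨sstar, hsstar⟩ := hJ
    have hcm : m*(t0+1) = (t0+1)*m := Nat.mul_comm _ _
    have h1 : t0+1 + (sstar + m*(t0+1) - (t0+1)) = sstar + (t0+1)*m := by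
      have h2 : t0 + 1 ≤ m*(t0+1) := by nlinarith
      omega
    have hP : ∃ r, b (t0+1+r) = 2*n-1 := by
      refine ⟨sstar + m*(t0+1) - (t0+1), ?_⟩
      rw [h1, hba _ _ (haper (t0+1) sstar), hsstar]
    set r' := Nat.find hP with hr'
    have hPr' : b (t0+1+r') = 2*n-1 := Nat.find_spec hP
    have hmin : ∀ r, r < r' → b (t0+1+r) ≠ 2*n-1 := fun r hr => Nat.find_min hP hr
    -- there is a witness < m
    have hrm : r' < m := by
      set w := sstar + m*(t0+1) - (t0+1) with hw
      have hww : b (t0+1+w) = 2*n-1 := by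
        rw [h1, hba _ _ (haper (t0+1) sstar), hsstar]
      have hwm : b (t0+1+(w % m)) = 2*n-1 := by
        have h2 : (t0+1+(w % m)) + (w/m)*m = t0+1+w := by
          have h3 := Nat.mod_add_div w m
          have h4 : (w/m)*m = m*(w/m) := Nat.mul_comm _ _
          omega
        rw [← hww, ← h2, hba _ _ (haper (w/m) (t0+1+(w % m)))]
      have hle : r' ≤ w % m := Nat.find_min' hP hwm
      have hlt : w % m < m := Nat.mod_lt _ (by omega)
      omega
    -- climb
    have hclimb : ∀ r, r ≤ r' → b (t0+1+r) ≤ r := by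
      intro r
      induction r with
      | zero =>
        intro _
        have h0' : b (t0+1+0) = 0 := by
          rw [Nat.add_zero, hb]; simp only; rw [ht02, lvl_center]
        omega
      | succ r ih =>
        intro hle
        have hbr : b (t0+1+r) ≤ r := ih (by omega)
        have hne : b (t0+1+r) ≠ 2*n-1 := hmin r (by omega)
        rcases edge_class n hn (hedge (t0+1+r)) with h | h | h
        · have : b (t0+1+(r+1)) = b (t0+1+r) + 1 := by
            rw [show t0+1+(r+1) = (t0+1+r)+1 by ring]; exact h
          omega
        · have : b (t0+1+(r+1)) = 0 := by
            rw [show t0+1+(r+1) = (t0+1+r)+1 by ring, hb]; simp only; rw [h.2, lvl_center]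
          omega
        · exact absurd h.1 hne
    have hfin := hclimb r' le_rfl
    rw [hPr'] at hfin
    have hmodd : m % 2 = 1 := Nat.odd_iff.1 hmo
    omega
  · push_neg at hJ
    -- all steps are increments or stays; b monotone
    have hstep : ∀ t, b (t+1) = b t + 1 ∨ (a t = n+1 ∧ a (t+1) = n+1) := by
      intro t
      rcases edge_class n hn (hedge t) with h | h | h
      · exact .inl h
      · exact .inr h
      · exact absurd h.1 (hJ t)
    have hmono : ∀ s k, b s ≤ b (s+k) := by
      intro s k; induction k with
      | zero => simp
      | succ k ih =>
        rcases hstep (s+k) with h | h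
        · rw [show s+(k+1) = (s+k)+1 by ring, h]; omega
        · have h1 : b (s+k) = 0 := by rw [hb]; simp only; rw [h.1, lvl_center]
          have h2 : b (s+(k+1)) = 0 := by
            rw [show s+(k+1) = (s+k)+1 by ring, hb]; simp only; rw [h.2, lvl_center]
          omega
    -- no increment can occur
    intro t
    rcases hstep t with h | h
    · exfalso
      have h1 : b (t+1) ≤ b (t+1+(m-1)) := hmono (t+1) (m-1)
      have h2 : t+1+(m-1) = t+m := by omega
      rw [h2, hbper t] at h1
      omega
    · exact h.1

lemma iter_period' {f : ℝ → ℝ} {x : ℝ} {m : ℕ} (h : f^[m] x = x) :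
    ∀ N, f^[m*N] x = x := by
  intro N; induction N with
  | zero => simp
  | succ N ih => rw [Nat.mul_succ, Function.iterate_add_apply, h, ih]

lemma stf_no_odd (n : ℕ) (hn : 1 ≤ n) {m : ℕ} (hmo : Odd m) (hm1 : 1 < m)
    (hmq : m < 2*n+1) {x : ℝ} (hx : x ∈ Icc (1:ℝ) (2*n+1))
    (hxp : (stf n)^[m] x = x)
    (hxl : ∀ i, 0 < i → i < m → (stf n)^[i] x ≠ x) : False := by
  have hn' : (1:ℝ) ≤ n := by exact_mod_cast hn
  have hIcc : ∀ t, (stf n)^[t] x ∈ Icc (1:ℝ) (2*n+1) :=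
    fun t => (stf_mapsTo hn).iterate t hx
  by_cases hint : ∃ t, ∃ i : ℕ, (stf n)^[t] x = (i:ℝ)
  · -- integer orbit case
    obtain ⟨t, i, hti⟩ := hint
    have hmem := hIcc t
    rw [hti] at hmem
    have hi1 : 1 ≤ i := by
      have := hmem.1; exact_mod_cast this
    have hi2 : i ≤ 2*n+1 := by
      have := hmem.2; exact_mod_cast this
    obtain ⟨s, _, hsorb⟩ := orb_surj n hn hi1 hi2
    have hmt : t ≤ m*(t+1) := by nlinarith
    have hxint : x = ((orb n (s + (m*(t+1) - t)) : ℕ) : ℝ) := by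
      have h1 : (stf n)^[m*(t+1) - t] ((stf n)^[t] x) = x := by
        rw [← Function.iterate_add_apply, show m*(t+1) - t + t = m*(t+1) by omega]
        exact iter_period' hxp (t+1)
      rw [← h1, hti, show (i:ℝ) = ((orb n s : ℕ) : ℝ) by rw [hsorb]]
      rw [stf_iter n hn s (m*(t+1)-t)]
    have h2 : (stf n)^[m] ((orb n (s + (m*(t+1)-t)) : ℕ) : ℝ)
        = ((orb n (s + (m*(t+1)-t) + m) : ℕ) : ℝ) := stf_iter n hn _ m
    rw [hxint, h2] at hxp
    have h3 : orb n (s + (m*(t+1)-t) + m) = orb n (s + (m*(t+1)-t)) := by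
      exact_mod_cast hxp
    have h4 := orb_modeq n hn h3
    have := Nat.le_of_dvd (by omega) h4
    omega
  · -- non-integer orbit: itinerary
    push_neg at hint
    set a : ℕ → ℕ := fun t => (⌊(stf n)^[t] x⌋).toNat with ha
    have hfl : ∀ t, ((a t : ℝ) < (stf n)^[t] x ∧ (stf n)^[t] x < (a t) + 1 ∧
        1 ≤ a t ∧ a t ≤ 2*n) := by
      intro t
      have hm1' := (hIcc t).1
      have hm2' := (hIcc t).2
      have hq : (stf n)^[t] x < 2*n+1 := by
        rcases lt_or_eq_of_le hm2' with h | h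
        · exact h
        · exfalso; exact hint t (2*n+1) (by rw [h]; push_cast; ring)
      have hfl1 : (1:ℤ) ≤ ⌊(stf n)^[t] x⌋ := by
        rw [Int.le_floor]; exact_mod_cast hm1'
      have hfl2 : ⌊(stf n)^[t] x⌋ < 2*n+1 := by
        rw [Int.floor_lt]; push_cast; exact hq
      have h00 : (0:ℤ) ≤ ⌊(stf n)^[t] x⌋ := by omega
      have h01 : ((⌊(stf n)^[t] x⌋.toNat : ℕ) : ℤ) = ⌊(stf n)^[t] x⌋ :=
        Int.toNat_of_nonneg h00
      have hcast : ((a t : ℕ) : ℝ) = ((⌊(stf n)^[t] x⌋ : ℤ) : ℝ) := by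
        rw [ha]; simp only
        exact_mod_cast h01
      refine ⟨?_, ?_, ?_, ?_⟩
      · have hle : ((a t : ℕ):ℝ) ≤ (stf n)^[t] x := by
          rw [hcast]; exact Int.floor_le _
        exact lt_of_le_of_ne hle (Ne.symm (hint t (a t)))
      · have := Int.lt_floor_add_one ((stf n)^[t] x)
        rw [hcast]; push_cast at this ⊢; linarith
      · rw [ha]; simp only; omega
      · rw [ha]; simp only; omega
    have hedge : ∀ t, Edge n (a t) (a (t+1)) := by
      intro t
      obtain ⟨hl1, hl2, hl3, hl4⟩ := hfl t
      obtain ⟨hr1, hr2, hr3, hr4⟩ := hfl (t+1)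
      set y := (stf n)^[t] x with hy
      have hyy : (stf n)^[t+1] x = stf n y := Function.iterate_succ_apply' (stf n) t x
      rw [hyy] at hr1 hr2
      have hi1' : (1:ℝ) ≤ (a t : ℝ) := by exact_mod_cast hl3
      have hcase : a t = 1 ∨ (2 ≤ a t ∧ a t ≤ n) ∨ a t = n+1 ∨
          (n+2 ≤ a t ∧ a t ≤ 2*n) := by omega
      rcases hcase with hc | hc | hc | hc
      · -- branch 1
        have hy2 : y < 2 := by
          have : ((a t : ℕ):ℝ) = 1 := by rw [hc]; norm_num
          rw [this] at hl2; linarith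
        have hy1 : 1 < y := by
          have : ((a t : ℕ):ℝ) = 1 := by rw [hc]; norm_num
          rw [this] at hl1; linarith
        have hv : stf n y = (n+1) + n*(y-1) := stf1 (le_of_lt hy2)
        have hv1 : (n:ℝ)+1 < stf n y := by rw [hv]; nlinarith
        have hv2 : stf n y < 2*n+1 := by rw [hv]; nlinarith
        have hj1 : n < a (t+1) := by
          have : (n:ℝ) < ((a (t+1) : ℕ):ℝ) := by linarith
          exact_mod_cast this
        have hj2 : a (t+1) < 2*n+1 := by
          have : ((a (t+1) : ℕ):ℝ) < ((2*n+1 : ℕ):ℝ) := by push_cast; linarith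
          exact_mod_cast this
        exact Or.inl ⟨hc, by omega, by omega⟩
      · -- branch 2
        have hy1 : 2 < y := by
          have : (2:ℝ) ≤ ((a t : ℕ):ℝ) := by exact_mod_cast hc.1
          linarith
        have hy2 : y < (n:ℝ)+1 := by
          have : ((a t : ℕ):ℝ) + 1 ≤ (n:ℝ)+1 := by
            have : ((a t : ℕ):ℝ) ≤ (n:ℝ) := by exact_mod_cast hc.2
            linarith
          linarith
        have hv : stf n y = (2*n+3) - y := stf2 hy1 (le_of_lt hy2)
        have hA : (a (t+1) : ℝ) + (a t : ℝ) < 2*n+3 := by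
          rw [hv] at hr1; linarith
        have hB : (2*(n:ℝ)+1) < (a (t+1) : ℝ) + (a t : ℝ) := by
          rw [hv] at hr2; linarith
        have hA' : a (t+1) + a t < 2*n+3 := by exact_mod_cast (by push_cast; linarith : ((a (t+1) + a t : ℕ):ℝ) < ((2*n+3 : ℕ):ℝ))
        have hB' : 2*n+1 < a (t+1) + a t := by exact_mod_cast (by push_cast; linarith : ((2*n+1 : ℕ):ℝ) < ((a (t+1) + a t : ℕ):ℝ))
        exact Or.inr (Or.inl ⟨hc.1, hc.2, by omega⟩)
      · -- branch 3
        have hy1 : (n:ℝ)+1 < y := by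
          have : ((a t : ℕ):ℝ) = (n:ℝ)+1 := by rw [hc]; push_cast; ring
          rw [this] at hl1; linarith
        have hy2 : y < (n:ℝ)+2 := by
          have : ((a t : ℕ):ℝ) = (n:ℝ)+1 := by rw [hc]; push_cast; ring
          rw [this] at hl2; linarith
        have hv : stf n y = (3*n+4) - 2*y := stf3 (by linarith) hy1 (le_of_lt hy2)
        have hA : ((a (t+1) : ℕ):ℝ) < (n:ℝ)+2 := by rw [hv] at hr1; linarith
        have hB : (n:ℝ) < ((a (t+1) : ℕ):ℝ) + 1 := by rw [hv] at hr2; linarith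
        have hA' : a (t+1) < n+2 := by exact_mod_cast (by push_cast; linarith : ((a (t+1) : ℕ):ℝ) < ((n+2 : ℕ):ℝ))
        have hB' : n < a (t+1) + 1 := by exact_mod_cast (by push_cast; linarith : ((n:ℕ):ℝ) < ((a (t+1) + 1 : ℕ):ℝ))
        exact Or.inr (Or.inr (Or.inl ⟨hc, by omega⟩))
      · -- branch 4
        have hy1 : (n:ℝ)+2 < y := by
          have : (n:ℝ)+2 ≤ ((a t : ℕ):ℝ) := by exact_mod_cast hc.1
          linarith
        have hv : stf n y = (2*n+2) - y := stf4 hn hy1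
        have hA : (a (t+1) : ℝ) + (a t : ℝ) < 2*n+2 := by
          rw [hv] at hr1; linarith
        have hB : (2*(n:ℝ)) < (a (t+1) : ℝ) + (a t : ℝ) := by
          rw [hv] at hr2
          have : ((a t : ℕ):ℝ) ≤ 2*(n:ℝ) := by exact_mod_cast hc.2
          linarith
        have hA' : a (t+1) + a t < 2*n+2 := by exact_mod_cast (by push_cast; linarith : ((a (t+1) + a t : ℕ):ℝ) < ((2*n+2 : ℕ):ℝ))
        have hB' : 2*n < a (t+1) + a t := by exact_mod_cast (by push_cast; linarith : ((2*n : ℕ):ℝ) < ((a (t+1) + a t : ℕ):ℝ))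
        exact Or.inr (Or.inr (Or.inr ⟨hc.1, hc.2, by omega⟩))
    have haperm : ∀ t, a (t+m) = a t := by
      intro t
      rw [ha]; simp only
      rw [Function.iterate_add_apply, hxp]
    have hcen := graph_lemma n hn a hedge haperm hmo hm1 hmq
    -- all iterates in (n+1, n+2); stf is affine there
    have hmid : ∀ t, (n:ℝ)+1 < (stf n)^[t] x ∧ (stf n)^[t] x < (n:ℝ)+2 := by
      intro t
      obtain ⟨h1, h2, _, _⟩ := hfl t
      rw [hcen t] at h1 h2
      push_cast at h1 h2
      exact ⟨by linarith, by linarith⟩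
    have hLstep : ∀ t, (stf n)^[t+1] x = (3*(n:ℝ)+4) - 2*((stf n)^[t] x) := by
      intro t
      rw [Function.iterate_succ_apply']
      exact stf3 (by linarith [(hmid t).1]) (hmid t).1 (le_of_lt (hmid t).2)
    set L : ℝ → ℝ := fun y => (3*(n:ℝ)+4) - 2*y with hL
    have hdiff : ∀ (t : ℕ) (u v : ℝ), L^[t] u - L^[t] v = (-2)^t * (u - v) := by
      intro t
      induction t with
      | zero => intro u v; simp
      | succ t ih =>
        intro u v
        rw [Function.iterate_succ_apply, Function.iterate_succ_apply, ih]
        have : L u = (3*(n:ℝ)+4) - 2*u := rfl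
        rw [this, show L v = (3*(n:ℝ)+4) - 2*v from rfl, pow_succ]
        ring
    have hL1 : ∀ t, (stf n)^[t] x = L^[t] x := by
      intro t; induction t with
      | zero => simp
      | succ t ih =>
        rw [hLstep t, ih, Function.iterate_succ_apply']
    have hfix1 : L^[m] x = x := by rw [← hL1, hxp]
    have h3 : stf n x = L x := by
      have := hLstep 0
      simpa using this
    have hfix2 : L^[m] (L x) = L x := by
      have h1 : (stf n)^[m+1] x = L^[m+1] x := hL1 (m+1)
      have h2 : (stf n)^[m+1] x = stf n x := by
        rw [Function.iterate_succ_apply', hxp]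
      have h4 : L^[m+1] x = L^[m] (L x) := Function.iterate_succ_apply L m x
      rw [← h4, ← h1, h2]
      exact h3
    have hd := hdiff m x (L x)
    rw [hfix1, hfix2] at hd
    have hne1 : ((-2:ℝ))^m ≠ 1 := by
      intro h
      have h1 : |(-2:ℝ)^m| = 1 := by rw [h]; norm_num
      rw [abs_pow] at h1
      norm_num at h1
      have : (2:ℝ)^1 ≤ 2^m := pow_le_pow_right₀ (by norm_num) (by omega)
      rw [h1] at this
      norm_num at this
    have h0 : (1 - (-2:ℝ)^m) * (x - L x) = 0 := by linear_combination hd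
    have hxLx : L x = x := by
      rcases mul_eq_zero.1 h0 with h | h
      · exact absurd (by linarith : (-2:ℝ)^m = 1) hne1
      · linarith
    have := hxl 1 one_pos (by omega)
    rw [Function.iterate_one] at this
    exact this (h3.trans hxLx)


noncomputable def stg (n : ℕ) : ℝ → ℝ := fun x => (stf n (2*n*x + 1) - 1) / (2*n)

lemma stg_iter (n : ℕ) (hn : 1 ≤ n) (x : ℝ) :
    ∀ t, (stg n)^[t] x = ((stf n)^[t] (2*n*x + 1) - 1) / (2*n) := by
  have hn0 : (0:ℝ) < 2*n := by
    have : (1:ℝ) ≤ n := by exact_mod_cast hn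
    linarith
  intro t; induction t with
  | zero => simp; field_simp
  | succ t ih =>
    rw [Function.iterate_succ_apply', ih]
    unfold stg
    rw [Function.iterate_succ_apply']
    congr 2
    field_simp
    rw [sub_add_cancel]

lemma stg_cont (n : ℕ) (hn : 1 ≤ n) : Continuous (stg n) := by
  unfold stg
  exact (((stf_cont hn).comp (by continuity)).sub continuous_const).div_const _

lemma stg_mem (n : ℕ) (hn : 1 ≤ n) {x : ℝ} (hx : x ∈ Icc (0:ℝ) 1) :
    2*(n:ℝ)*x + 1 ∈ Icc (1:ℝ) (2*n+1) := by
  have hn' : (1:ℝ) ≤ n := by exact_mod_cast hn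
  constructor
  · nlinarith [hx.1]
  · nlinarith [hx.2]

lemma stg_mapsTo (n : ℕ) (hn : 1 ≤ n) :
    MapsTo (stg n) (Icc (0:ℝ) 1) (Icc (0:ℝ) 1) := by
  have hn' : (1:ℝ) ≤ n := by exact_mod_cast hn
  intro x hx
  have h1 := stf_mapsTo hn (stg_mem n hn hx)
  unfold stg
  have hpos : (0:ℝ) < 2*n := by linarith
  constructor
  · have h2 := h1.1
    have : (0:ℝ) ≤ stf n (2*n*x+1) - 1 := by linarith
    positivity
  · have h2 := h1.2
    rw [div_le_one hpos]
    linarith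

lemma stg_lp_q (n : ℕ) (hn : 1 ≤ n) : IsLP (stg n) (2*n+1) := by
  have hn' : (1:ℝ) ≤ n := by exact_mod_cast hn
  have hpos : (0:ℝ) < 2*n := by linarith
  obtain ⟨hq, hleast⟩ := stf_lp_q n hn
  refine ⟨(n:ℝ)/(2*n), ⟨by positivity, by rw [div_le_one hpos]; linarith⟩, ?_, ?_⟩
  · rw [stg_iter n hn _ (2*n+1)]
    rw [show 2*(n:ℝ)*((n:ℝ)/(2*n)) + 1 = (n:ℝ)+1 by field_simp]
    rw [hq]
    field_simp
    ring
  · intro i hi hiq hcon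
    rw [stg_iter n hn _ i,
      show 2*(n:ℝ)*((n:ℝ)/(2*n)) + 1 = (n:ℝ)+1 by field_simp] at hcon
    apply hleast i hi hiq
    have : ((stf n)^[i] ((n:ℝ)+1) - 1)/(2*n) = (n:ℝ)/(2*n) := hcon
    field_simp at this
    linarith

lemma stg_no_odd (n : ℕ) (hn : 1 ≤ n) {m : ℕ} (hmo : Odd m) (hm1 : 1 < m)
    (hmq : m < 2*n+1) : ¬ IsLP (stg n) m := by
  have hn' : (1:ℝ) ≤ n := by exact_mod_cast hn
  have hpos : (0:ℝ) < 2*n := by linarith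
  rintro ⟨y, hy, hyp, hyl⟩
  set u := 2*(n:ℝ)*y + 1 with hu
  have humem : u ∈ Icc (1:ℝ) (2*n+1) := stg_mem n hn hy
  have hup : (stf n)^[m] u = u := by
    have := hyp
    rw [stg_iter n hn _ m] at this
    have h2 : ((stf n)^[m] u - 1)/(2*n) = y := this
    field_simp at h2
    rw [hu]; linarith
  have hul : ∀ i, 0 < i → i < m → (stf n)^[i] u ≠ u := by
    intro i hi him hcon
    apply hyl i hi him
    rw [stg_iter n hn _ i, ← hu, hcon, hu]
    field_simp
    ring
  exact stf_no_odd n hn hmo hm1 hmq humem hup hul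


lemma oddPart_key (k : ℕ) (hk : k ≠ 0) :
    2 ^ (k.factorization 2) * oddPart k = k ∧ ¬ 2 ∣ oddPart k := by
  constructor
  · exact Nat.ordProj_mul_ordCompl_eq_self k 2
  · exact Nat.not_dvd_ordCompl Nat.prime_two hk

lemma fact2_pow (e : ℕ) : (2^e : ℕ).factorization 2 = e := by
  simp [Nat.Prime.factorization_pow Nat.prime_two]

lemma oddPart_pow (e : ℕ) : oddPart (2^e) = 1 := by
  unfold oddPart
  rw [fact2_pow]
  exact Nat.div_self (Nat.pow_pos (by norm_num))

lemma fact2_mul_odd (d p : ℕ) (hp : ¬ 2 ∣ p) (hp0 : 0 < p) :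
    ((2^d * p : ℕ).factorization 2 = d ∧ oddPart (2^d * p) = p) := by
  have h2 : (2^d : ℕ) ≠ 0 := by positivity
  have hfac : (2^d * p : ℕ).factorization 2 = d := by
    rw [Nat.factorization_mul h2 (by omega)]
    simp only [Finsupp.coe_add, Pi.add_apply]
    rw [fact2_pow, Nat.factorization_eq_zero_of_not_dvd hp]
    omega
  refine ⟨hfac, ?_⟩
  unfold oddPart
  rw [hfac]
  exact Nat.mul_div_cancel_left p (by positivity)

lemma fact2_mul_even (d p : ℕ) (hp : 2 ∣ p) (hp0 : 0 < p) :
    d + 1 ≤ (2^d * p : ℕ).factorization 2 := by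
  have h2 : (2^d : ℕ) ≠ 0 := by positivity
  rw [Nat.factorization_mul h2 (by omega)]
  have h3 : 1 ≤ p.factorization 2 := by
    rw [← Nat.Prime.pow_dvd_iff_le_factorization Nat.prime_two (by omega)]
    simpa using hp
  simp only [Finsupp.coe_add, Pi.add_apply]
  rw [fact2_pow]
  omega

lemma isLP_id {p : ℕ} (h : IsLP id p) : p = 0 ∨ p = 1 := by
  obtain ⟨y, _, _, hl⟩ := h
  by_contra hc
  push_neg at hc
  have := hl 1 one_pos (by omega)
  simp at this

/-- For every k ≥ 1 there is a continuous self-map of [0,1] with a periodic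
point of least period k but no periodic point of least period j for j ≺ k. -/
theorem stmt_16 (k : ℕ) (hk : 0 < k) :
    ∃ g : ℝ → ℝ, ContinuousOn g (Set.Icc (0 : ℝ) 1) ∧
      Set.MapsTo g (Set.Icc (0 : ℝ) 1) (Set.Icc (0 : ℝ) 1) ∧
      (∃ y ∈ Set.Icc (0 : ℝ) 1, g^[k] y = y ∧
        ∀ i, 0 < i → i < k → g^[i] y ≠ y) ∧
      ∀ j : ℕ, 0 < j → SharkLt j k →
        ¬∃ y ∈ Set.Icc (0 : ℝ) 1, g^[j] y = y ∧
          ∀ i, 0 < i → i < j → g^[i] y ≠ y := by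
  have hk0 : k ≠ 0 := by omega
  obtain ⟨hk2, hqodd⟩ := oddPart_key k hk0
  set d := k.factorization 2 with hd
  set q := oddPart k with hq
  have hq0 : 0 < q := by
    rcases Nat.eq_zero_or_pos q with h | h
    · rw [h, Nat.mul_zero] at hk2; omega
    · exact h
  by_cases hq1 : q = 1
  · -- k is a power of two
    obtain ⟨hc, hm, hlo, hup⟩ := DIt_all id continuous_id (mapsTo_id _) d
    have hkd : k = 2^d := by
      rw [hq1, Nat.mul_one] at hk2; omega
    refine ⟨DIt d id, hc.continuousOn, hm, ?_, ?_⟩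
    · have h1 : IsLP id 1 := ⟨0, by norm_num, by simp, by omega⟩
      have h2 := hlo 1 h1
      rw [mul_one] at h2
      rw [hkd]
      exact h2
    · intro j hj hsh hex
      have hIs : IsLP (DIt d id) j := hex
      rcases hup j hIs with ⟨e, he, rfl⟩ | ⟨p, hp, rfl⟩
      · have hop : oddPart (2^e) = 1 := oddPart_pow e
        have hle : (2:ℕ)^e < 2^d := Nat.pow_lt_pow_right (by norm_num) he
        rcases hsh with ⟨h1, _⟩ | ⟨h1, _, _⟩ | ⟨_, _, h3⟩
        · exact h1 hop
        · exact h1 hop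
        · omega
      · rcases isLP_id hp with rfl | rfl
        · omega
        · have hop : oddPart (2^d * 1) = 1 := by rw [mul_one]; exact oddPart_pow d
          rcases hsh with ⟨h1, _⟩ | ⟨h1, _, _⟩ | ⟨_, _, h3⟩
          · exact h1 hop
          · exact h1 hop
          · omega
  · -- k = 2^d * q with q odd, q ≥ 3
    have hq3 : 3 ≤ q := by omega
    obtain ⟨nn, hnq, hnn1⟩ : ∃ nn, q = 2*nn+1 ∧ 1 ≤ nn := ⟨(q-1)/2, by omega, by omega⟩
    obtain ⟨hc, hm, hlo, hup⟩ := DIt_all (stg nn) (stg_cont nn hnn1) (stg_mapsTo nn hnn1) d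
    refine ⟨DIt d (stg nn), hc.continuousOn, hm, ?_, ?_⟩
    · have h1 : IsLP (stg nn) q := by rw [hnq]; exact stg_lp_q nn hnn1
      have h2 := hlo q h1
      rw [hk2] at h2
      exact h2
    · intro j hj hsh hex
      have hIs : IsLP (DIt d (stg nn)) j := hex
      rcases hup j hIs with ⟨e, he, rfl⟩ | ⟨p, hp, rfl⟩
      · have hop : oddPart (2^e) = 1 := oddPart_pow e
        rcases hsh with ⟨_, h2⟩ | ⟨h1, _, _⟩ | ⟨_, h2, _⟩
        · exact hq1 h2
        · exact h1 hop
        · exact hq1 h2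
      · have hp0 : 0 < p := by
          rcases Nat.eq_zero_or_pos p with rfl | h
          · rw [Nat.mul_zero] at hj; omega
          · exact h
        rcases Nat.even_or_odd p with hev | hodd
        · have hdvd : 2 ∣ p := by
            obtain ⟨c, rfl⟩ := hev; exact ⟨c, by omega⟩
          have hnu := fact2_mul_even d p hdvd hp0
          rcases hsh with ⟨_, h2⟩ | ⟨_, _, h3⟩ | ⟨_, h2, _⟩
          · exact hq1 h2
          · rcases h3 with h3 | ⟨h3, _⟩
            · omega
            · omega
          · exact hq1 h2
        · have hpodd : ¬ 2 ∣ p := by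
            obtain ⟨c, rfl⟩ := hodd; omega
          obtain ⟨hnu, hop⟩ := fact2_mul_odd d p hpodd hp0
          have hpq : p = 1 ∨ q ≤ p := by
            by_contra hcon
            push_neg at hcon
            obtain ⟨hp1, hpq'⟩ := hcon
            exact stg_no_odd nn hnn1 hodd (by omega) (by omega) hp
          rcases hpq with rfl | hqp
          · have hop1 : oddPart (2^d * 1) = 1 := by rw [mul_one]; exact oddPart_pow d
            rcases hsh with ⟨_, h2⟩ | ⟨h1, _, _⟩ | ⟨_, h2, _⟩
            · exact hq1 h2
            · exact h1 hop1
            · exact hq1 h2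
          · rcases hsh with ⟨_, h2⟩ | ⟨_, _, h3⟩ | ⟨_, h2, _⟩
            · exact hq1 h2
            · rcases h3 with h3 | ⟨_, h4⟩
              · omega
              · omega
            · exact hq1 h2
end

section
/- There exists a continuous map g : [0,1] → [0,1] that has periodic points of least period 2^n for every n ≥ 0, but no periodic points of any least period that is not a power of 2. -/
/-!
Let `φ` be the continuous function on `[0, ∞)` with `φ (3 t) = 3 φ t` that is a tent on `[1, 3]`,
and `g x = φ (1 - x)`. Then `g` is the translation by `2/3` on `[0, 1/3]`, affine of slope `-7/3`
with fixed point `8/15` on `[1/3, 2/3]`, and `g (3 x - 2) = 3 g x`. Hence `g` swaps the outer thirds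
and `g^[2] (y / 3) = g y / 3`: the minimal period of `y / 3` is twice that of `y`, which produces
the periods `2^n` from the fixed point. Conversely, a periodic orbit meeting `[0, 1/3]` has twice
the period of another periodic point, and an orbit avoiding it stays in the expanding middle
third, so it is the fixed point; induction on the period shows every period is a power of `2`.
-/

open Function Set Filter Topology

namespace Function

variable {α : Type*} {f : α → α} {x : α} {n : ℕ}

theorem minimalPeriod_eq_iff_of_pos (hn : 0 < n) :
    minimalPeriod f x = n ↔
      IsPeriodicPt f n x ∧ ∀ i, 0 < i → i < n → ¬IsPeriodicPt f i x := by
  constructor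
  · rintro rfl
    exact ⟨isPeriodicPt_minimalPeriod f x,
      fun i hi hlt => not_isPeriodicPt_of_pos_of_lt_minimalPeriod hi.ne' hlt⟩
  · rintro ⟨hper, hmin⟩
    refine (hper.minimalPeriod_le hn).antisymm (not_lt.1 fun hlt => ?_)
    exact hmin _ (hper.minimalPeriod_pos hn) hlt (isPeriodicPt_minimalPeriod f x)

theorem even_minimalPeriod_of_mapsTo_swap {s t : Set α} (hst : MapsTo f s t) (hts : MapsTo f t s)
    (hdisj : Disjoint s t) (hx : x ∈ s) : Even (minimalPeriod f x) := by
  by_contra hodd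
  obtain ⟨m, hm⟩ := Nat.not_even_iff_odd.1 hodd
  have hs : f^[2 * m] x ∈ s := by
    rw [iterate_mul]
    exact (MapsTo.iterate (hts.comp hst : MapsTo f^[2] s s) m) hx
  have ht : x ∈ t := by
    rw [← iterate_minimalPeriod (f := f) (x := x), hm, add_comm, iterate_add_apply, iterate_one]
    exact hst hs
  exact disjoint_left.1 hdisj hx ht

theorem minimalPeriod_eq_two_mul_of_even (h : Even (minimalPeriod f x)) :
    minimalPeriod f x = 2 * minimalPeriod f^[2] x := by
  rw [minimalPeriod_iterate_eq_div_gcd two_ne_zero, Nat.gcd_eq_right (even_iff_two_dvd.1 h),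
    Nat.mul_div_cancel' (even_iff_two_dvd.1 h)]

end Function

theorem Int.log_eq_of_zpow_le_of_lt_zpow {R : Type*} [Semifield R] [LinearOrder R]
    [IsStrictOrderedRing R] [FloorSemiring R] {b : ℕ} (hb : 1 < b) {k : ℤ} {r : R}
    (h₁ : (b : R) ^ k ≤ r) (h₂ : r < (b : R) ^ (k + 1)) : Int.log b r = k := by
  have hr : 0 < r := (zpow_pos (by exact_mod_cast zero_lt_one.trans hb) k).trans_le h₁
  refine le_antisymm ?_ ((Int.zpow_le_iff_le_log hb hr).1 h₁)
  exact Int.lt_add_one_iff.1 ((Int.lt_zpow_iff_log_lt hb hr).1 h₂)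

noncomputable def tentPiece (a t : ℝ) : ℝ := min (7 / 3 * t - 5 / 3 * a) (5 * a - t)

theorem continuous_tentPiece (a : ℝ) : Continuous (tentPiece a) := by
  unfold tentPiece; fun_prop

theorem tentPiece_three_mul (a t : ℝ) : tentPiece (3 * a) (3 * t) = 3 * tentPiece a t := by
  rw [tentPiece, tentPiece, mul_min_of_nonneg _ _ (by norm_num : (0 : ℝ) ≤ 3)]
  congr 1 <;> ring

theorem tentPiece_le (a t : ℝ) : tentPiece a t ≤ 3 * a := by
  rcases le_total t (2 * a) with h | h
  · exact (min_le_left _ _).trans (by linarith)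
  · exact (min_le_right _ _).trans (by linarith)

theorem tentPiece_nonneg {a t : ℝ} (ha : 0 ≤ a) (ht : t ∈ Icc a (3 * a)) : 0 ≤ tentPiece a t :=
  le_min (by linarith [ht.1]) (by linarith [ht.2])

theorem tentPiece_three_mul_self {a : ℝ} (ha : 0 ≤ a) :
    tentPiece (3 * a) (3 * a) = tentPiece a (3 * a) := by
  rw [tentPiece, tentPiece, min_eq_left (by linarith), min_eq_right (by linarith)]
  ring

noncomputable def scaledTent (t : ℝ) : ℝ :=
  if 0 < t then tentPiece (3 ^ Int.log 3 t) t else 0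

theorem scaledTent_eq_tentPiece {k : ℤ} {t : ℝ} (ht : t ∈ Icc ((3 : ℝ) ^ k) (3 ^ (k + 1))) :
    scaledTent t = tentPiece (3 ^ k) t := by
  have hpos : 0 < t := (zpow_pos (by norm_num) k).trans_le ht.1
  rw [scaledTent, if_pos hpos]
  rcases ht.2.lt_or_eq with hlt | rfl
  · rw [Int.log_eq_of_zpow_le_of_lt_zpow (b := 3) (by norm_num) (by exact_mod_cast ht.1)
      (by exact_mod_cast hlt)]
  · rw [show (3 : ℝ) ^ (k + 1) = ((3 : ℕ) : ℝ) ^ (k + 1) by norm_num, Int.log_zpow (by norm_num)]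
    push_cast
    rw [zpow_add_one₀ (by norm_num), mul_comm, tentPiece_three_mul_self (by positivity)]

theorem scaledTent_three_mul (t : ℝ) : scaledTent (3 * t) = 3 * scaledTent t := by
  rcases le_or_gt t 0 with ht | ht
  · rw [scaledTent, scaledTent, if_neg (by linarith), if_neg (by linarith), mul_zero]
  obtain ⟨k, hk⟩ := exists_mem_Ico_zpow ht (by norm_num : (1 : ℝ) < 3)
  have h3k : 3 * t ∈ Icc ((3 : ℝ) ^ (k + 1)) (3 ^ (k + 1 + 1)) := by
    simp only [zpow_add_one₀ (three_ne_zero (α := ℝ))] at hk ⊢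
    constructor <;> linarith [hk.1, hk.2]
  rw [scaledTent_eq_tentPiece h3k, scaledTent_eq_tentPiece (Ico_subset_Icc_self hk),
    zpow_add_one₀ three_ne_zero, mul_comm _ (3 : ℝ), tentPiece_three_mul]

theorem scaledTent_nonneg (t : ℝ) : 0 ≤ scaledTent t := by
  rcases le_or_gt t 0 with ht | ht
  · rw [scaledTent, if_neg (by linarith)]
  obtain ⟨k, hk⟩ := exists_mem_Ico_zpow ht (by norm_num : (1 : ℝ) < 3)
  rw [scaledTent_eq_tentPiece (Ico_subset_Icc_self hk)]
  rw [zpow_add_one₀ three_ne_zero, mul_comm] at hk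
  exact tentPiece_nonneg (by positivity) (Ico_subset_Icc_self hk)

theorem scaledTent_le_three_mul {t : ℝ} (ht : 0 ≤ t) : scaledTent t ≤ 3 * t := by
  rcases ht.eq_or_lt with rfl | ht
  · rw [scaledTent, if_neg (lt_irrefl 0), mul_zero]
  obtain ⟨k, hk⟩ := exists_mem_Ico_zpow ht (by norm_num : (1 : ℝ) < 3)
  rw [scaledTent_eq_tentPiece (Ico_subset_Icc_self hk)]
  linarith [tentPiece_le (3 ^ k) t, hk.1]

theorem continuousAt_scaledTent {t : ℝ} (ht : 0 < t) : ContinuousAt scaledTent t := by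
  rw [continuousAt_iff_continuous_left_right]
  constructor
  · obtain ⟨k, hk⟩ := exists_mem_Ioc_zpow ht (by norm_num : (1 : ℝ) < 3)
    have hEq : scaledTent =ᶠ[𝓝[≤] t] tentPiece (3 ^ k) :=
      mem_of_superset (Icc_mem_nhdsLE_of_mem hk) fun s hs => scaledTent_eq_tentPiece hs
    exact (continuous_tentPiece _).continuousWithinAt.congr_of_eventuallyEq hEq
      (scaledTent_eq_tentPiece (Ioc_subset_Icc_self hk))
  · obtain ⟨k, hk⟩ := exists_mem_Ico_zpow ht (by norm_num : (1 : ℝ) < 3)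
    have hEq : scaledTent =ᶠ[𝓝[≥] t] tentPiece (3 ^ k) :=
      mem_of_superset (Icc_mem_nhdsGE_of_mem hk) fun s hs => scaledTent_eq_tentPiece hs
    exact (continuous_tentPiece _).continuousWithinAt.congr_of_eventuallyEq hEq
      (scaledTent_eq_tentPiece (Ico_subset_Icc_self hk))

theorem continuousOn_scaledTent : ContinuousOn scaledTent (Ici 0) := by
  intro t ht
  rcases (mem_Ici.1 ht).eq_or_lt with rfl | ht
  · have h0 : scaledTent 0 = 0 := by rw [scaledTent, if_neg (lt_irrefl 0)]
    have hlim : Tendsto (fun s : ℝ => 3 * s) (𝓝[≥] 0) (𝓝 0) := by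
      simpa using ((continuous_const_mul (3 : ℝ)).tendsto 0).mono_left nhdsWithin_le_nhds
    rw [ContinuousWithinAt, h0]
    exact squeeze_zero' (Eventually.of_forall scaledTent_nonneg)
      (eventually_nhdsWithin_of_forall fun s hs => scaledTent_le_three_mul hs) hlim
  · exact (continuousAt_scaledTent ht).continuousWithinAt

noncomputable def periodDoublingMap (x : ℝ) : ℝ := scaledTent (1 - x)

theorem scaledTent_of_mem_Icc_third_one {t : ℝ} (ht : t ∈ Icc (1 / 3 : ℝ) 1) :
    scaledTent t = tentPiece (1 / 3) t := by
  rw [scaledTent_eq_tentPiece (k := -1) (by norm_num; exact ht)]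
  norm_num

theorem periodDoublingMap_of_mem_Icc_zero_third {x : ℝ} (hx : x ∈ Icc (0 : ℝ) (1 / 3)) :
    periodDoublingMap x = x + 2 / 3 := by
  rw [periodDoublingMap, scaledTent_of_mem_Icc_third_one ⟨by linarith [hx.2], by linarith [hx.1]⟩,
    tentPiece, min_eq_right (by linarith [hx.2])]
  ring

theorem periodDoublingMap_of_mem_Icc_third_twoThirds {x : ℝ}
    (hx : x ∈ Icc (1 / 3 : ℝ) (2 / 3)) : periodDoublingMap x = 16 / 9 - 7 / 3 * x := by
  rw [periodDoublingMap, scaledTent_of_mem_Icc_third_one ⟨by linarith [hx.2], by linarith [hx.1]⟩,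
    tentPiece, min_eq_left (by linarith [hx.1])]
  ring

theorem periodDoublingMap_three_mul_sub_two (x : ℝ) :
    periodDoublingMap (3 * x - 2) = 3 * periodDoublingMap x := by
  rw [periodDoublingMap, periodDoublingMap, ← scaledTent_three_mul]
  congr 1
  ring

theorem continuousOn_periodDoublingMap : ContinuousOn periodDoublingMap (Icc 0 1) :=
  continuousOn_scaledTent.comp (by fun_prop) fun x hx => by
    simp only [mem_Ici, sub_nonneg]; exact hx.2

theorem mapsTo_periodDoublingMap : MapsTo periodDoublingMap (Icc 0 1) (Icc 0 1) := by
  intro x hx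
  refine ⟨scaledTent_nonneg _, ?_⟩
  rcases le_total x (1 / 3) with h₁ | h₁
  · linarith [periodDoublingMap_of_mem_Icc_zero_third ⟨hx.1, h₁⟩]
  rcases le_total x (2 / 3) with h₂ | h₂
  · linarith [periodDoublingMap_of_mem_Icc_third_twoThirds ⟨h₁, h₂⟩]
  · rw [periodDoublingMap]
    linarith [scaledTent_le_three_mul (sub_nonneg.2 hx.2)]

theorem isFixedPt_periodDoublingMap : IsFixedPt periodDoublingMap (8 / 15) := by
  rw [IsFixedPt, periodDoublingMap_of_mem_Icc_third_twoThirds (by norm_num)]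
  norm_num

theorem mapsTo_periodDoublingMap_Icc_zero_third :
    MapsTo periodDoublingMap (Icc 0 (1 / 3)) (Icc (2 / 3) 1) := fun x hx => by
  rw [mem_Icc, periodDoublingMap_of_mem_Icc_zero_third hx]
  constructor <;> linarith [hx.1, hx.2]

theorem mapsTo_periodDoublingMap_Icc_twoThirds_one :
    MapsTo periodDoublingMap (Icc (2 / 3) 1) (Icc 0 (1 / 3)) := fun x hx => by
  have h := mapsTo_periodDoublingMap (x := 3 * x - 2) ⟨by linarith [hx.1], by linarith [hx.2]⟩
  rw [periodDoublingMap_three_mul_sub_two] at h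
  constructor <;> linarith [h.1, h.2]

theorem periodDoublingMap_iterate_two_div_three {y : ℝ} (hy : y ∈ Icc (0 : ℝ) 1) :
    periodDoublingMap^[2] (y / 3) = periodDoublingMap y / 3 := by
  have h := periodDoublingMap_three_mul_sub_two (y / 3 + 2 / 3)
  rw [show 3 * (y / 3 + 2 / 3) - 2 = y by ring] at h
  rw [iterate_succ_apply', iterate_one,
    periodDoublingMap_of_mem_Icc_zero_third (x := y / 3)
      ⟨by linarith [hy.1], by linarith [hy.2]⟩, h]
  ring

theorem periodDoublingMap_iterate_two_iterate_div_three {y : ℝ} (hy : y ∈ Icc (0 : ℝ) 1) (n : ℕ) :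
    (periodDoublingMap^[2])^[n] (y / 3) = periodDoublingMap^[n] y / 3 := by
  induction n with
  | zero => rfl
  | succ n ih =>
    rw [iterate_succ_apply' (f := periodDoublingMap^[2]), ih,
      periodDoublingMap_iterate_two_div_three (mapsTo_periodDoublingMap.iterate n hy),
      iterate_succ_apply']

theorem minimalPeriod_periodDoublingMap_div_three {y : ℝ} (hy : y ∈ Icc (0 : ℝ) 1) :
    minimalPeriod periodDoublingMap (y / 3) = 2 * minimalPeriod periodDoublingMap y := by
  have hdisj : Disjoint (Icc (0 : ℝ) (1 / 3)) (Icc (2 / 3) 1) :=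
    disjoint_left.2 fun x h₁ h₂ => by linarith [h₁.2, h₂.1]
  rw [minimalPeriod_eq_two_mul_of_even (even_minimalPeriod_of_mapsTo_swap
    mapsTo_periodDoublingMap_Icc_zero_third mapsTo_periodDoublingMap_Icc_twoThirds_one hdisj
    ⟨by linarith [hy.1], by linarith [hy.2]⟩)]
  congr 1
  refine minimalPeriod_eq_minimalPeriod_iff.2 fun n => ?_
  simp only [IsPeriodicPt, IsFixedPt, periodDoublingMap_iterate_two_iterate_div_three hy]
  exact div_left_inj' three_ne_zero

theorem eight_fifteenths_div_three_pow_mem_Icc (n : ℕ) : (8 / 15 : ℝ) / 3 ^ n ∈ Icc (0 : ℝ) 1 :=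
  ⟨by positivity, (div_le_self (by norm_num) (one_le_pow₀ (by norm_num))).trans (by norm_num)⟩

theorem minimalPeriod_periodDoublingMap_two_pow (n : ℕ) :
    minimalPeriod periodDoublingMap (8 / 15 / 3 ^ n) = 2 ^ n := by
  induction n with
  | zero => simpa [minimalPeriod_eq_one_iff_isFixedPt] using isFixedPt_periodDoublingMap
  | succ n ih =>
    rw [pow_succ, ← div_div,
      minimalPeriod_periodDoublingMap_div_three (eight_fifteenths_div_three_pow_mem_Icc n), ih,
      pow_succ, mul_comm]

theorem periodDoublingMap_iterate_sub_eq {y : ℝ}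
    (hmid : ∀ j, periodDoublingMap^[j] y ∈ Icc (1 / 3 : ℝ) (2 / 3)) (i : ℕ) :
    periodDoublingMap^[i] y - 8 / 15 = (-7 / 3) ^ i * (y - 8 / 15) := by
  induction i with
  | zero => simp
  | succ i ih =>
    rw [iterate_succ_apply', periodDoublingMap_of_mem_Icc_third_twoThirds (hmid i), pow_succ]
    linear_combination (-7 / 3) * ih

theorem eq_of_isPeriodicPt_of_forall_iterate_mem_Icc_third_twoThirds {y : ℝ} {n : ℕ}
    (hn : 0 < n) (hper : IsPeriodicPt periodDoublingMap n y)
    (hmid : ∀ j, periodDoublingMap^[j] y ∈ Icc (1 / 3 : ℝ) (2 / 3)) : y = 8 / 15 := by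
  have habs := congrArg abs (periodDoublingMap_iterate_sub_eq hmid n)
  rw [hper.eq, abs_mul, abs_pow, show |(-7 / 3 : ℝ)| = 7 / 3 by norm_num] at habs
  have hexp : 1 < (7 / 3 : ℝ) ^ n := one_lt_pow₀ (by norm_num) hn.ne'
  have hzero : |y - 8 / 15| = 0 := by nlinarith [abs_nonneg (y - 8 / 15)]
  linarith [abs_eq_zero.1 hzero]

theorem forall_iterate_mem_Icc_third_twoThirds {y : ℝ} (hy : y ∈ Icc (0 : ℝ) 1)
    (h : ∀ j, periodDoublingMap^[j] y ∉ Icc (0 : ℝ) (1 / 3)) (j : ℕ) :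
    periodDoublingMap^[j] y ∈ Icc (1 / 3 : ℝ) (2 / 3) := by
  have hj := mapsTo_periodDoublingMap.iterate j hy
  have hup : periodDoublingMap^[j] y ∉ Icc (2 / 3 : ℝ) 1 := fun hup =>
    h (j + 1) (by rw [iterate_succ_apply']; exact mapsTo_periodDoublingMap_Icc_twoThirds_one hup)
  exact ⟨not_lt.1 fun hlt => h j ⟨hj.1, hlt.le⟩, not_lt.1 fun hlt => hup ⟨hlt.le, hj.2⟩⟩

theorem exists_minimalPeriod_periodDoublingMap_eq_two_pow {y : ℝ} (hy : y ∈ Icc (0 : ℝ) 1)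
    (hp : y ∈ periodicPts periodDoublingMap) : ∃ n, minimalPeriod periodDoublingMap y = 2 ^ n := by
  induction hm : minimalPeriod periodDoublingMap y using Nat.strong_induction_on generalizing y with
  | _ p ih =>
  have hpos : 0 < p := hm ▸ minimalPeriod_pos_of_mem_periodicPts hp
  by_cases h : ∃ j, periodDoublingMap^[j] y ∈ Icc (0 : ℝ) (1 / 3)
  · obtain ⟨j, hj⟩ := h
    have h3 : 3 * periodDoublingMap^[j] y ∈ Icc (0 : ℝ) 1 :=
      ⟨by linarith [hj.1], by linarith [hj.2]⟩
    have hdouble : p = 2 * minimalPeriod periodDoublingMap (3 * periodDoublingMap^[j] y) := by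
      rw [← hm, ← minimalPeriod_apply_iterate hp j, ← minimalPeriod_periodDoublingMap_div_three h3,
        mul_div_cancel_left₀ _ three_ne_zero]
    obtain ⟨n, hn⟩ := ih _ (by omega) h3 (minimalPeriod_pos_iff_mem_periodicPts.1 (by omega)) rfl
    exact ⟨n + 1, by rw [hdouble, hn, pow_succ, mul_comm]⟩
  · simp only [not_exists] at h
    have hfix := eq_of_isPeriodicPt_of_forall_iterate_mem_Icc_third_twoThirds
      (minimalPeriod_pos_of_mem_periodicPts hp) (isPeriodicPt_minimalPeriod _ _)
      (forall_iterate_mem_Icc_third_twoThirds hy h)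
    refine ⟨0, ?_⟩
    rw [← hm, pow_zero, minimalPeriod_eq_one_iff_isFixedPt, hfix]
    exact isFixedPt_periodDoublingMap

/-- There is a continuous self-map of [0,1] with periodic points of least
period 2^n for every n ≥ 0, but no periodic points of any other least period. -/
theorem stmt_17 :
    ∃ g : ℝ → ℝ, ContinuousOn g (Set.Icc (0 : ℝ) 1) ∧
      Set.MapsTo g (Set.Icc (0 : ℝ) 1) (Set.Icc (0 : ℝ) 1) ∧
      (∀ n : ℕ, ∃ y ∈ Set.Icc (0 : ℝ) 1, g^[2 ^ n] y = y ∧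
        ∀ i, 0 < i → i < 2 ^ n → g^[i] y ≠ y) ∧
      ∀ m : ℕ, 0 < m → (¬∃ n : ℕ, m = 2 ^ n) →
        ¬∃ y ∈ Set.Icc (0 : ℝ) 1, g^[m] y = y ∧
          ∀ i, 0 < i → i < m → g^[i] y ≠ y := by
  refine ⟨periodDoublingMap, continuousOn_periodDoublingMap, mapsTo_periodDoublingMap,
    fun n => ⟨8 / 15 / 3 ^ n, eight_fifteenths_div_three_pow_mem_Icc n,
      (minimalPeriod_eq_iff_of_pos (by positivity)).1 (minimalPeriod_periodDoublingMap_two_pow n)⟩,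
    ?_⟩
  rintro m hm hnot ⟨y, hy, hper⟩
  have hmin := (minimalPeriod_eq_iff_of_pos hm).2 hper
  obtain ⟨n, hn⟩ := exists_minimalPeriod_periodDoublingMap_eq_two_pow hy
    (minimalPeriod_pos_iff_mem_periodicPts.1 (hmin ▸ hm))
  exact hnot ⟨n, hmin ▸ hn⟩
end

section
/- Let f : I → I be continuous on a compact interval and let J, K be closed subintervals with f(J) ⊇ K ∪ J and f(K) ⊇ J. Then for every even integer n ≥ 2 there exists a point y with f^n(y) = y whose itinerary follows a cycle alternating between J and K as prescribed; in particular if J and K have disjoint interiors and intersect in at most one point which is not periodic of period dividing n, f has a periodic point of least period n for every even n. -/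
/-!
If `f` maps a compact interval `A` over a compact interval `B`, then some subinterval of `A` is
mapped exactly onto `B`: between the first point where `f` reaches one endpoint of `B` and the last
earlier point where it takes the other, `f` cannot leave `B`. Refining along a cycle of covering
intervals `I₀ → I₁ → ⋯ → Iₙ = I₀` gives a compact interval `L ⊆ I₀` whose `i`-th image lies in
`Iᵢ` and with `fⁿ(L) = I₀ ⊇ L`, so `fⁿ` has a fixed point in `L` by the intermediate value theorem.
The cycle `J K J K ⋯ J` gives the first claim. For the second, take the cycle `J K J J ⋯ J`: a
proper period `m` of the fixed point `y` divides `n`, and `f y = f^[m + 1] y` would then be a point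
of `J ∩ K` of period `m`.
-/

open Set Function OrderDual

section IntervalImages

variable {α δ : Type*} [ConditionallyCompleteLinearOrder α] [TopologicalSpace α] [OrderTopology α]
  [DenselyOrdered α] [LinearOrder δ] [TopologicalSpace δ] [OrderClosedTopology δ]
  {f : α → δ} {u v : α} {p q : δ}

theorem ContinuousOn.exists_last_eq_of_le (hf : ContinuousOn f (Icc u v)) (huv : u ≤ v)
    (hu : f u = p) (hv : p ≤ f v) : ∃ w ∈ Icc u v, f w = p ∧ ∀ x ∈ Icc w v, p ≤ f x := by
  have hS : IsCompact (Icc u v ∩ f ⁻¹' {p}) := isCompact_Icc.of_isClosed_subset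
    (hf.preimage_isClosed_of_isClosed isClosed_Icc isClosed_singleton) inter_subset_left
  obtain ⟨w, ⟨hw, hfw⟩, hmax⟩ := hS.exists_isGreatest ⟨u, left_mem_Icc.2 huv, hu⟩
  refine ⟨w, hw, hfw, fun x hx => le_of_not_gt fun hlt => ?_⟩
  obtain ⟨z, hz, hfz⟩ := intermediate_value_Icc hx.2
    (hf.mono (Icc_subset_Icc (hw.1.trans hx.1) le_rfl)) ⟨hlt.le, hv⟩
  have hzx : z = x :=
    le_antisymm ((hmax ⟨⟨hw.1.trans (hx.1.trans hz.1), hz.2⟩, hfz⟩).trans hx.1) hz.1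
  exact hlt.ne (hzx ▸ hfz)

theorem ContinuousOn.exists_first_eq_of_le (hf : ContinuousOn f (Icc u v)) (huv : u ≤ v)
    (hu : f u ≤ q) (hv : f v = q) : ∃ w ∈ Icc u v, f w = q ∧ ∀ x ∈ Icc u w, f x ≤ q := by
  have hS : IsCompact (Icc u v ∩ f ⁻¹' {q}) := isCompact_Icc.of_isClosed_subset
    (hf.preimage_isClosed_of_isClosed isClosed_Icc isClosed_singleton) inter_subset_left
  obtain ⟨w, ⟨hw, hfw⟩, hmin⟩ := hS.exists_isLeast ⟨v, right_mem_Icc.2 huv, hv⟩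
  refine ⟨w, hw, hfw, fun x hx => le_of_not_gt fun hlt => ?_⟩
  obtain ⟨z, hz, hfz⟩ := intermediate_value_Icc hx.1
    (hf.mono (Icc_subset_Icc le_rfl (hx.2.trans hw.2))) ⟨hu, hlt.le⟩
  have hzx : z = x :=
    le_antisymm hz.2 (hx.2.trans (hmin ⟨⟨hz.1, hz.2.trans (hx.2.trans hw.2)⟩, hfz⟩))
  exact hlt.ne' (hzx ▸ hfz)

theorem ContinuousOn.exists_Icc_image_eq_of_le {s t : α} (hf : ContinuousOn f (Icc s t))
    (hst : s ≤ t) (hs : f s = p) (ht : f t = q) (hpq : p ≤ q) :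
    ∃ c d, c ≤ d ∧ Icc c d ⊆ Icc s t ∧ f '' Icc c d = Icc p q := by
  obtain ⟨d, hd, hfd, hle⟩ := hf.exists_first_eq_of_le hst (hs ▸ hpq) ht
  obtain ⟨c, hc, hfc, hge⟩ :=
    (hf.mono (Icc_subset_Icc_right hd.2)).exists_last_eq_of_le hd.1 hs (hfd ▸ hpq)
  have hcd : MapsTo f (Icc c d) (Icc p q) := fun x hx => ⟨hge x hx, hle x ⟨hc.1.trans hx.1, hx.2⟩⟩
  refine ⟨c, d, hc.2, Icc_subset_Icc hc.1 hd.2, hcd.image_subset.antisymm ?_⟩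
  simpa only [hfc, hfd] using intermediate_value_Icc hc.2 (hf.mono (Icc_subset_Icc hc.1 hd.2))

theorem ContinuousOn.exists_Icc_image_eq {a b : α} (hf : ContinuousOn f (Icc a b))
    (hpq : p ≤ q) (hsub : Icc p q ⊆ f '' Icc a b) :
    ∃ c d, c ≤ d ∧ Icc c d ⊆ Icc a b ∧ f '' Icc c d = Icc p q := by
  obtain ⟨s, hs, hfs⟩ := hsub (left_mem_Icc.2 hpq)
  obtain ⟨t, ht, hft⟩ := hsub (right_mem_Icc.2 hpq)
  rcases le_total s t with hst | hts
  · obtain ⟨c, d, hcd, hcdst, himg⟩ :=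
      (hf.mono (Icc_subset_Icc hs.1 ht.2)).exists_Icc_image_eq_of_le hst hfs hft hpq
    exact ⟨c, d, hcd, hcdst.trans (Icc_subset_Icc hs.1 ht.2), himg⟩
  · -- `f` decreases from `q` to `p` on `[t, s]`: work in the order dual of the codomain
    obtain ⟨c, d, hcd, hcdts, himg⟩ :=
      ContinuousOn.exists_Icc_image_eq_of_le
        (continuous_toDual.comp_continuousOn (hf.mono (Icc_subset_Icc ht.1 hs.2)))
        hts (congrArg toDual hft) (congrArg toDual hfs) (toDual_le_toDual.2 hpq)
    refine ⟨c, d, hcd, hcdts.trans (Icc_subset_Icc ht.1 hs.2), ?_⟩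
    rw [Icc_toDual] at himg
    ext x
    simpa using Set.ext_iff.1 himg (toDual x)

end IntervalImages

section Itineraries

variable {α : Type*} [ConditionallyCompleteLinearOrder α] [TopologicalSpace α] [OrderTopology α]
  [DenselyOrdered α] {f : α → α} {s : Set α} {I : ℕ → Set α}

theorem exists_Icc_itinerary (hf : ContinuousOn f s) (hmaps : MapsTo f s s)
    (hI : ∀ i, ∃ p q, p ≤ q ∧ I i = Icc p q) (hIs : ∀ i, I i ⊆ s)
    (hcov : ∀ i, I (i + 1) ⊆ f '' I i) (n : ℕ) :
    ∃ u v, u ≤ v ∧ (∀ i ≤ n, MapsTo f^[i] (Icc u v) (I i)) ∧ f^[n] '' Icc u v = I n := by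
  induction n with
  | zero =>
    obtain ⟨p, q, hpq, hI0⟩ := hI 0
    refine ⟨p, q, hpq, fun i hi => ?_, by rw [hI0, iterate_zero, image_id]⟩
    rw [Nat.le_zero.1 hi, hI0]
    exact mapsTo_id _
  | succ n ih =>
    obtain ⟨u, v, huv, hall, himg⟩ := ih
    obtain ⟨p, q, hpq, hIn⟩ := hI (n + 1)
    have hcont : ContinuousOn f^[n + 1] (Icc u v) :=
      (hf.iterate hmaps _).mono fun x hx => hIs 0 (hall 0 n.zero_le hx)
    have hsurj : Icc p q ⊆ f^[n + 1] '' Icc u v := by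
      rw [iterate_succ', image_comp, himg, ← hIn]
      exact hcov n
    obtain ⟨u', v', huv', hsub, himg'⟩ := hcont.exists_Icc_image_eq hpq hsurj
    refine ⟨u', v', huv', fun i hi => ?_, himg'.trans hIn.symm⟩
    rcases hi.lt_or_eq with hi | rfl
    · exact (hall i (Nat.lt_succ_iff.1 hi)).mono_left hsub
    · rw [hIn, ← himg']
      exact mapsTo_image _ _

theorem exists_isPeriodicPt_itinerary (hf : ContinuousOn f s) (hmaps : MapsTo f s s)
    (hI : ∀ i, ∃ p q, p ≤ q ∧ I i = Icc p q) (hIs : ∀ i, I i ⊆ s)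
    (hcov : ∀ i, I (i + 1) ⊆ f '' I i) {n : ℕ} (hn : I n = I 0) :
    ∃ y, IsPeriodicPt f n y ∧ ∀ i ≤ n, f^[i] y ∈ I i := by
  obtain ⟨u, v, huv, hall, himg⟩ := exists_Icc_itinerary hf hmaps hI hIs hcov n
  have hsub : Icc u v ⊆ I 0 := hall 0 n.zero_le
  obtain ⟨y, hy, hfix⟩ := exists_mem_Icc_isFixedPt_of_surjOn
    ((hf.iterate hmaps n).mono (hsub.trans (hIs 0))) huv (by rw [SurjOn, himg, hn]; exact hsub)
  exact ⟨y, hfix, fun i hi => hall i hi hy⟩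

end Itineraries

/-- A proper period of `y` divides `n` and is also a period of `f y = f^[m + 1] y ∈ J ∩ K`. -/
theorem Function.IsPeriodicPt.minimalPeriod_eq_of_forall_mem {α : Type*} {f : α → α}
    {J K : Set α} {n : ℕ} {y : α} (hy : IsPeriodicPt f n y) (hn : 0 < n) (hyK : f y ∈ K)
    (hyJ : ∀ i, 2 ≤ i → i ≤ n → f^[i] y ∈ J)
    (hJK : ∀ p ∈ J ∩ K, ∀ d : ℕ, 0 < d → d ∣ n → f^[d] p ≠ p) : minimalPeriod f y = n := by
  have hpos := hy.minimalPeriod_pos hn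
  have hdvd := hy.minimalPeriod_dvd
  by_contra hne
  have hlt : minimalPeriod f y < n := (Nat.le_of_dvd hn hdvd).lt_of_ne hne
  have hfyJ : f y ∈ J := by
    have := hyJ (minimalPeriod f y + 1) (by omega) hlt
    rwa [iterate_succ_apply', (isPeriodicPt_minimalPeriod f y).eq] at this
  exact hJK _ ⟨hfyJ, hyK⟩ _ hpos hdvd (isPeriodicPt_minimalPeriod f y).apply

theorem stmt_18_general (a b : ℝ) (f : ℝ → ℝ)
    (hf : ContinuousOn f (Set.Icc a b))
    (hmaps : Set.MapsTo f (Set.Icc a b) (Set.Icc a b))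
    (c₁ c₂ d₁ d₂ : ℝ) (hc : c₁ ≤ c₂) (hd : d₁ ≤ d₂)
    (hJ : Set.Icc c₁ c₂ ⊆ Set.Icc a b) (hK : Set.Icc d₁ d₂ ⊆ Set.Icc a b)
    (hfJ : Set.Icc d₁ d₂ ∪ Set.Icc c₁ c₂ ⊆ f '' Set.Icc c₁ c₂)
    (hfK : Set.Icc c₁ c₂ ⊆ f '' Set.Icc d₁ d₂) :
    (∀ n : ℕ, Even n → 2 ≤ n →
      ∃ y, f^[n] y = y ∧
        ∀ i < n, f^[i] y ∈ (if Even i then Set.Icc c₁ c₂ else Set.Icc d₁ d₂)) ∧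
    ((Disjoint (interior (Set.Icc c₁ c₂)) (interior (Set.Icc d₁ d₂)) ∧
        (Set.Icc c₁ c₂ ∩ Set.Icc d₁ d₂).Subsingleton) →
      ∀ n : ℕ, Even n → 2 ≤ n →
        (∀ p ∈ Set.Icc c₁ c₂ ∩ Set.Icc d₁ d₂,
          ∀ d : ℕ, 0 < d → d ∣ n → f^[d] p ≠ p) →
        ∃ y ∈ Set.Icc a b, f^[n] y = y ∧
          ∀ i, 0 < i → i < n → f^[i] y ≠ y) := by
  have hfJK : Icc d₁ d₂ ⊆ f '' Icc c₁ c₂ := subset_union_left.trans hfJ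
  have hfJJ : Icc c₁ c₂ ⊆ f '' Icc c₁ c₂ := subset_union_right.trans hfJ
  refine ⟨fun n hn _ => ?_, fun _ n hn hn2 hJK => ?_⟩
  · obtain ⟨y, hy, hit⟩ := exists_isPeriodicPt_itinerary hf hmaps
      (I := fun i => if Even i then Icc c₁ c₂ else Icc d₁ d₂) (n := n)
      (fun i => by split_ifs <;> exact ⟨_, _, ‹_›, rfl⟩) (fun i => by split_ifs <;> assumption)
      (fun i => by by_cases h : Even i <;> simp [h, Nat.even_add_one, hfJK, hfK]) (by simp [hn])
    exact ⟨y, hy, fun i hi => hit i hi.le⟩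
  · obtain ⟨y, hy, hit⟩ := exists_isPeriodicPt_itinerary hf hmaps
      (I := fun i => if i = 1 then Icc d₁ d₂ else Icc c₁ c₂) (n := n)
      (fun i => by split_ifs <;> exact ⟨_, _, ‹_›, rfl⟩) (fun i => by split_ifs <;> assumption)
      (fun i => by rcases i with _ | _ | i <;> simp [hfJK, hfK, hfJJ])
      (by rw [if_neg (by omega), if_neg zero_ne_one])
    have hmin := hy.minimalPeriod_eq_of_forall_mem (by omega) (by simpa using hit 1 (by omega))
      (fun i h2 hi => by simpa [show i ≠ 1 by omega] using hit i hi) hJK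
    exact ⟨y, hJ (by simpa using hit 0 (by omega)), hy,
      fun i hi0 hin hfix => (IsPeriodicPt.minimalPeriod_le hi0 hfix).not_gt (hmin ▸ hin)⟩

/-- If J, K are closed subintervals of I with f(J) ⊇ K ∪ J and f(K) ⊇ J, then
for every even n ≥ 2 there is a point y with f^n(y) = y whose itinerary
alternates between J and K; in particular, if J and K have disjoint interiors
and intersect in at most one point which is not periodic of period dividing n,
then f has a periodic point of least period n for every even n. -/
theorem stmt_18 (a b : ℝ) (hab : a ≤ b) (f : ℝ → ℝ)
    (hf : ContinuousOn f (Set.Icc a b))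
    (hmaps : Set.MapsTo f (Set.Icc a b) (Set.Icc a b))
    (c₁ c₂ d₁ d₂ : ℝ) (hc : c₁ ≤ c₂) (hd : d₁ ≤ d₂)
    (hJ : Set.Icc c₁ c₂ ⊆ Set.Icc a b) (hK : Set.Icc d₁ d₂ ⊆ Set.Icc a b)
    (hfJ : Set.Icc d₁ d₂ ∪ Set.Icc c₁ c₂ ⊆ f '' Set.Icc c₁ c₂)
    (hfK : Set.Icc c₁ c₂ ⊆ f '' Set.Icc d₁ d₂) :
    (∀ n : ℕ, Even n → 2 ≤ n →
      ∃ y, f^[n] y = y ∧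
        ∀ i < n, f^[i] y ∈ (if Even i then Set.Icc c₁ c₂ else Set.Icc d₁ d₂)) ∧
    ((Disjoint (interior (Set.Icc c₁ c₂)) (interior (Set.Icc d₁ d₂)) ∧
        (Set.Icc c₁ c₂ ∩ Set.Icc d₁ d₂).Subsingleton) →
      ∀ n : ℕ, Even n → 2 ≤ n →
        (∀ p ∈ Set.Icc c₁ c₂ ∩ Set.Icc d₁ d₂,
          ∀ d : ℕ, 0 < d → d ∣ n → f^[d] p ≠ p) →
        ∃ y ∈ Set.Icc a b, f^[n] y = y ∧
          ∀ i, 0 < i → i < n → f^[i] y ≠ y) :=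
  stmt_18_general a b f hf hmaps c₁ c₂ d₁ d₂ hc hd hJ hK hfJ hfK
end

section
/- Let f : I → I be continuous on a compact interval with no periodic point of least period 2. Then for each c ∈ I the sequence of iterates f^n(c) converges to a fixed point of f. -/
/-!
Without points of period 2, a point that `f` moves up is never brought back to or below itself
by an iterate of `f` (and dually): for two steps this is an intermediate value argument around
an extremal fixed point, and the general case follows by strong induction on the number of
steps, looking at the lowest point of the orbit segment. Hence every point of an orbit lies
below its `liminf` or above its `limsup`. If `liminf < limsup`, the orbit jumps infinitely often
from below the `liminf` to above the `limsup` and back, so by continuity `f` swaps the two: a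
2-cycle. Thus the orbit converges, and its limit is fixed. The interval `[a, b]` is a complete
densely ordered space, where all of this takes place.
-/

open Set Filter Topology Function

theorem Nat.frequently_atTop_and_not_succ {p : ℕ → Prop} (hp : ∃ᶠ n in atTop, p n)
    (hq : ∃ᶠ n in atTop, ¬p n) : ∃ᶠ n in atTop, p n ∧ ¬p (n + 1) := by
  by_contra h
  simp only [not_frequently, not_and, not_not] at h
  obtain ⟨N, hN⟩ := eventually_atTop.1 h
  obtain ⟨n, hn, hpn⟩ := frequently_atTop.1 hp N
  have hpm : ∀ m ≥ n, p m := fun m hm => by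
    induction m, hm using Nat.le_induction with
    | base => exact hpn
    | succ m hm ih => exact hN m (hn.trans hm) ih
  exact hq (eventually_atTop.2 ⟨n, fun m hm => not_not.2 (hpm m hm)⟩)

section LimInf

variable {α β : Type*} [CompleteLinearOrder α] [TopologicalSpace α] [OrderTopology α]
  {u : β → α} {l F : Filter β}

theorem tendsto_liminf_of_eventually_le_liminf (hF : F ≤ l) (h : ∀ᶠ n in F, u n ≤ liminf u l) :
    Tendsto u F (𝓝 (liminf u l)) :=
  tendsto_order.2 ⟨fun _ ha => (eventually_lt_of_lt_liminf ha).filter_mono hF,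
    fun _ ha => h.mono fun _ hn => hn.trans_lt ha⟩

theorem tendsto_limsup_of_eventually_limsup_le (hF : F ≤ l) (h : ∀ᶠ n in F, limsup u l ≤ u n) :
    Tendsto u F (𝓝 (limsup u l)) :=
  tendsto_liminf_of_eventually_le_liminf (α := αᵒᵈ) hF h

theorem map_liminf_eq_limsup {f : α → α} {x : ℕ → α} (hf : ContinuousAt f (liminf x atTop))
    (hx : ∀ n, x (n + 1) = f (x n))
    (hsplit : ∀ n, x n ≤ liminf x atTop ∨ limsup x atTop ≤ x n)
    (hlt : liminf x atTop < limsup x atTop) : f (liminf x atTop) = limsup x atTop := by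
  have hlow : ∃ᶠ n in atTop, x n ≤ liminf x atTop :=
    (frequently_lt_of_liminf_lt (by isBoundedDefault) hlt).mono fun n hn =>
      (hsplit n).resolve_right hn.not_ge
  have hhigh : ∃ᶠ n in atTop, ¬x n ≤ liminf x atTop :=
    (frequently_lt_of_lt_limsup (by isBoundedDefault) hlt).mono fun _ hn => hn.not_ge
  -- Along the times at which the orbit jumps from `≤ liminf` to `≥ limsup`, it tends to
  -- `liminf` before the jump and to `limsup` after it.
  set F := atTop ⊓ 𝓟 {n | x n ≤ liminf x atTop ∧ ¬x (n + 1) ≤ liminf x atTop}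
  have : F.NeBot := frequently_iff_neBot.1 (Nat.frequently_atTop_and_not_succ hlow hhigh)
  have hF : F ≤ atTop := inf_le_left
  have hbefore : Tendsto x F (𝓝 (liminf x atTop)) :=
    tendsto_liminf_of_eventually_le_liminf hF (mem_inf_of_right fun _ hn => hn.1)
  have hafter : Tendsto x (map (· + 1) F) (𝓝 (limsup x atTop)) :=
    tendsto_limsup_of_eventually_limsup_le ((tendsto_add_atTop_nat 1).mono_left hF)
      (mem_inf_of_right fun n hn => ((hsplit (n + 1)).resolve_left hn.2))
  refine tendsto_nhds_unique (hf.tendsto.comp hbefore) ?_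
  rw [show f ∘ x = x ∘ (· + 1) from funext fun n => (hx n).symm]
  exact hafter.comp tendsto_map

end LimInf

theorem exists_mem_Icc_map_eq_self {α : Type*} [ConditionallyCompleteLinearOrder α]
    [DenselyOrdered α] [TopologicalSpace α] [OrderTopology α] {f : α → α} {a b : α}
    (hf : ContinuousOn f (Icc a b)) (hab : a ≤ b) (ha : a ≤ f a) (hb : f b ≤ b) :
    ∃ x ∈ Icc a b, f x = x :=
  (isPreconnected_Icc.intermediate_value₂ (left_mem_Icc.2 hab) (right_mem_Icc.2 hab)
    continuousOn_id hf ha hb).imp fun _ ⟨hx, h⟩ => ⟨hx, h.symm⟩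

section NoPeriodTwo

variable {α : Type*} [CompleteLinearOrder α] [DenselyOrdered α] [TopologicalSpace α]
  [OrderTopology α] {f : α → α}

theorem lt_map_map_of_lt_map (hf : Continuous f) (hf2 : ∀ x, f (f x) = x → f x = x) {x : α}
    (hx : x < f x) : x < f (f x) := by
  by_contra! hxx
  have hff : Continuous (f ∘ f) := hf.comp hf
  -- `sSup P` is the largest fixed point below `x`. A preimage `t ≥ sSup P` of `x` satisfies
  -- `t ≤ x < f (f t)`, so `f ∘ f`, hence `f`, has a fixed point in `[t, x]`: thus `t = sSup P`.
  obtain ⟨r, hr, hrr⟩ := exists_mem_Icc_map_eq_self hff.continuousOn bot_le bot_le hxx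
  set P := {y | y ≤ x ∧ f y = y}
  have hP : IsClosed P := isClosed_Iic.inter (isClosed_eq hf continuous_id)
  obtain ⟨hqx, hq⟩ : sSup P ∈ P := hP.sSup_mem ⟨r, hr.2, hf2 r hrr⟩
  obtain ⟨t, ht, htx⟩ := intermediate_value_Icc hqx hf.continuousOn ⟨hq.trans_le hqx, hx.le⟩
  obtain ⟨s, hs, hss⟩ := exists_mem_Icc_map_eq_self hff.continuousOn ht.2
    (by rw [comp_apply, htx]; exact ht.2.trans hx.le) hxx
  have hsq : s ≤ sSup P := le_sSup ⟨hs.2, hf2 s hss⟩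
  have htq : t = sSup P := le_antisymm (hs.1.trans hsq) ht.1
  rw [htq] at htx
  exact hx.ne (by rw [← htx, hq, hq])

theorem lt_map_of_mem_Ioc (hf : Continuous f) (hf2 : ∀ x, f (f x) = x → f x = x) {x y : α}
    (hx : x < f x) (hy : y ∈ Ioc x (f x)) : x < f y := by
  by_contra! hyx
  obtain ⟨r, hr, hrr⟩ := exists_mem_Icc_map_eq_self hf.continuousOn hy.1.le hx.le
    (hyx.trans hy.1.le)
  -- `sInf P` is the least fixed point in `[x, y]`, and `f w = y` with `w ≤ sInf P`. Then
  -- `f ∘ f` crosses the diagonal on `[x, w]`, at a fixed point of `f`: thus `w = sInf P`.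
  set P := {z | z ∈ Icc x y ∧ f z = z}
  have hP : IsClosed P := isClosed_Icc.inter (isClosed_eq hf continuous_id)
  obtain ⟨hp, hpp⟩ : sInf P ∈ P := hP.sInf_mem ⟨r, hr, hrr⟩
  obtain ⟨w, hw, hwy⟩ := intermediate_value_Icc' hp.1 hf.continuousOn
    ⟨hpp.symm ▸ hp.2, hy.2⟩
  obtain ⟨z, hz, hzz⟩ := exists_mem_Icc_map_eq_self (hf.comp hf).continuousOn hw.1
    (lt_map_map_of_lt_map hf hf2 hx).le (by rw [comp_apply, hwy]; exact hyx.trans hw.1)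
  have hpz : sInf P ≤ z := sInf_le ⟨⟨hz.1, hz.2.trans (hw.2.trans hp.2)⟩, hf2 z hzz⟩
  have hwp : w = sInf P := le_antisymm hw.2 (hpz.trans hz.2)
  rw [hwp, hpp] at hwy
  rw [← hwy, hpp, hwy] at hyx
  exact hyx.not_gt hy.1

theorem lt_iterate_of_lt_map (hf : Continuous f) (hf2 : ∀ x, f (f x) = x → f x = x) {n : ℕ}
    (hn : 0 < n) {x : α} (hx : x < f x) : x < f^[n] x := by
  induction n using Nat.strong_induction_on generalizing x with
  | _ n ih =>
  obtain rfl | hn1 := Nat.one_le_iff_ne_zero.2 hn.ne' |>.eq_or_lt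
  · exact hx
  obtain ⟨j, hj, hmin⟩ := (Finset.Ico 1 n).exists_min_image (f^[·] x) ⟨1, by simp [hn1]⟩
  simp only [Finset.mem_Ico] at hj hmin
  set y := f^[j] x with hy
  have hxy : x < y := ih j hj.2 hj.1 hx
  have hiter : f^[n] x = f^[n - j] y := by rw [hy, ← iterate_add_apply, Nat.sub_add_cancel hj.2.le]
  rcases lt_trichotomy y (f y) with hlt | heq | hgt
  · exact hxy.trans (hiter ▸ ih (n - j) (by omega) (by omega) hlt)
  · rwa [hiter, iterate_fixed heq.symm]
  · have hjn : n = j + 1 := by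
      by_contra hne
      have := hmin (j + 1) ⟨by omega, by omega⟩
      rw [iterate_succ_apply'] at this
      exact this.not_gt hgt
    rw [hjn, iterate_succ_apply']
    exact lt_map_of_mem_Ioc hf hf2 hx ⟨hxy, by simpa using hmin 1 ⟨le_rfl, hn1⟩⟩

theorem le_iterate_of_le_map (hf : Continuous f) (hf2 : ∀ x, f (f x) = x → f x = x) {x : α}
    (hx : x ≤ f x) (n : ℕ) : x ≤ f^[n] x := by
  rcases hx.lt_or_eq with hx | hx
  · rcases n.eq_zero_or_pos with rfl | hn
    · exact le_rfl
    · exact (lt_iterate_of_lt_map hf hf2 hn hx).le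
  · exact (iterate_fixed hx.symm n).ge

theorem iterate_le_liminf (hf : Continuous f) (hf2 : ∀ x, f (f x) = x → f x = x) {c : α} {n : ℕ}
    (hn : f^[n] c ≤ f (f^[n] c)) : f^[n] c ≤ liminf (f^[·] c) atTop := by
  refine le_liminf_of_le (by isBoundedDefault) (eventually_atTop.2 ⟨n, fun m hm => ?_⟩)
  rw [← Nat.sub_add_cancel hm, iterate_add_apply]
  exact le_iterate_of_le_map hf hf2 hn _

theorem limsup_le_iterate (hf : Continuous f) (hf2 : ∀ x, f (f x) = x → f x = x) {c : α} {n : ℕ}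
    (hn : f (f^[n] c) ≤ f^[n] c) : limsup (f^[·] c) atTop ≤ f^[n] c :=
  iterate_le_liminf (α := αᵒᵈ) hf hf2 hn

theorem exists_fixedPt_tendsto_iterate (hf : Continuous f) (hf2 : ∀ x, f (f x) = x → f x = x)
    (c : α) : ∃ z, f z = z ∧ Tendsto (f^[·] c) atTop (𝓝 z) := by
  set x : ℕ → α := (f^[·] c)
  have hx : ∀ n, x (n + 1) = f (x n) := fun n => iterate_succ_apply' f n c
  have hsplit : ∀ n, x n ≤ liminf x atTop ∨ limsup x atTop ≤ x n := fun n =>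
    (le_total (x n) (f (x n))).imp (iterate_le_liminf hf hf2) (limsup_le_iterate hf hf2)
  have hLS : liminf x atTop = limsup x atTop := by
    by_contra hne
    have hlt : liminf x atTop < limsup x atTop := lt_of_le_of_ne liminf_le_limsup hne
    have hfL := map_liminf_eq_limsup hf.continuousAt hx hsplit hlt
    have hfS : f (limsup x atTop) = liminf x atTop :=
      map_liminf_eq_limsup (α := αᵒᵈ) hf.continuousAt hx (fun n => (hsplit n).symm) hlt
    exact hne ((hf2 _ (by rw [hfL, hfS])).symm.trans hfL)
  have ht : Tendsto x atTop (𝓝 (liminf x atTop)) := tendsto_of_liminf_eq_limsup rfl hLS.symm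
  exact ⟨_, isFixedPt_of_tendsto_iterate ht hf.continuousAt, ht⟩

end NoPeriodTwo

theorem stmt_19_general (a b : ℝ) (f : ℝ → ℝ)
    (hf : ContinuousOn f (Set.Icc a b))
    (hmaps : Set.MapsTo f (Set.Icc a b) (Set.Icc a b))
    (hno2 : ¬∃ x ∈ Set.Icc a b, f (f x) = x ∧ f x ≠ x) :
    ∀ c ∈ Set.Icc a b, ∃ z ∈ Set.Icc a b, f z = z ∧
      Filter.Tendsto (fun n => f^[n] c) Filter.atTop (nhds z) := by
  intro c hc
  have : Fact (a ≤ b) := ⟨hc.1.trans hc.2⟩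
  set g := hmaps.restrict f (Icc a b) (Icc a b)
  have hg2 : ∀ x, g (g x) = x → g x = x := fun x hx => by
    by_contra hne
    exact hno2 ⟨x, x.2, congrArg Subtype.val hx, fun h => hne (Subtype.ext h)⟩
  obtain ⟨z, hz, ht⟩ := exists_fixedPt_tendsto_iterate (hf.mapsToRestrict hmaps) hg2 ⟨c, hc⟩
  refine ⟨z, z.2, congrArg Subtype.val hz, ?_⟩
  simpa [comp_def, hmaps.iterate_restrict] using (continuous_subtype_val.tendsto z).comp ht

/-- If f has no periodic point of least period 2, then for each c ∈ I the
iterates f^n(c) converge to a fixed point of f. -/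
theorem stmt_19 (a b : ℝ) (hab : a ≤ b) (f : ℝ → ℝ)
    (hf : ContinuousOn f (Set.Icc a b))
    (hmaps : Set.MapsTo f (Set.Icc a b) (Set.Icc a b))
    (hno2 : ¬∃ x ∈ Set.Icc a b, f (f x) = x ∧ f x ≠ x) :
    ∀ c ∈ Set.Icc a b, ∃ z ∈ Set.Icc a b, f z = z ∧
      Filter.Tendsto (fun n => f^[n] c) Filter.atTop (nhds z) :=
  stmt_19_general a b f hf hmaps hno2
end
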